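/- arXiv:1712.00859 — 10 statements merged into one kernel-verified Lean document; each statement's English description precedes it below -/
import Mathlib

section
/- CPT satisfies strict first-order stochastic dominance: let (p,z) be a prospect and let j_1, j_2 ∈ {1,…,t} be indices with z_{j_1} > z_{j_2} and p_{j_2} > 0. For 0 < ε ≤ p_{j_2}, define p' by p'_{j_1} = p_{j_1} + ε, p'_{j_2} = p_{j_2} − ε, and p'_j = p_j for all other j. Then for every reference point r ∈ ℝ, V^r(p',z) > V^r(p,z). -/
/-- The decision-weight form of the CPT value of the prospect `(p, z)` with
reference point `r`, value function `v`, probability weighting functions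
`wp` (for gains) and `wm` (for losses), computed using a permutation `a`
of the indices ordering `z` decreasingly.  (The value does not depend on the
choice of such a permutation.) -/
noncomputable def cptVal {t : ℕ} (wp wm v : ℝ → ℝ) (r : ℝ) (p z : Fin t → ℝ)
    (a : Equiv.Perm (Fin t)) : ℝ :=
  ∑ j : Fin t,
    (if r ≤ z (a j) then
        wp (∑ k ∈ Finset.Iic j, p (a k)) - wp (∑ k ∈ Finset.Iio j, p (a k))
      else
        wm (∑ k ∈ Finset.Ici j, p (a k)) - wm (∑ k ∈ Finset.Ioi j, p (a k)))
      * v (z (a j))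

/-- `p` is a probability vector. -/
def IsProbVec {t : ℕ} (p : Fin t → ℝ) : Prop :=
  (∀ j, 0 ≤ p j) ∧ ∑ j, p j = 1

noncomputable def gfun (wp wm v : ℝ → ℝ) (r u u' : ℝ) (x : ℝ) : ℝ :=
  (if r ≤ u then wp x else -wm (1 - x)) * v u
    - (if r ≤ u' then wp x else -wm (1 - x)) * v u'

lemma gfun_mono {wp wm v : ℝ → ℝ} {r u u' : ℝ}
    (hwpm : StrictMonoOn wp (Set.Icc 0 1)) (hwmm : StrictMonoOn wm (Set.Icc 0 1))
    (hv : Monotone v) (hvr : v r = 0) (huu' : u' ≤ u) :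
    MonotoneOn (gfun wp wm v r u u') (Set.Icc 0 1) := by
  intro x hx y hy hxy
  have hx' : (1:ℝ) - x ∈ Set.Icc (0:ℝ) 1 := ⟨by linarith [hx.2], by linarith [hx.1]⟩
  have hy' : (1:ℝ) - y ∈ Set.Icc (0:ℝ) 1 := ⟨by linarith [hy.2], by linarith [hy.1]⟩
  have hwple : wp x ≤ wp y := hwpm.monotoneOn hx hy hxy
  have hwmle : wm (1 - y) ≤ wm (1 - x) := hwmm.monotoneOn hy' hx' (by linarith)
  have hvle : v u' ≤ v u := hv huu'
  unfold gfun
  split_ifs with h1 h2 h2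
  · nlinarith [mul_nonneg (sub_nonneg.2 hwple) (sub_nonneg.2 hvle)]
  · have h0u : 0 ≤ v u := hvr ▸ hv h1
    have hu'0 : v u' ≤ 0 := hvr ▸ hv (le_of_not_ge h2)
    nlinarith [mul_nonneg (sub_nonneg.2 hwple) h0u,
      mul_nonpos_of_nonneg_of_nonpos (sub_nonneg.2 hwmle) hu'0]
  · exact absurd (le_trans h2 huu') h1
  · nlinarith [mul_nonneg (sub_nonneg.2 hwmle) (sub_nonneg.2 hvle)]

lemma gfun_strict {wp wm v : ℝ → ℝ} {r u u' : ℝ}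
    (hwpm : StrictMonoOn wp (Set.Icc 0 1)) (hwmm : StrictMonoOn wm (Set.Icc 0 1))
    (hv : StrictMono v) (hvr : v r = 0) (huu' : u' < u) :
    StrictMonoOn (gfun wp wm v r u u') (Set.Icc 0 1) := by
  intro x hx y hy hxy
  have hx' : (1:ℝ) - x ∈ Set.Icc (0:ℝ) 1 := ⟨by linarith [hx.2], by linarith [hx.1]⟩
  have hy' : (1:ℝ) - y ∈ Set.Icc (0:ℝ) 1 := ⟨by linarith [hy.2], by linarith [hy.1]⟩
  have hwplt : wp x < wp y := hwpm hx hy hxy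
  have hwmlt : wm (1 - y) < wm (1 - x) := hwmm hy' hx' (by linarith)
  have hvlt : v u' < v u := hv huu'
  unfold gfun
  split_ifs with h1 h2 h2
  · nlinarith [mul_pos (sub_pos.2 hwplt) (sub_pos.2 hvlt)]
  · have h0u : 0 ≤ v u := hvr ▸ hv.monotone h1
    have hu'0 : v u' < 0 := hvr ▸ hv (lt_of_not_ge h2)
    nlinarith [mul_nonneg (sub_nonneg.2 hwplt.le) h0u,
      mul_neg_of_pos_of_neg (sub_pos.2 hwmlt) hu'0]
  · exact absurd (le_trans h2 huu'.le) h1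
  · nlinarith [mul_pos (sub_pos.2 hwmlt) (sub_pos.2 hvlt)]

lemma exists_succ_lt (Z : ℕ → ℝ) {m₁ m₂ : ℕ} (hlt : m₁ < m₂) (hz : Z m₂ < Z m₁) :
    ∃ k, m₁ ≤ k ∧ k < m₂ ∧ Z (k + 1) < Z k := by
  by_contra hcon
  push_neg at hcon
  have key : ∀ d, m₁ + d ≤ m₂ → Z m₁ ≤ Z (m₁ + d) := by
    intro d
    induction d with
    | zero => intro _; simp
    | succ d ih =>
      intro hd
      have h1 := ih (by omega)
      have h2 := hcon (m₁ + d) (by omega) (by omega)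
      calc Z m₁ ≤ Z (m₁ + d) := h1
        _ ≤ Z (m₁ + d + 1) := h2
  have := key (m₂ - m₁) (by omega)
  rw [show m₁ + (m₂ - m₁) = m₂ from by omega] at this
  linarith

lemma cpt_identity (n : ℕ) (wp wm v : ℝ → ℝ) (hwp0 : wp 0 = 0) (r : ℝ)
    (z q : Fin (n + 1) → ℝ) (a : Equiv.Perm (Fin (n + 1))) (hq : ∑ j, q j = 1) :
    cptVal wp wm v r q z a =
      (∑ i : Fin n,
        gfun wp wm v r (z (a i.castSucc)) (z (a i.succ))
          (∑ k ∈ Finset.Iic i.castSucc, q (a k)))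
      + (if r ≤ z (a (Fin.last n)) then wp 1 else -wm 0) * v (z (a (Fin.last n)))
      + (if r ≤ z (a 0) then 0 else wm 1 * v (z (a 0))) := by
  have hsum : ∑ k, q (a k) = 1 := by rw [Equiv.sum_comp a q]; exact hq
  have hunion : ∀ j : Fin (n + 1),
      ∑ k ∈ Finset.Iio j, q (a k) + ∑ k ∈ Finset.Ici j, q (a k) = 1 := by
    intro j
    rw [← Finset.sum_union (by
      rw [Finset.disjoint_left]; intro k hk hk2
      simp only [Finset.mem_Iio] at hk; simp only [Finset.mem_Ici] at hk2
      exact absurd hk2 (not_le.2 hk))]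
    rw [show Finset.Iio j ∪ Finset.Ici j = Finset.univ from by
      ext k; simp [lt_or_ge]]
    exact hsum
  have hunion2 : ∀ j : Fin (n + 1),
      ∑ k ∈ Finset.Iic j, q (a k) + ∑ k ∈ Finset.Ioi j, q (a k) = 1 := by
    intro j
    rw [← Finset.sum_union (by
      rw [Finset.disjoint_left]; intro k hk hk2
      simp only [Finset.mem_Iic] at hk; simp only [Finset.mem_Ioi] at hk2
      exact absurd hk2 (not_lt.2 hk))]
    rw [show Finset.Iic j ∪ Finset.Ioi j = Finset.univ from by
      ext k; simp [le_or_gt]]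
    exact hsum
  have hIio0 : Finset.Iio (0 : Fin (n + 1)) = ∅ := by ext k; simp
  have hIicLast : Finset.Iic (Fin.last n) = Finset.univ := by
    ext k; simp [Fin.le_last]
  have hIioSucc : ∀ i : Fin n, Finset.Iio i.succ = Finset.Iic i.castSucc := by
    intro i; ext k
    simp only [Finset.mem_Iio, Finset.mem_Iic, Fin.lt_def, Fin.le_def,
      Fin.coe_castSucc, Fin.val_succ]
    omega
  set F : Fin (n + 1) → ℝ := fun j =>
    (if r ≤ z (a j) then wp (∑ k ∈ Finset.Iic j, q (a k))
      else -wm (1 - ∑ k ∈ Finset.Iic j, q (a k))) * v (z (a j)) with hF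
  set H : Fin (n + 1) → ℝ := fun j =>
    (if r ≤ z (a j) then wp (∑ k ∈ Finset.Iio j, q (a k))
      else -wm (1 - ∑ k ∈ Finset.Iio j, q (a k))) * v (z (a j)) with hH
  have hterm : ∀ j ∈ Finset.univ, (if r ≤ z (a j) then
        wp (∑ k ∈ Finset.Iic j, q (a k)) - wp (∑ k ∈ Finset.Iio j, q (a k))
      else
        wm (∑ k ∈ Finset.Ici j, q (a k)) - wm (∑ k ∈ Finset.Ioi j, q (a k)))
      * v (z (a j)) = F j - H j := by
    intro j _
    by_cases hr : r ≤ z (a j)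
    · simp only [hF, hH, if_pos hr]; ring
    · simp only [hF, hH, if_neg hr]
      have e1 : ∑ k ∈ Finset.Ici j, q (a k) = 1 - ∑ k ∈ Finset.Iio j, q (a k) := by
        linarith [hunion j]
      have e2 : ∑ k ∈ Finset.Ioi j, q (a k) = 1 - ∑ k ∈ Finset.Iic j, q (a k) := by
        linarith [hunion2 j]
      rw [e1, e2]; ring
  have h1 : cptVal wp wm v r q z a = ∑ j, (F j - H j) :=
    Finset.sum_congr rfl hterm
  rw [h1, Finset.sum_sub_distrib, Fin.sum_univ_castSucc (f := F),
    Fin.sum_univ_succ (f := H)]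
  have hg : ∀ i : Fin n, F i.castSucc - H i.succ
      = gfun wp wm v r (z (a i.castSucc)) (z (a i.succ))
          (∑ k ∈ Finset.Iic i.castSucc, q (a k)) := by
    intro i
    simp only [hF, hH, gfun, hIioSucc i]
  have hFlast : F (Fin.last n)
      = (if r ≤ z (a (Fin.last n)) then wp 1 else -wm 0) * v (z (a (Fin.last n))) := by
    simp only [hF, hIicLast, hsum, sub_self]
  have hH0 : H 0 = -(if r ≤ z (a 0) then 0 else wm 1 * v (z (a 0))) := by
    simp only [hH, hIio0, Finset.sum_empty, hwp0, sub_zero]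
    split_ifs <;> ring
  have hmerge : ∑ i : Fin n, F i.castSucc - ∑ i : Fin n, H i.succ
      = ∑ i : Fin n, gfun wp wm v r (z (a i.castSucc)) (z (a i.succ))
          (∑ k ∈ Finset.Iic i.castSucc, q (a k)) := by
    rw [← Finset.sum_sub_distrib]
    exact Finset.sum_congr rfl fun i _ => hg i
  rw [hFlast, hH0, ← hmerge]
  ring

/-- CPT satisfies strict first-order stochastic dominance: shifting a
positive probability mass `ε` from an outcome `z j₂` to a strictly better outcome
`z j₁` strictly increases the CPT value, for every reference point `r`. -/
theorem cpt_strict_stochastic_dominance {t : ℕ} (wp wm v : ℝ → ℝ) (r : ℝ)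
    (hwpc : ContinuousOn wp (Set.Icc 0 1)) (hwmc : ContinuousOn wm (Set.Icc 0 1))
    (hwpm : StrictMonoOn wp (Set.Icc 0 1)) (hwmm : StrictMonoOn wm (Set.Icc 0 1))
    (hwp0 : wp 0 = 0) (hwp1 : wp 1 = 1) (hwm0 : wm 0 = 0) (hwm1 : wm 1 = 1)
    (hv : StrictMono v) (hvc : Continuous v) (hvr : v r = 0)
    (p z : Fin t → ℝ) (hp : IsProbVec p)
    (j₁ j₂ : Fin t) (hz : z j₂ < z j₁) (hp2 : 0 < p j₂)
    (ε : ℝ) (hε : 0 < ε) (hε' : ε ≤ p j₂)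
    (a : Equiv.Perm (Fin t)) (ha : Antitone (fun j => z (a j))) :
    cptVal wp wm v r p z a <
      cptVal wp wm v r
        (fun j => if j = j₁ then p j₁ + ε else if j = j₂ then p j₂ - ε else p j) z a := by
  obtain _ | n := t
  · exact j₁.elim0
  obtain ⟨hpnn, hpsum⟩ := hp
  have hj12 : j₁ ≠ j₂ := by rintro rfl; exact lt_irrefl _ hz
  set p' : Fin (n + 1) → ℝ :=
    fun j => if j = j₁ then p j₁ + ε else if j = j₂ then p j₂ - ε else p j with hp'
  have hp'eq : ∀ j, p' j = p j + (if j = j₁ then ε else 0) - (if j = j₂ then ε else 0) := by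
    intro j
    by_cases h1 : j = j₁
    · subst h1; simp [hp', hj12]
    · by_cases h2 : j = j₂
      · subst h2; simp [hp', h1]
      · simp [hp', h1, h2]
  have hp'sum : ∑ j, p' j = 1 := by
    rw [Finset.sum_congr rfl fun j _ => hp'eq j, Finset.sum_sub_distrib,
      Finset.sum_add_distrib]
    simp [Finset.sum_ite_eq', hpsum]
  have hp'nn : ∀ j, 0 ≤ p' j := by
    intro j
    simp only [hp']
    split_ifs with h1 h2
    · linarith [hpnn j₁]
    · linarith
    · exact hpnn j
  set m₁ : Fin (n + 1) := a.symm j₁ with hm₁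
  set m₂ : Fin (n + 1) := a.symm j₂ with hm₂
  have ham₁ : a m₁ = j₁ := Equiv.apply_symm_apply a j₁
  have ham₂ : a m₂ = j₂ := Equiv.apply_symm_apply a j₂
  have hm12 : m₁ < m₂ := by
    rcases lt_trichotomy m₁ m₂ with h | h | h
    · exact h
    · exact absurd (by rw [← ham₁, ← ham₂, h]) hj12
    · have := ha h.le
      simp only [ham₁, ham₂] at this
      linarith
  have hdiff : ∀ k : Fin (n + 1),
      p' (a k) = p (a k) + ((if k = m₁ then ε else 0) + (if k = m₂ then -ε else 0)) := by
    intro k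
    have e1 : a k = j₁ ↔ k = m₁ := by
      rw [hm₁]; exact (Equiv.eq_symm_apply a).symm
    have e2 : a k = j₂ ↔ k = m₂ := by
      rw [hm₂]; exact (Equiv.eq_symm_apply a).symm
    rw [hp'eq (a k)]
    simp only [e1, e2]
    split_ifs <;> ring
  have hS : ∀ i : Fin n, (∑ k ∈ Finset.Iic i.castSucc, p' (a k))
      = (∑ k ∈ Finset.Iic i.castSucc, p (a k))
        + (if m₁ ≤ i.castSucc ∧ ¬ m₂ ≤ i.castSucc then ε else 0) := by
    intro i
    rw [Finset.sum_congr rfl fun k _ => hdiff k, Finset.sum_add_distrib,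
      Finset.sum_add_distrib, Finset.sum_ite_eq' _ m₁ fun _ => ε,
      Finset.sum_ite_eq' _ m₂ fun _ => -ε]
    simp only [Finset.mem_Iic]
    by_cases hA : m₁ ≤ i.castSucc
    · by_cases hB : m₂ ≤ i.castSucc
      · simp [hA, hB, hm12]
      · simp [hA, hB]
    · by_cases hB : m₂ ≤ i.castSucc
      · exact absurd (le_trans hm12.le hB) hA
      · simp [hA, hB]
  have hbound : ∀ (q : Fin (n + 1) → ℝ), (∀ j, 0 ≤ q j) → (∑ j, q j = 1) →
      ∀ i : Fin n, (∑ k ∈ Finset.Iic i.castSucc, q (a k)) ∈ Set.Icc (0 : ℝ) 1 := by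
    intro q hnn hsum i
    constructor
    · exact Finset.sum_nonneg fun k _ => hnn _
    · have h1 : ∑ k ∈ Finset.Iic i.castSucc, q (a k) ≤ ∑ k, q (a k) :=
        Finset.sum_le_sum_of_subset_of_nonneg (Finset.subset_univ _)
          fun k _ _ => hnn _
      rw [Equiv.sum_comp a q, hsum] at h1
      exact h1
  rw [cpt_identity n wp wm v hwp0 r z p a hpsum,
    cpt_identity n wp wm v hwp0 r z p' a hp'sum]
  have hcs_le : ∀ i : Fin n, z (a i.succ) ≤ z (a i.castSucc) :=
    fun i => ha (Fin.castSucc_lt_succ : i.castSucc < i.succ).le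
  have main : (∑ i : Fin n,
        gfun wp wm v r (z (a i.castSucc)) (z (a i.succ))
          (∑ k ∈ Finset.Iic i.castSucc, p (a k)))
      < ∑ i : Fin n,
        gfun wp wm v r (z (a i.castSucc)) (z (a i.succ))
          (∑ k ∈ Finset.Iic i.castSucc, p' (a k)) := by
    apply Finset.sum_lt_sum
    · intro i _
      rw [hS i]
      split_ifs with hw
      · have hmem := hbound p' hp'nn hp'sum i
        rw [hS i, if_pos hw] at hmem
        exact gfun_mono hwpm hwmm hv.monotone hvr (hcs_le i)
          (hbound p hpnn hpsum i) hmem (le_add_of_nonneg_right hε.le)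
      · rw [add_zero]
    · set Z : ℕ → ℝ := fun k => if h : k < n + 1 then z (a ⟨k, h⟩) else 0 with hZ
      have hZval : ∀ (k : ℕ) (h : k < n + 1), Z k = z (a ⟨k, h⟩) := by
        intro k h; rw [hZ]; simp only [dif_pos h]
      have hZ1 : Z m₁.val = z j₁ := by
        rw [hZval m₁.val m₁.isLt, Fin.eta, ham₁]
      have hZ2 : Z m₂.val = z j₂ := by
        rw [hZval m₂.val m₂.isLt, Fin.eta, ham₂]
      obtain ⟨k, hk1, hk2, hk3⟩ := exists_succ_lt Z (show m₁.val < m₂.val from hm12)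
        (by rw [hZ1, hZ2]; exact hz)
      have hkn : k < n := by have := m₂.isLt; omega
      refine ⟨⟨k, hkn⟩, Finset.mem_univ _, ?_⟩
      have ecs : (⟨k, hkn⟩ : Fin n).castSucc = ⟨k, by omega⟩ := rfl
      have esc : (⟨k, hkn⟩ : Fin n).succ = ⟨k + 1, by omega⟩ := rfl
      have hzz : z (a (⟨k, hkn⟩ : Fin n).succ) < z (a (⟨k, hkn⟩ : Fin n).castSucc) := by
        rw [ecs, esc, ← hZval k (by omega), ← hZval (k + 1) (by omega)]
        exact hk3
      have hwin : m₁ ≤ (⟨k, hkn⟩ : Fin n).castSucc ∧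
          ¬ m₂ ≤ (⟨k, hkn⟩ : Fin n).castSucc := by
        constructor
        · rw [ecs, Fin.le_def]; exact hk1
        · rw [ecs, Fin.le_def]; simp only [not_le]; exact hk2
      rw [hS ⟨k, hkn⟩, if_pos hwin]
      have hmem := hbound p' hp'nn hp'sum ⟨k, hkn⟩
      rw [hS ⟨k, hkn⟩, if_pos hwin] at hmem
      exact gfun_strict hwpm hwmm hv hvr hzz
        (hbound p hpnn hpsum ⟨k, hkn⟩) hmem (lt_add_of_pos_right _ hε)
  linarith [main]
end

section
/- CPT satisfies strict monotonicity with respect to pointwise dominance: let p = (p_1,…,p_t) be a probability vector and x, y ∈ ℝ^t outcome profiles such that x_j ≥ y_j for every j with p_j > 0 and x_j > y_j for at least one j with p_j > 0 (i.e., (p,x) strictly pointwise dominates (p,y)). Then for every reference point r ∈ ℝ, V^r(p,x) > V^r(p,y). -/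
/-!
Along the decreasing ordering, Abel summation turns the rank-dependent sums into Choquet
integrals: with `M` bounding `|v ∘ z|`,
`V^r(p, z) = ∫₀ᴹ w⁺(P[v(z) ≥ s]) - w⁻(P[v(z) ≤ -s]) ds`,
and this form no longer refers to the ordering. Dominance on the support of `p` orders both
decumulative masses for every `s`, so the integrands are ordered. The strictly dominated outcome
`j` carries mass `p j > 0` that `x` counts and `y` does not for all `s` in the interval between
`v (y j)` and `v (x j)` (or its mirror image on the loss side), and strict monotonicity of `w^±`
makes the integrand strictly larger there.
-/

open Finset MeasureTheory

section UpperMass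

variable {t : ℕ} {q : Fin t → ℝ}

noncomputable def upperMass (q f : Fin t → ℝ) (s : ℝ) : ℝ :=
  ∑ j, if s ≤ f j then q j else 0

lemma upperMass_comp_perm (σ : Equiv.Perm (Fin t)) (q f : Fin t → ℝ) :
    upperMass (fun j => q (σ j)) (fun j => f (σ j)) = upperMass q f :=
  funext fun s => Equiv.sum_comp σ fun j => if s ≤ f j then q j else 0

lemma upperMass_mem_Icc (hq : ∀ j, 0 ≤ q j) (f : Fin t → ℝ) (s : ℝ) :
    upperMass q f s ∈ Set.Icc 0 (∑ j, q j) :=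
  ⟨sum_nonneg fun j _ => by split_ifs <;> simp [hq j],
    sum_le_sum fun j _ => by split_ifs <;> simp [hq j]⟩

lemma upperMass_mem_Icc_of_isProbVec {p : Fin t → ℝ} (hp : IsProbVec p) (f : Fin t → ℝ)
    (s : ℝ) : upperMass p f s ∈ Set.Icc 0 1 :=
  hp.2 ▸ upperMass_mem_Icc hp.1 f s

lemma upperMass_antitone (hq : ∀ j, 0 ≤ q j) (f : Fin t → ℝ) : Antitone (upperMass q f) :=
  fun s s' hss' => sum_le_sum fun j _ => by
    by_cases h : s' ≤ f j
    · simp [h, hss'.trans h]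
    · simp only [h, if_false]; split_ifs <;> simp [hq j]

lemma ite_le_ite_of_dominates (hq : ∀ j, 0 ≤ q j) {f g : Fin t → ℝ}
    (hdom : ∀ j, 0 < q j → g j ≤ f j) (s : ℝ) (j : Fin t) :
    (if s ≤ g j then q j else 0) ≤ if s ≤ f j then q j else 0 := by
  rcases (hq j).lt_or_eq with hj | hj
  · by_cases hg : s ≤ g j
    · simp [hg, hg.trans (hdom j hj)]
    · simp only [hg, if_false]; split_ifs <;> simp [hq j]
  · simp [← hj]

lemma upperMass_le_upperMass (hq : ∀ j, 0 ≤ q j) {f g : Fin t → ℝ}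
    (hdom : ∀ j, 0 < q j → g j ≤ f j) (s : ℝ) : upperMass q g s ≤ upperMass q f s :=
  sum_le_sum fun j _ => ite_le_ite_of_dominates hq hdom s j

lemma upperMass_lt_upperMass (hq : ∀ j, 0 ≤ q j) {f g : Fin t → ℝ}
    (hdom : ∀ j, 0 < q j → g j ≤ f j) {j : Fin t} (hj : 0 < q j) {s : ℝ} (hg : g j < s)
    (hf : s ≤ f j) : upperMass q g s < upperMass q f s :=
  sum_lt_sum (fun k _ => ite_le_ite_of_dominates hq hdom s k)
    ⟨j, mem_univ j, by simpa [hf, hg.not_ge] using hj⟩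

lemma intervalIntegrable_comp_upperMass (hq : ∀ j, 0 ≤ q j) {W : ℝ → ℝ}
    (hW : MonotoneOn W (Set.Icc 0 (∑ j, q j))) (f : Fin t → ℝ) (a b : ℝ) :
    IntervalIntegrable (fun s => W (upperMass q f s)) volume a b :=
  Antitone.intervalIntegrable fun _ _ h =>
    hW (upperMass_mem_Icc hq f _) (upperMass_mem_Icc hq f _) (upperMass_antitone hq f h)

lemma integral_upperMass_eq_add (hq : ∀ j, 0 ≤ q j) {W : ℝ → ℝ}
    (hW : MonotoneOn W (Set.Icc 0 (∑ j, q j))) {u : Fin t → ℝ} {c : ℝ} (hc : ∀ j, c ≤ u j)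
    (M : ℝ) :
    ∫ s in (0 : ℝ)..M, W (upperMass q u s)
      = max c 0 * W (∑ j, q j) + ∫ s in max c 0..M, W (upperMass q u s) := by
  have hfull : ∀ s ∈ Set.uIoc 0 (max c 0), W (upperMass q u s) = W (∑ j, q j) := by
    intro s hs
    rw [Set.uIoc_of_le (le_max_right c 0)] at hs
    have hsc : s ≤ c := (le_max_iff.mp hs.2).resolve_right hs.1.not_ge
    simp [upperMass, fun j => hsc.trans (hc j)]
  rw [← intervalIntegral.integral_add_adjacent_intervals
      (intervalIntegrable_comp_upperMass hq hW u 0 _)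
      (intervalIntegrable_comp_upperMass hq hW u _ M),
    intervalIntegral.integral_congr_ae (ae_of_all _ hfull), intervalIntegral.integral_const,
    sub_zero, smul_eq_mul]

-- Peel off the last (smallest) outcome: below `max (u last) 0` every outcome counts, above it
-- the last one never does.
theorem sum_sub_mul_max_eq_integral_upperMass (W : ℝ → ℝ) (hW0 : W 0 = 0) (q u : Fin t → ℝ)
    (hq : ∀ j, 0 ≤ q j) (hW : MonotoneOn W (Set.Icc 0 (∑ j, q j))) (hu : Antitone u)
    {M : ℝ} (hM0 : 0 ≤ M) (hM : ∀ j, u j ≤ M) :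
    ∑ j, (W (∑ k ∈ Iic j, q k) - W (∑ k ∈ Iio j, q k)) * max (u j) 0
      = ∫ s in (0 : ℝ)..M, W (upperMass q u s) := by
  induction t with
  | zero => simp [upperMass, hW0]
  | succ n ih =>
    set q' : Fin n → ℝ := fun j => q j.castSucc
    set u' : Fin n → ℝ := fun j => u j.castSucc
    have hcM : max (u (Fin.last n)) 0 ≤ M := max_le (hM _) hM0
    have hlast : ∀ j, u (Fin.last n) ≤ u j := fun j => hu (Fin.le_last j)
    have hW' : MonotoneOn W (Set.Icc 0 (∑ j, q' j)) := by
      refine hW.mono (Set.Icc_subset_Icc le_rfl ?_)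
      rw [Fin.sum_univ_castSucc]
      exact le_add_of_nonneg_right (hq _)
    have htail : ∀ s ∈ Set.uIoc (max (u (Fin.last n)) 0) M,
        W (upperMass q u s) = W (upperMass q' u' s) := by
      intro s hs
      rw [Set.uIoc_of_le hcM] at hs
      have hs : u (Fin.last n) < s := (le_max_left _ _).trans_lt hs.1
      simp [upperMass, Fin.sum_univ_castSucc, hs.not_ge, q', u']
    have ih' := ih q' u' (fun j => hq _) hW' (fun i j h => hu (Fin.castSucc_le_castSucc_iff.mpr h))
      (fun j => hM _)
    rw [integral_upperMass_eq_add (fun j => hq _) hW' (fun j => hlast _) M] at ih'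
    rw [integral_upperMass_eq_add hq hW hlast M,
      intervalIntegral.integral_congr_ae (ae_of_all _ htail), Fin.sum_univ_castSucc]
    have huniv : Iic (Fin.last n) = univ := Iic_top
    simp only [← Fin.map_castSuccEmb_Iic, ← Fin.map_castSuccEmb_Iio, sum_map, Fin.Iio_last_eq_map,
      huniv, Fin.coe_castSuccEmb] at ih' ⊢
    linear_combination ih'

theorem sum_sub_mul_min_eq_neg_integral_upperMass (W : ℝ → ℝ) (hW0 : W 0 = 0)
    (q u : Fin t → ℝ) (hq : ∀ j, 0 ≤ q j) (hW : MonotoneOn W (Set.Icc 0 (∑ j, q j)))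
    (hu : Antitone u) {M : ℝ} (hM0 : 0 ≤ M) (hM : ∀ j, -u j ≤ M) :
    ∑ j, (W (∑ k ∈ Ici j, q k) - W (∑ k ∈ Ioi j, q k)) * min (u j) 0
      = -∫ s in (0 : ℝ)..M, W (upperMass q (fun j => -u j) s) := by
  have hrev := sum_sub_mul_max_eq_integral_upperMass W hW0 (fun j => q (Fin.revPerm j))
    (fun j => -u (Fin.revPerm j)) (fun j => hq _) (by rwa [Equiv.sum_comp])
    (fun i j h => neg_le_neg (hu (Fin.rev_le_rev.mpr h))) hM0 (fun j => hM _)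
  rw [upperMass_comp_perm Fin.revPerm q (fun j => -u j)] at hrev
  rw [← hrev, ← Equiv.sum_comp Fin.revPerm, ← sum_neg_distrib]
  refine sum_congr rfl fun j _ => ?_
  rw [Fin.revPerm_apply, ← Fin.map_revPerm_Iic, ← Fin.map_revPerm_Iio, sum_map, sum_map,
    ← neg_zero, max_neg_neg, neg_zero, mul_neg, neg_neg]
  rfl

end UpperMass

lemma ite_mul_eq_mul_max_add_mul_min {P : Prop} [Decidable P] {x : ℝ} (hpos : P → 0 ≤ x)
    (hneg : ¬P → x ≤ 0) (A B : ℝ) :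
    (if P then A else B) * x = A * max x 0 + B * min x 0 := by
  by_cases hP : P
  · simp [hP, hpos hP]
  · simp [hP, hneg hP]

section CPT

variable {t : ℕ} {wp wm v : ℝ → ℝ} {p : Fin t → ℝ}

noncomputable def cptIntegrand (wp wm v : ℝ → ℝ) (p z : Fin t → ℝ) (s : ℝ) : ℝ :=
  wp (upperMass p (fun j => v (z j)) s) - wm (upperMass p (fun j => -v (z j)) s)

lemma intervalIntegrable_cptIntegrand (hp : IsProbVec p) (hwp : MonotoneOn wp (Set.Icc 0 1))
    (hwm : MonotoneOn wm (Set.Icc 0 1)) (z : Fin t → ℝ) (a b : ℝ) :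
    IntervalIntegrable (cptIntegrand wp wm v p z) volume a b :=
  (intervalIntegrable_comp_upperMass hp.1 (hp.2 ▸ hwp) _ a b).sub
    (intervalIntegrable_comp_upperMass hp.1 (hp.2 ▸ hwm) _ a b)

theorem cptVal_eq_integral_cptIntegrand {r : ℝ} {z : Fin t → ℝ} {a : Equiv.Perm (Fin t)}
    (hp : IsProbVec p) (hwp : MonotoneOn wp (Set.Icc 0 1)) (hwm : MonotoneOn wm (Set.Icc 0 1))
    (hwp0 : wp 0 = 0) (hwm0 : wm 0 = 0) (hv : Monotone v) (hvr : v r = 0)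
    (ha : Antitone fun j => z (a j)) {M : ℝ} (hM0 : 0 ≤ M) (hM : ∀ j, |v (z j)| ≤ M) :
    cptVal wp wm v r p z a = ∫ s in (0 : ℝ)..M, cptIntegrand wp wm v p z s := by
  have hpa : ∑ j, p (a j) = 1 := by rw [Equiv.sum_comp a p, hp.2]
  have hu : Antitone fun j => v (z (a j)) := hv.comp_antitone ha
  rw [cptVal, sum_congr rfl fun j _ => ite_mul_eq_mul_max_add_mul_min (fun h => hvr ▸ hv h)
      (fun h => hvr ▸ hv (not_le.mp h).le) _ _,
    sum_add_distrib,
    sum_sub_mul_max_eq_integral_upperMass wp hwp0 _ _ (fun j => hp.1 _) (hpa ▸ hwp) hu hM0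
      (fun j => (le_abs_self _).trans (hM _)),
    sum_sub_mul_min_eq_neg_integral_upperMass wm hwm0 _ _ (fun j => hp.1 _) (hpa ▸ hwm) hu hM0
      (fun j => (neg_le_abs _).trans (hM _)),
    upperMass_comp_perm a p (fun j => v (z j)), upperMass_comp_perm a p (fun j => -v (z j)),
    ← sub_eq_add_neg, ← intervalIntegral.integral_sub
      (intervalIntegrable_comp_upperMass hp.1 (hp.2 ▸ hwp) _ _ _)
      (intervalIntegrable_comp_upperMass hp.1 (hp.2 ▸ hwm) _ _ _)]
  rfl

variable {x y : Fin t → ℝ}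

lemma cptIntegrand_le_cptIntegrand (hp : IsProbVec p) (hwp : MonotoneOn wp (Set.Icc 0 1))
    (hwm : MonotoneOn wm (Set.Icc 0 1)) (hv : Monotone v) (hdom : ∀ j, 0 < p j → y j ≤ x j)
    (s : ℝ) : cptIntegrand wp wm v p y s ≤ cptIntegrand wp wm v p x s :=
  have hmem := upperMass_mem_Icc_of_isProbVec hp
  sub_le_sub
    (hwp (hmem _ _) (hmem _ _) (upperMass_le_upperMass hp.1 (fun j hj => hv (hdom j hj)) s))
    (hwm (hmem _ _) (hmem _ _)
      (upperMass_le_upperMass hp.1 (fun j hj => neg_le_neg (hv (hdom j hj))) s))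

lemma exists_Ioo_cptIntegrand_lt (hp : IsProbVec p) (hwp : StrictMonoOn wp (Set.Icc 0 1))
    (hwm : StrictMonoOn wm (Set.Icc 0 1)) (hv : StrictMono v) (hdom : ∀ j, 0 < p j → y j ≤ x j)
    {j : Fin t} (hj : 0 < p j) (hyx : y j < x j) :
    ∃ α β, 0 ≤ α ∧ α < β ∧ β ≤ |v (x j)| + |v (y j)| ∧
      ∀ s ∈ Set.Ioo α β, cptIntegrand wp wm v p y s < cptIntegrand wp wm v p x s := by
  have hmem := upperMass_mem_Icc_of_isProbVec hp
  have hgain : ∀ k, 0 < p k → v (y k) ≤ v (x k) := fun k hk => hv.monotone (hdom k hk)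
  have hloss : ∀ k, 0 < p k → -v (x k) ≤ -v (y k) := fun k hk => neg_le_neg (hgain k hk)
  rcases lt_or_ge 0 (v (x j)) with hx | hx
  · refine ⟨max (v (y j)) 0, v (x j), le_max_right _ _, max_lt (hv hyx) hx,
      (le_abs_self _).trans (le_add_of_nonneg_right (abs_nonneg _)), fun s hs => ?_⟩
    exact (sub_lt_sub_right (hwp (hmem _ _) (hmem _ _) (upperMass_lt_upperMass hp.1 hgain hj
        ((le_max_left _ _).trans_lt hs.1) hs.2.le)) _).trans_le
      (sub_le_sub_left (hwm.monotoneOn (hmem _ _) (hmem _ _)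
        (upperMass_le_upperMass hp.1 hloss s)) _)
  · refine ⟨-v (x j), -v (y j), neg_nonneg.mpr hx, neg_lt_neg (hv hyx),
      (neg_le_abs _).trans (le_add_of_nonneg_left (abs_nonneg _)), fun s hs => ?_⟩
    exact (sub_le_sub_right (hwp.monotoneOn (hmem _ _) (hmem _ _)
        (upperMass_le_upperMass hp.1 hgain s)) _).trans_lt
      (sub_lt_sub_left (hwm (hmem _ _) (hmem _ _)
        (upperMass_lt_upperMass hp.1 hloss hj hs.1 hs.2.le)) _)

end CPT

lemma integral_lt_integral_of_le_of_forall_Ioo_lt {f g : ℝ → ℝ} {a b α β : ℝ}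
    (hf : IntervalIntegrable f volume a b) (hg : IntervalIntegrable g volume a b)
    (hle : ∀ s, f s ≤ g s) (haα : a ≤ α) (hαβ : α < β) (hβb : β ≤ b)
    (hlt : ∀ s ∈ Set.Ioo α β, f s < g s) :
    ∫ s in a..b, f s < ∫ s in a..b, g s := by
  refine intervalIntegral.integral_lt_integral_of_ae_le_of_measure_setOfPred_lt_ne_zero
    (haα.trans (hαβ.le.trans hβb)) hf hg (ae_of_all _ hle) (ne_of_gt ?_)
  calc (0 : ENNReal) < volume (Set.Ioo α β) := by simpa using hαβ
    _ = volume.restrict (Set.Ioc a b) (Set.Ioo α β) := by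
      rw [Measure.restrict_apply measurableSet_Ioo,
        Set.inter_eq_left.mpr (Set.Ioo_subset_Ioc_self.trans (Set.Ioc_subset_Ioc haα hβb))]
    _ ≤ _ := measure_mono hlt

theorem cpt_strict_monotonicity_general {t : ℕ} (wp wm v : ℝ → ℝ) (r : ℝ)
    (hwpm : StrictMonoOn wp (Set.Icc 0 1)) (hwmm : StrictMonoOn wm (Set.Icc 0 1))
    (hwp0 : wp 0 = 0) (hwm0 : wm 0 = 0)
    (hv : StrictMono v) (hvr : v r = 0)
    (p x y : Fin t → ℝ) (hp : IsProbVec p)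
    (hdom : ∀ j, 0 < p j → y j ≤ x j)
    (hstrict : ∃ j, 0 < p j ∧ y j < x j)
    (a b : Equiv.Perm (Fin t))
    (ha : Antitone (fun j => x (a j))) (hb : Antitone (fun j => y (b j))) :
    cptVal wp wm v r p y b < cptVal wp wm v r p x a := by
  obtain ⟨j, hj, hyx⟩ := hstrict
  set M := ∑ k, (|v (x k)| + |v (y k)|)
  have hM0 : 0 ≤ M := by positivity
  have hbound : ∀ k, |v (x k)| + |v (y k)| ≤ M := fun k =>
    single_le_sum (f := fun k => |v (x k)| + |v (y k)|) (fun _ _ => by positivity) (mem_univ k)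
  have hxM : ∀ k, |v (x k)| ≤ M := fun k =>
    (le_add_of_nonneg_right (abs_nonneg _)).trans (hbound k)
  have hyM : ∀ k, |v (y k)| ≤ M := fun k =>
    (le_add_of_nonneg_left (abs_nonneg _)).trans (hbound k)
  have hwp := hwpm.monotoneOn
  have hwm := hwmm.monotoneOn
  rw [cptVal_eq_integral_cptIntegrand hp hwp hwm hwp0 hwm0 hv.monotone hvr hb hM0 hyM,
    cptVal_eq_integral_cptIntegrand hp hwp hwm hwp0 hwm0 hv.monotone hvr ha hM0 hxM]
  obtain ⟨α, β, hα, hαβ, hβ, hlt⟩ := exists_Ioo_cptIntegrand_lt hp hwpm hwmm hv hdom hj hyx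
  exact integral_lt_integral_of_le_of_forall_Ioo_lt
    (intervalIntegrable_cptIntegrand hp hwp hwm y 0 M)
    (intervalIntegrable_cptIntegrand hp hwp hwm x 0 M)
    (cptIntegrand_le_cptIntegrand hp hwp hwm hv.monotone hdom) hα hαβ (hβ.trans (hbound j)) hlt

/-- CPT satisfies strict monotonicity with respect to pointwise
dominance: if `(p,x)` strictly pointwise dominates `(p,y)` then, for every
reference point `r`, `V^r(p,x) > V^r(p,y)`.  Here `a` and `b` are permutations
ordering `x` and `y` decreasingly, respectively. -/
theorem cpt_strict_monotonicity {t : ℕ} (wp wm v : ℝ → ℝ) (r : ℝ)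
    (hwpc : ContinuousOn wp (Set.Icc 0 1)) (hwmc : ContinuousOn wm (Set.Icc 0 1))
    (hwpm : StrictMonoOn wp (Set.Icc 0 1)) (hwmm : StrictMonoOn wm (Set.Icc 0 1))
    (hwp0 : wp 0 = 0) (hwp1 : wp 1 = 1) (hwm0 : wm 0 = 0) (hwm1 : wm 1 = 1)
    (hv : StrictMono v) (hvc : Continuous v) (hvr : v r = 0)
    (p x y : Fin t → ℝ) (hp : IsProbVec p)
    (hdom : ∀ j, 0 < p j → y j ≤ x j)
    (hstrict : ∃ j, 0 < p j ∧ y j < x j)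
    (a b : Equiv.Perm (Fin t))
    (ha : Antitone (fun j => x (a j))) (hb : Antitone (fun j => y (b j))) :
    cptVal wp wm v r p y b < cptVal wp wm v r p x a :=
  cpt_strict_monotonicity_general wp wm v r hwpm hwmm hwp0 hwm0 hv hvr p x y hp hdom hstrict a b ha
    hb
end

section
/- Two outcome profiles x, y ∈ ℝ^t have equal CPT value under every probability distribution, i.e., V^r(p,x) = V^r(p,y) for all probability vectors p = (p_1,…,p_t), if and only if x = y. -/
open Finset

section PrefixSum

variable {M G : Type*} [AddCommMonoid M] [AddCommGroup G] {t : ℕ}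

def prefixSum (q : Fin t → M) (i : Fin (t + 1)) : M :=
  ∑ k with k.castSucc < i, q k

lemma prefixSum_castSucc (q : Fin t → M) (j : Fin t) :
    prefixSum q j.castSucc = ∑ k ∈ Iio j, q k := by
  unfold prefixSum
  congr 1
  ext k
  simp

lemma prefixSum_succ (q : Fin t → M) (j : Fin t) :
    prefixSum q j.succ = ∑ k ∈ Iic j, q k := by
  unfold prefixSum
  congr 1
  ext k
  simp [Fin.castSucc_lt_succ_iff]

@[simp]
lemma prefixSum_zero (q : Fin t → M) : prefixSum q 0 = 0 := by
  simp [prefixSum]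

@[simp]
lemma prefixSum_last (q : Fin t → M) : prefixSum q (Fin.last t) = ∑ k, q k := by
  simp [prefixSum, Fin.castSucc_lt_last]

lemma prefixSum_single (m : Fin t) (x : M) (i : Fin (t + 1)) :
    prefixSum (Pi.single m x) i = if m.castSucc < i then x else 0 := by
  simp [prefixSum, Pi.single_apply]

lemma sum_Ici_eq_sub_prefixSum (q : Fin t → G) (j : Fin t) :
    ∑ k ∈ Ici j, q k = ∑ k, q k - prefixSum q j.castSucc := by
  rw [prefixSum_castSucc, eq_sub_iff_add_eq, ← sum_compl_add_sum (Iio j)]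
  congr 2
  ext k
  simp

lemma sum_Ioi_eq_sub_prefixSum (q : Fin t → G) (j : Fin t) :
    ∑ k ∈ Ioi j, q k = ∑ k, q k - prefixSum q j.succ := by
  rw [prefixSum_succ, eq_sub_iff_add_eq, ← sum_compl_add_sum (Iic j)]
  congr 2
  ext k
  simp

lemma prefixSum_comp_succ_eq_sum_le {α : Type*} [LinearOrder α] (p : Fin t → M) (z : Fin t → α)
    (a : Equiv.Perm (Fin t)) (ha : Antitone (fun j => z (a j)))
    {j k : Fin t} (hjk : j.succ = k.castSucc) (hlt : z (a k) < z (a j)) :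
    prefixSum (p ∘ a) j.succ = ∑ i with z (a j) ≤ z i, p i := by
  rw [prefixSum_succ, sum_filter, ← Equiv.sum_comp a, ← sum_filter]
  congr 1
  ext l
  simp only [mem_Iic, mem_filter, mem_univ, true_and]
  refine ⟨fun hl => ha hl, fun hl => ?_⟩
  by_contra! hjl
  have hkl : k ≤ l := by
    rw [← Fin.castSucc_le_castSucc_iff, ← hjk]
    exact Fin.castSucc_lt_iff_succ_le.mp hjl
  exact (ha hkl).not_gt (hlt.trans_le hl)

end PrefixSum

lemma Fin.sum_sub_eq_of_eq_at_drops {α β M : Type*} [AddCommGroup M] {t : ℕ} (ψ : α → β → M)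
    (s : Fin t → α) (Q Q' : Fin (t + 1) → β) (h0 : Q 0 = Q' 0) (hlast : Q (.last t) = Q' (.last t))
    (hdrop : ∀ j k : Fin t, j.succ = k.castSucc → s k ≠ s j → Q j.succ = Q' j.succ) :
    ∑ j, (ψ (s j) (Q j.succ) - ψ (s j) (Q j.castSucc)) =
      ∑ j, (ψ (s j) (Q' j.succ) - ψ (s j) (Q' j.castSucc)) := by
  -- Both the `succ`-terms and the `castSucc`-terms of `ψ (s j) Q - ψ (s j) Q'` sum to `∑ i, E i`.
  set E : Fin (t + 1) → M :=
    Fin.snoc (fun k => ψ (s k) (Q k.castSucc) - ψ (s k) (Q' k.castSucc)) 0 with hE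
  have hE0 : E 0 = 0 := by
    rcases Fin.eq_castSucc_or_eq_last (0 : Fin (t + 1)) with ⟨k, hk⟩ | hk
    · rw [hk, hE, Fin.snoc_castSucc, ← hk, h0, sub_self]
    · rw [hk, hE, Fin.snoc_last]
  have hsucc : ∀ j : Fin t, ψ (s j) (Q j.succ) - ψ (s j) (Q' j.succ) = E j.succ := by
    intro j
    rcases Fin.eq_castSucc_or_eq_last j.succ with ⟨k, hk⟩ | hk
    · rw [hk, hE, Fin.snoc_castSucc]
      by_cases hs : s k = s j
      · rw [hs, ← hk]
      · rw [← hk, hdrop j k hk hs, sub_self, sub_self]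
    · rw [hk, hE, Fin.snoc_last, hlast, sub_self]
  have hsum_castSucc :
      ∑ j, (ψ (s j) (Q j.castSucc) - ψ (s j) (Q' j.castSucc)) = ∑ i, E i := by
    rw [Fin.sum_univ_castSucc E]
    simp [hE]
  have hsum_succ : ∑ j, (ψ (s j) (Q j.succ) - ψ (s j) (Q' j.succ)) = ∑ i, E i := by
    rw [Fin.sum_univ_succ E, hE0, zero_add]
    exact sum_congr rfl fun j _ => hsucc j
  simp only [sum_sub_distrib] at hsum_castSucc hsum_succ ⊢
  rw [sub_eq_sub_iff_sub_eq_sub, hsum_castSucc, hsum_succ]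

lemma exists_perm_antitone {α : Type*} [LinearOrder α] {t : ℕ} (x : Fin t → α) :
    ∃ a : Equiv.Perm (Fin t), Antitone (fun j => x (a j)) :=
  ⟨Tuple.sort (OrderDual.toDual ∘ x), Tuple.monotone_sort (OrderDual.toDual ∘ x)⟩

lemma isProbVec_single {t : ℕ} (i : Fin t) : IsProbVec (Pi.single i 1) :=
  ⟨fun j => by by_cases h : j = i <;> simp [h], by simp⟩

section CPT

variable {t : ℕ} (wp wm v : ℝ → ℝ) (r : ℝ)

/-- With `u` the mass of the outcomes ranked at or above `c` and `T` the total mass, both `π⁺` and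
`π⁻` are increments of this function in `u`. -/
noncomputable def cumulativeWeight (T c u : ℝ) : ℝ :=
  if r ≤ c then wp u else -wm (T - u)

lemma cptVal_eq_sum_prefixSum (p z : Fin t → ℝ) (a : Equiv.Perm (Fin t)) :
    cptVal wp wm v r p z a =
      ∑ j, (cumulativeWeight wp wm r (∑ i, p i) (z (a j)) (prefixSum (p ∘ a) j.succ) * v (z (a j)) -
        cumulativeWeight wp wm r (∑ i, p i) (z (a j)) (prefixSum (p ∘ a) j.castSucc) *
          v (z (a j))) := by
  rw [cptVal]
  refine sum_congr rfl fun j _ => ?_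
  have hT : ∑ i, p i = ∑ k, (p ∘ a) k := (Equiv.sum_comp a p).symm
  unfold cumulativeWeight
  rw [← sub_mul, hT, ← sum_Ici_eq_sub_prefixSum, ← sum_Ioi_eq_sub_prefixSum, prefixSum_succ,
    prefixSum_castSucc]
  split_ifs <;> simp only [Function.comp_apply, neg_sub_neg]

lemma cptVal_eq_of_antitone (p z : Fin t → ℝ) {a b : Equiv.Perm (Fin t)}
    (ha : Antitone (fun j => z (a j))) (hb : Antitone (fun j => z (b j))) :
    cptVal wp wm v r p z a = cptVal wp wm v r p z b := by
  have hab : ∀ j, z (a j) = z (b j) := congrFun (Tuple.unique_antitone ha hb)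
  rw [cptVal_eq_sum_prefixSum, cptVal_eq_sum_prefixSum]
  simp only [← hab]
  refine Fin.sum_sub_eq_of_eq_at_drops (fun c u => cumulativeWeight wp wm r (∑ i, p i) c u * v c)
    (fun j => z (a j)) _ _ (by simp) (by simp [Equiv.sum_comp]) fun j k hjk hne => ?_
  have hjk' : j < k := by
    rw [← Fin.castSucc_lt_castSucc_iff, ← hjk]
    exact Fin.castSucc_lt_succ
  have hlt : z (a k) < z (a j) := lt_of_le_of_ne (ha hjk'.le) hne
  rw [prefixSum_comp_succ_eq_sum_le p z a ha hjk hlt,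
    prefixSum_comp_succ_eq_sum_le p z b hb hjk (by rwa [← hab, ← hab]), hab]

lemma cptVal_single (hwp0 : wp 0 = 0) (hwp1 : wp 1 = 1) (hwm0 : wm 0 = 0) (hwm1 : wm 1 = 1)
    (z : Fin t → ℝ) (a : Equiv.Perm (Fin t)) (i : Fin t) :
    cptVal wp wm v r (Pi.single i 1) z a = v (z i) := by
  have hcomp : (Pi.single i (1 : ℝ) : Fin t → ℝ) ∘ a = Pi.single (a.symm i) 1 := by
    ext k
    simp [Pi.single_apply, Equiv.eq_symm_apply]
  rw [cptVal_eq_sum_prefixSum, hcomp, sum_eq_single (a.symm i)]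
  · rw [prefixSum_single, prefixSum_single, if_pos Fin.castSucc_lt_succ, if_neg (lt_irrefl _),
      ← sub_mul, Equiv.apply_symm_apply, Fintype.sum_pi_single']
    unfold cumulativeWeight
    split_ifs <;> simp [hwp0, hwp1, hwm0, hwm1]
  · intro j _ hj
    simp [prefixSum_single, Fin.castSucc_lt_succ_iff, le_iff_lt_or_eq, Ne.symm hj]
  · simp

end CPT

theorem cpt_value_eq_forall_prob_iff_eq_general {t : ℕ} (wp wm v : ℝ → ℝ) (r : ℝ)
    (hwp0 : wp 0 = 0) (hwp1 : wp 1 = 1) (hwm0 : wm 0 = 0) (hwm1 : wm 1 = 1)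
    (hv : StrictMono v)
    (x y : Fin t → ℝ) :
    (∀ p : Fin t → ℝ, IsProbVec p →
      ∀ a b : Equiv.Perm (Fin t),
        Antitone (fun j => x (a j)) → Antitone (fun j => y (b j)) →
        cptVal wp wm v r p x a = cptVal wp wm v r p y b)
    ↔ x = y := by
  refine ⟨fun h => funext fun i => hv.injective ?_, ?_⟩
  · obtain ⟨a, ha⟩ := exists_perm_antitone x
    obtain ⟨b, hb⟩ := exists_perm_antitone y
    simpa only [cptVal_single wp wm v r hwp0 hwp1 hwm0 hwm1] using
      h _ (isProbVec_single i) a b ha hb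
  · rintro rfl p - a b ha hb
    exact cptVal_eq_of_antitone wp wm v r p x ha hb

/-- two outcome profiles `x` and `y` have equal CPT value under every
probability distribution `p` (the CPT values being computed with any permutations
ordering `x`, resp. `y`, decreasingly) if and only if `x = y`. -/
theorem cpt_value_eq_forall_prob_iff_eq {t : ℕ} (wp wm v : ℝ → ℝ) (r : ℝ)
    (hwpc : ContinuousOn wp (Set.Icc 0 1)) (hwmc : ContinuousOn wm (Set.Icc 0 1))
    (hwpm : StrictMonoOn wp (Set.Icc 0 1)) (hwmm : StrictMonoOn wm (Set.Icc 0 1))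
    (hwp0 : wp 0 = 0) (hwp1 : wp 1 = 1) (hwm0 : wm 0 = 0) (hwm1 : wm 1 = 1)
    (hv : StrictMono v) (hvc : Continuous v) (hvr : v r = 0)
    (x y : Fin t → ℝ) :
    (∀ p : Fin t → ℝ, IsProbVec p →
      ∀ a b : Equiv.Perm (Fin t),
        Antitone (fun j => x (a j)) → Antitone (fun j => y (b j)) →
        cptVal wp wm v r p x a = cptVal wp wm v r p y b)
    ↔ x = y :=
  cpt_value_eq_forall_prob_iff_eq_general wp wm v r hwp0 hwp1 hwm0 hwm1 hv x y
end

section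
/- (Regret-decreasing direction lemma) Let p = (p_1,…,p_t) be a probability vector and x, y ∈ ℝ^t outcome profiles. Suppose that the prospects (p,x) and (p,y) either (i) are not similarly ranked, or (ii) neither pointwise dominates the other. Then there exists a direction δ = (δ_1,…,δ_t) ∈ ℝ^t with Σ_{j=1}^t δ_j = 0 and δ_j = 0 for every j with p_j = 0, such that for every reference point r ∈ ℝ and every ε > 0 with p + εδ a probability vector, R^r(p + εδ, x, y) < R^r(p, x, y). (In particular the same δ works simultaneously for all reference points r.) -/
/-- The prospects `(p,x)` and `(p,y)` are similarly ranked: there is an ordering of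
the indices along which, on the support `T' = {j | p j > 0}` of `p`, both `x` and
`y` are decreasing (equivalently, a permutation `(a_1,…,a_{t'})` of `T'` with
`x_{a_1} ≥ … ≥ x_{a_{t'}}` and `y_{a_1} ≥ … ≥ y_{a_{t'}}`). -/
def SimilarlyRanked {t : ℕ} (p x y : Fin t → ℝ) : Prop :=
  ∃ a : Equiv.Perm (Fin t), ∀ i j : Fin t, i ≤ j → 0 < p (a i) → 0 < p (a j) →
    x (a j) ≤ x (a i) ∧ y (a j) ≤ y (a i)

/-- The prospect `(p,x)` pointwise dominates the prospect `(p,y)`. -/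
def PointwiseDominates {t : ℕ} (p x y : Fin t → ℝ) : Prop :=
  ∀ j, 0 < p j → y j ≤ x j


namespace RDD

noncomputable def mg {t : ℕ} (P z : Fin t → ℝ) (w : ℝ) : ℝ :=
  ∑ u ∈ Finset.univ.filter fun u => w ≤ z u, P u

noncomputable def mgp {t : ℕ} (P z : Fin t → ℝ) (w : ℝ) : ℝ :=
  ∑ u ∈ Finset.univ.filter fun u => w < z u, P u

noncomputable def phiF (wp wm v : ℝ → ℝ) (r A w : ℝ) : ℝ :=
  if r ≤ w then wp A * v w else -(wm (1 - A) * v w)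

noncomputable def vterm (wp wm v : ℝ → ℝ) (r : ℝ) {t : ℕ} (P z : Fin t → ℝ) (w : ℝ) : ℝ :=
  phiF wp wm v r (mg P z w) w - phiF wp wm v r (mgp P z w) w

lemma sum_filter_congr {t : ℕ} (P : Fin t → ℝ) (c1 c2 : Fin t → Prop)
    [DecidablePred c1] [DecidablePred c2]
    (h : ∀ u, P u ≠ 0 → (c1 u ↔ c2 u)) :
    ∑ u ∈ Finset.univ.filter c1, P u = ∑ u ∈ Finset.univ.filter c2, P u := by
  rw [Finset.sum_filter, Finset.sum_filter]
  refine Finset.sum_congr rfl fun u _ => ?_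
  by_cases h0 : P u = 0
  · simp [h0]
  · have hiff := h u h0
    by_cases hc : c2 u
    · rw [if_pos hc, if_pos (hiff.mpr hc)]
    · rw [if_neg hc, if_neg fun hh => hc (hiff.mp hh)]

lemma vterm_zero (wp wm v : ℝ → ℝ) (r : ℝ) {t : ℕ} (P z : Fin t → ℝ) (w : ℝ)
    (h : ∀ u, z u = w → P u = 0) : vterm wp wm v r P z w = 0 := by
  have : mg P z w = mgp P z w := by
    apply sum_filter_congr
    intro u hPu
    have hne : z u ≠ w := fun he => hPu (h u he)
    constructor
    · intro hle; exact lt_of_le_of_ne hle (fun he => hne he.symm)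
    · intro hlt; exact hlt.le
  rw [vterm, this, sub_self]

lemma mg_nonneg {t : ℕ} (P z : Fin t → ℝ) (w : ℝ) (h0 : ∀ u, 0 ≤ P u) : 0 ≤ mg P z w :=
  Finset.sum_nonneg fun u _ => h0 u

lemma mgp_nonneg {t : ℕ} (P z : Fin t → ℝ) (w : ℝ) (h0 : ∀ u, 0 ≤ P u) : 0 ≤ mgp P z w :=
  Finset.sum_nonneg fun u _ => h0 u

lemma mg_le_one {t : ℕ} (P z : Fin t → ℝ) (w : ℝ) (h0 : ∀ u, 0 ≤ P u)
    (h1 : ∑ u, P u = 1) : mg P z w ≤ 1 := by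
  rw [← h1]
  exact Finset.sum_le_sum_of_subset_of_nonneg (Finset.filter_subset _ _) fun u _ _ => h0 u

lemma mgp_le_one {t : ℕ} (P z : Fin t → ℝ) (w : ℝ) (h0 : ∀ u, 0 ≤ P u)
    (h1 : ∑ u, P u = 1) : mgp P z w ≤ 1 := by
  rw [← h1]
  exact Finset.sum_le_sum_of_subset_of_nonneg (Finset.filter_subset _ _) fun u _ _ => h0 u


lemma fiber_sum {t : ℕ} (wp wm v : ℝ → ℝ) (r : ℝ) (P z : Fin t → ℝ) (a : Equiv.Perm (Fin t))
    (ha : Antitone fun k => z (a k)) (hsum : ∑ u, P u = 1) (w : ℝ)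
    (hne : (Finset.univ.filter fun j => z (a j) = w).Nonempty) :
    ∑ j ∈ Finset.univ.filter (fun j => z (a j) = w),
      ((if r ≤ z (a j) then
          wp (∑ k ∈ Finset.Iic j, P (a k)) - wp (∑ k ∈ Finset.Iio j, P (a k))
        else
          wm (∑ k ∈ Finset.Ici j, P (a k)) - wm (∑ k ∈ Finset.Ioi j, P (a k))) * v (z (a j)))
      = vterm wp wm v r P z w := by
  classical
  set B := Finset.univ.filter fun j => z (a j) = w with hB
  set n1 := B.min' hne with hn1
  set n2 := B.max' hne with hn2
  have hn1B : n1 ∈ B := B.min'_mem hne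
  have hn2B : n2 ∈ B := B.max'_mem hne
  have hzn1 : z (a n1) = w := (Finset.mem_filter.mp hn1B).2
  have hzn2 : z (a n2) = w := (Finset.mem_filter.mp hn2B).2
  have hmemB : ∀ j : Fin t, j ∈ B ↔ z (a j) = w := by
    intro j; simp [hB]
  have hBIcc : B = Finset.Icc n1 n2 := by
    ext j
    rw [hmemB, Finset.mem_Icc]
    constructor
    · intro hj
      have hjB : j ∈ B := (hmemB j).mpr hj
      exact ⟨B.min'_le j hjB, B.le_max' j hjB⟩
    · rintro ⟨h1, h2⟩
      have e1 : z (a j) ≤ z (a n1) := ha h1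
      have e2 : z (a n2) ≤ z (a j) := ha h2
      rw [hzn1] at e1; rw [hzn2] at e2; linarith
  set c : ℕ → ℝ := fun n => ∑ k ∈ Finset.univ.filter (fun k : Fin t => (k : ℕ) < n), P (a k)
    with hc
  have hIio : ∀ j : Fin t, ∑ k ∈ Finset.Iio j, P (a k) = c (j : ℕ) := by
    intro j
    refine Finset.sum_congr ?_ fun _ _ => rfl
    ext k
    simp only [Finset.mem_Iio, Finset.mem_filter, Finset.mem_univ, true_and, Fin.lt_def]
  have hIic : ∀ j : Fin t, ∑ k ∈ Finset.Iic j, P (a k) = c ((j : ℕ) + 1) := by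
    intro j
    refine Finset.sum_congr ?_ fun _ _ => rfl
    ext k
    simp only [Finset.mem_Iic, Finset.mem_filter, Finset.mem_univ, true_and, Fin.le_def,
      Nat.lt_succ_iff]
  have hsuma : ∑ k : Fin t, P (a k) = 1 := by
    rw [Equiv.sum_comp a P]; exact hsum
  have hIci : ∀ j : Fin t, ∑ k ∈ Finset.Ici j, P (a k) = 1 - c (j : ℕ) := by
    intro j
    have hsplit := Finset.sum_filter_add_sum_filter_not Finset.univ (fun k => k < j)
      (fun k => P (a k))
    rw [hsuma] at hsplit
    have e1 : Finset.univ.filter (fun k => k < j) = Finset.Iio j := by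
      ext k; simp [Finset.mem_Iio]
    have e2 : Finset.univ.filter (fun k => ¬ k < j) = Finset.Ici j := by
      ext k; simp [Finset.mem_Ici, not_lt]
    rw [e1, e2, hIio j] at hsplit
    linarith
  have hIoi : ∀ j : Fin t, ∑ k ∈ Finset.Ioi j, P (a k) = 1 - c ((j : ℕ) + 1) := by
    intro j
    have hsplit := Finset.sum_filter_add_sum_filter_not Finset.univ (fun k => k ≤ j)
      (fun k => P (a k))
    rw [hsuma] at hsplit
    have e1 : Finset.univ.filter (fun k => k ≤ j) = Finset.Iic j := by
      ext k; simp [Finset.mem_Iic]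
    have e2 : Finset.univ.filter (fun k => ¬ k ≤ j) = Finset.Ioi j := by
      ext k; simp [Finset.mem_Ioi, not_le]
    rw [e1, e2, hIic j] at hsplit
    linarith
  set F : ℕ → ℝ := fun n => phiF wp wm v r (c n) w with hF
  have hterm : ∀ j ∈ B,
      ((if r ≤ z (a j) then
          wp (∑ k ∈ Finset.Iic j, P (a k)) - wp (∑ k ∈ Finset.Iio j, P (a k))
        else
          wm (∑ k ∈ Finset.Ici j, P (a k)) - wm (∑ k ∈ Finset.Ioi j, P (a k))) * v (z (a j)))
        = F ((j : ℕ) + 1) - F (j : ℕ) := by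
    intro j hj
    have hzj : z (a j) = w := (hmemB j).mp hj
    rw [hzj, hIic j, hIio j, hIci j, hIoi j]
    by_cases hr : r ≤ w
    · rw [if_pos hr]
      simp only [hF, phiF, if_pos hr]
      ring
    · rw [if_neg hr]
      simp only [hF, phiF, if_neg hr]
      ring
  rw [Finset.sum_congr rfl hterm, hBIcc]
  have hmap : ∑ j ∈ Finset.Icc n1 n2, (F ((j : ℕ) + 1) - F (j : ℕ))
      = ∑ n ∈ Finset.Icc (n1 : ℕ) (n2 : ℕ), (F (n + 1) - F n) := by
    rw [← Fin.map_valEmbedding_Icc, Finset.sum_map]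
    rfl
  have hn12 : (n1 : ℕ) ≤ (n2 : ℕ) := Fin.le_def.mp (B.min'_le n2 hn2B)
  have htel : ∑ n ∈ Finset.Icc (n1 : ℕ) (n2 : ℕ), (F (n + 1) - F n)
      = F ((n2 : ℕ) + 1) - F (n1 : ℕ) := by
    rw [← Finset.Ico_add_one_right_eq_Icc, Finset.sum_Ico_eq_sub _ (show (n1 : ℕ) ≤ (n2 : ℕ) + 1 from Nat.le_succ_of_le hn12),
      Finset.sum_range_sub (fun n => F n), Finset.sum_range_sub (fun n => F n)]
    ring
  rw [hmap, htel]
  have hCtop : c ((n2 : ℕ) + 1) = mg P z w := by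
    have hset : (Finset.univ.filter fun k : Fin t => (k : ℕ) < (n2 : ℕ) + 1)
        = Finset.univ.filter fun k => w ≤ z (a k) := by
      ext k
      simp only [Finset.mem_filter, Finset.mem_univ, true_and, Nat.lt_succ_iff]
      constructor
      · intro hk
        have hkle : k ≤ n2 := Fin.le_def.mpr hk
        rw [← hzn2]
        exact ha hkle
      · intro hk
        by_contra hcon
        push_neg at hcon
        have hlt : n2 < k := Fin.lt_def.mpr hcon
        have hle : z (a k) ≤ z (a n2) := ha hlt.le
        rw [hzn2] at hle
        have heq : z (a k) = w := le_antisymm hle hk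
        have : k ∈ B := (hmemB k).mpr heq
        exact absurd (B.le_max' k this) (not_le.mpr hlt)
    rw [hc]
    simp only
    rw [hset, mg, Finset.sum_filter, Finset.sum_filter]
    exact Equiv.sum_comp a (fun u => if w ≤ z u then P u else 0)
  have hCbot : c (n1 : ℕ) = mgp P z w := by
    have hset : (Finset.univ.filter fun k : Fin t => (k : ℕ) < (n1 : ℕ))
        = Finset.univ.filter fun k => w < z (a k) := by
      ext k
      simp only [Finset.mem_filter, Finset.mem_univ, true_and]
      constructor
      · intro hk
        have hklt : k < n1 := Fin.lt_def.mpr hk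
        have hle : z (a n1) ≤ z (a k) := ha hklt.le
        rw [hzn1] at hle
        rcases eq_or_lt_of_le hle with he | hl
        · exfalso
          have : k ∈ B := (hmemB k).mpr he.symm
          exact absurd (B.min'_le k this) (not_le.mpr hklt)
        · exact hl
      · intro hk
        by_contra hcon
        push_neg at hcon
        have hn1k : n1 ≤ k := Fin.le_def.mpr hcon
        by_cases hk2 : k ≤ n2
        · have : k ∈ B := by rw [hBIcc]; exact Finset.mem_Icc.mpr ⟨hn1k, hk2⟩
          have := (hmemB k).mp this
          exact absurd hk (by rw [this]; exact lt_irrefl w)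
        · push_neg at hk2
          have hle : z (a k) ≤ z (a n2) := ha hk2.le
          rw [hzn2] at hle
          exact absurd hk (not_lt.mpr hle)
    rw [hc]
    simp only
    rw [hset, mgp, Finset.sum_filter, Finset.sum_filter]
    exact Equiv.sum_comp a (fun u => if w < z u then P u else 0)
  rw [hF]
  simp only
  rw [hCtop, hCbot, vterm]

lemma canon {t : ℕ} (wp wm v : ℝ → ℝ) (r : ℝ) (P z : Fin t → ℝ) (a : Equiv.Perm (Fin t))
    (ha : Antitone fun k => z (a k)) (W : Finset ℝ) (hW : ∀ u, P u ≠ 0 → z u ∈ W)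
    (hsum : ∑ u, P u = 1) :
    cptVal wp wm v r P z a = ∑ w ∈ W, vterm wp wm v r P z w := by
  classical
  set WU := W ∪ (Finset.univ.image fun j => z (a j)) with hWU
  have h1 : cptVal wp wm v r P z a
      = ∑ w ∈ WU, ∑ j ∈ Finset.univ.filter (fun j => z (a j) = w),
          ((if r ≤ z (a j) then
              wp (∑ k ∈ Finset.Iic j, P (a k)) - wp (∑ k ∈ Finset.Iio j, P (a k))
            else
              wm (∑ k ∈ Finset.Ici j, P (a k)) - wm (∑ k ∈ Finset.Ioi j, P (a k)))
            * v (z (a j))) := by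
    rw [cptVal]
    exact (Finset.sum_fiberwise_of_maps_to
      (fun j _ => Finset.mem_union_right _ (Finset.mem_image_of_mem _ (Finset.mem_univ j))) _).symm
  rw [h1]
  have h2 : ∀ w ∈ WU, (∑ j ∈ Finset.univ.filter (fun j => z (a j) = w),
      ((if r ≤ z (a j) then
          wp (∑ k ∈ Finset.Iic j, P (a k)) - wp (∑ k ∈ Finset.Iio j, P (a k))
        else
          wm (∑ k ∈ Finset.Ici j, P (a k)) - wm (∑ k ∈ Finset.Ioi j, P (a k)))
        * v (z (a j)))) = vterm wp wm v r P z w := by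
    intro w _
    rcases (Finset.univ.filter fun j => z (a j) = w).eq_empty_or_nonempty with he | hne
    · rw [he, Finset.sum_empty]
      symm
      apply vterm_zero
      intro u hzu
      by_contra hPu
      have : a.symm u ∈ Finset.univ.filter fun j => z (a j) = w := by
        simp [hzu]
      rw [he] at this
      exact absurd this (Finset.notMem_empty _)
    · exact fiber_sum wp wm v r P z a ha hsum w hne
  rw [Finset.sum_congr rfl h2]
  symm
  apply Finset.sum_subset Finset.subset_union_left
  intro w _ hwW
  apply vterm_zero
  intro u hzu
  by_contra hPu
  exact hwW (hzu ▸ hW u hPu)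


/-- strict monotonicity of `A ↦ phiF A w1 - phiF A w2` when `w2 < w1`. -/
lemma psi_lt (wp wm v : ℝ → ℝ) (r : ℝ)
    (hwpm : StrictMonoOn wp (Set.Icc 0 1)) (hwmm : StrictMonoOn wm (Set.Icc 0 1))
    (hv : StrictMono v) (hvr : v r = 0)
    {w1 w2 A A' : ℝ} (h21 : w2 < w1) (hA : A' < A) (h0 : 0 ≤ A') (h1 : A ≤ 1) :
    phiF wp wm v r A' w1 - phiF wp wm v r A' w2 < phiF wp wm v r A w1 - phiF wp wm v r A w2 := by
  have hA'm : A' ∈ Set.Icc (0:ℝ) 1 := ⟨h0, le_trans hA.le h1⟩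
  have hAm : A ∈ Set.Icc (0:ℝ) 1 := ⟨le_trans h0 hA.le, h1⟩
  have hA'm2 : 1 - A ∈ Set.Icc (0:ℝ) 1 := ⟨by linarith, by linarith⟩
  have hAm2 : 1 - A' ∈ Set.Icc (0:ℝ) 1 := ⟨by linarith, by linarith⟩
  have hwp : wp A' < wp A := hwpm hA'm hAm hA
  have hwm : wm (1 - A) < wm (1 - A') := hwmm hA'm2 hAm2 (by linarith)
  have hvpos : ∀ w, r ≤ w → 0 ≤ v w := by
    intro w hw
    rcases eq_or_lt_of_le hw with he | hl
    · rw [← he, hvr]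
    · rw [← hvr]; exact (hv hl).le
  have hvneg : ∀ w, ¬ r ≤ w → v w < 0 := by
    intro w hw
    push_neg at hw
    rw [← hvr]; exact hv hw
  by_cases hr2 : r ≤ w2
  · have hr1 : r ≤ w1 := le_trans hr2 h21.le
    rw [phiF, phiF, phiF, phiF, if_pos hr1, if_pos hr2, if_pos hr1, if_pos hr2]
    have hvv : 0 < v w1 - v w2 := by have := hv h21; linarith
    nlinarith
  · by_cases hr1 : r ≤ w1
    · rw [phiF, phiF, phiF, phiF, if_pos hr1, if_neg hr2, if_pos hr1, if_neg hr2]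
      have h1' : 0 ≤ v w1 := hvpos w1 hr1
      have h2' : v w2 < 0 := hvneg w2 hr2
      have e1 : wp A' * v w1 ≤ wp A * v w1 := mul_le_mul_of_nonneg_right hwp.le h1'
      have e2 : wm (1 - A') * v w2 < wm (1 - A) * v w2 := mul_lt_mul_of_neg_right hwm h2'
      linarith
    · rw [phiF, phiF, phiF, phiF, if_neg hr1, if_neg hr2, if_neg hr1, if_neg hr2]
      have hvv : v w2 - v w1 < 0 := by have := hv h21; linarith
      have := mul_lt_mul_of_neg_right hwm hvv
      nlinarith

/-- predecessor of `w` among elements of `W` (greatest element `< w`), fallback `lo`. -/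
noncomputable def predW (W : Finset ℝ) (lo w : ℝ) : ℝ :=
  if h : (W.filter (fun w' => w' < w)).Nonempty then (W.filter (fun w' => w' < w)).max' h else lo

noncomputable def succW (W : Finset ℝ) (hi w : ℝ) : ℝ :=
  if h : (W.filter (fun w' => w < w')).Nonempty then (W.filter (fun w' => w < w')).min' h else hi

lemma predW_spec (W : Finset ℝ) {lo w : ℝ} (hlo : lo ∈ W) (hlow : lo < w) :
    predW W lo w ∈ W ∧ predW W lo w < w ∧ lo ≤ predW W lo w ∧
      ∀ w' ∈ W, w' < w → w' ≤ predW W lo w := by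
  have hne : (W.filter (fun w' => w' < w)).Nonempty := ⟨lo, Finset.mem_filter.mpr ⟨hlo, hlow⟩⟩
  rw [predW, dif_pos hne]
  have hmem := (W.filter (fun w' => w' < w)).max'_mem hne
  rw [Finset.mem_filter] at hmem
  exact ⟨hmem.1, hmem.2,
    Finset.le_max' (W.filter (fun w' => w' < w)) lo (Finset.mem_filter.mpr ⟨hlo, hlow⟩),
    fun w' hw' hlt => Finset.le_max' (W.filter (fun w'' => w'' < w)) w'
      (Finset.mem_filter.mpr ⟨hw', hlt⟩)⟩

lemma succW_spec (W : Finset ℝ) {hi w : ℝ} (hhi : hi ∈ W) (hwhi : w < hi) :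
    succW W hi w ∈ W ∧ w < succW W hi w ∧ succW W hi w ≤ hi ∧
      ∀ w' ∈ W, w < w' → succW W hi w ≤ w' := by
  have hne : (W.filter (fun w' => w < w')).Nonempty := ⟨hi, Finset.mem_filter.mpr ⟨hhi, hwhi⟩⟩
  rw [succW, dif_pos hne]
  have hmem := (W.filter (fun w' => w < w')).min'_mem hne
  rw [Finset.mem_filter] at hmem
  exact ⟨hmem.1, hmem.2,
    Finset.min'_le (W.filter (fun w' => w < w')) hi (Finset.mem_filter.mpr ⟨hhi, hwhi⟩),
    fun w' hw' hlt => Finset.min'_le (W.filter (fun w'' => w < w'')) w'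
      (Finset.mem_filter.mpr ⟨hw', hlt⟩)⟩

lemma pred_succ (W : Finset ℝ) {lo hi w : ℝ} (hlo : lo ∈ W) (hhi : hi ∈ W)
    (hw : w ∈ W) (hlow : lo ≤ w) (hwhi : w < hi) :
    predW W lo (succW W hi w) = w := by
  obtain ⟨hsW, hslt, _, hsmin⟩ := succW_spec W hhi hwhi
  have hlos : lo < succW W hi w := lt_of_le_of_lt hlow hslt
  obtain ⟨hpW, hplt, _, hpmax⟩ := predW_spec W hlo hlos
  have h1 : w ≤ predW W lo (succW W hi w) := hpmax w hw hslt
  have h2 : predW W lo (succW W hi w) ≤ w := by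
    by_contra hcon
    push_neg at hcon
    exact absurd (hsmin _ hpW hcon) (not_le.mpr hplt)
  linarith

lemma succ_pred (W : Finset ℝ) {lo hi w : ℝ} (hlo : lo ∈ W) (hhi : hi ∈ W)
    (hw : w ∈ W) (hlow : lo < w) (hwhi : w ≤ hi) :
    succW W hi (predW W lo w) = w := by
  obtain ⟨hpW, hplt, _, hpmax⟩ := predW_spec W hlo hlow
  have hphi : predW W lo w < hi := lt_of_lt_of_le hplt hwhi
  obtain ⟨hsW, hslt, _, hsmin⟩ := succW_spec W hhi hphi
  have h1 : succW W hi (predW W lo w) ≤ w := hsmin w hw hplt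
  have h2 : w ≤ succW W hi (predW W lo w) := by
    by_contra hcon
    push_neg at hcon
    exact absurd (hpmax _ hsW hcon) (not_le.mpr hslt)
  linarith

/-- no mass of `P` strictly between `predW W lo w` and `w`. -/
lemma gap {t : ℕ} (P z : Fin t → ℝ) (W : Finset ℝ) (hW : ∀ u, P u ≠ 0 → z u ∈ W)
    {lo w : ℝ} (hlo : lo ∈ W) (hlow : lo < w) :
    mgp P z (predW W lo w) = mg P z w := by
  obtain ⟨hpW, hplt, _, hpmax⟩ := predW_spec W hlo hlow
  apply sum_filter_congr
  intro u hPu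
  constructor
  · intro hlt
    by_contra hcon
    push_neg at hcon
    exact absurd (hpmax (z u) (hW u hPu) hcon) (not_le.mpr hlt)
  · intro hle
    exact lt_of_lt_of_le hplt hle

/-- pointwise difference formula under a shifted measure. -/
lemma vterm_diff (wp wm v : ℝ → ℝ) (r : ℝ) {t : ℕ} (P P' z : Fin t → ℝ)
    (lo hi η w : ℝ)
    (hMG : mg P' z w = mg P z w - (if lo < w ∧ w ≤ hi then η else 0))
    (hMGp : mgp P' z w = mgp P z w - (if lo ≤ w ∧ w < hi then η else 0)) :
    vterm wp wm v r P' z w - vterm wp wm v r P z w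
      = (if lo < w ∧ w ≤ hi then
            phiF wp wm v r (mg P z w - η) w - phiF wp wm v r (mg P z w) w else 0)
        - (if lo ≤ w ∧ w < hi then
            phiF wp wm v r (mgp P z w - η) w - phiF wp wm v r (mgp P z w) w else 0) := by
  rw [vterm, vterm, hMG, hMGp]
  by_cases c1 : lo < w ∧ w ≤ hi <;> by_cases c2 : lo ≤ w ∧ w < hi <;>
    simp [c1, c2] <;> ring

/-- the master rewriting of the regret difference for a shift supported on `(lo, hi]`. -/
lemma shift_sum (wp wm v : ℝ → ℝ) (r : ℝ) {t : ℕ} (P P' z : Fin t → ℝ)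
    (W : Finset ℝ) (hW : ∀ u, P u ≠ 0 → z u ∈ W)
    {lo hi : ℝ} (η : ℝ) (hlo : lo ∈ W) (hhi : hi ∈ W) (hlh : lo < hi)
    (hMG : ∀ w, mg P' z w = mg P z w - (if lo < w ∧ w ≤ hi then η else 0))
    (hMGp : ∀ w, mgp P' z w = mgp P z w - (if lo ≤ w ∧ w < hi then η else 0)) :
    ∑ w ∈ W, (vterm wp wm v r P' z w - vterm wp wm v r P z w)
      = ∑ w ∈ W.filter (fun w => lo < w ∧ w ≤ hi),
          ((phiF wp wm v r (mg P z w - η) w - phiF wp wm v r (mg P z w) w)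
            - (phiF wp wm v r (mg P z w - η) (predW W lo w)
                - phiF wp wm v r (mg P z w) (predW W lo w))) := by
  classical
  have h1 : ∑ w ∈ W, (vterm wp wm v r P' z w - vterm wp wm v r P z w)
      = ∑ w ∈ W, ((if lo < w ∧ w ≤ hi then
            phiF wp wm v r (mg P z w - η) w - phiF wp wm v r (mg P z w) w else 0)
        - (if lo ≤ w ∧ w < hi then
            phiF wp wm v r (mgp P z w - η) w - phiF wp wm v r (mgp P z w) w else 0)) :=
    Finset.sum_congr rfl fun w _ => vterm_diff wp wm v r P P' z lo hi η w (hMG w) (hMGp w)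
  rw [h1, Finset.sum_sub_distrib, ← Finset.sum_filter, ← Finset.sum_filter]
  have h2 : ∑ w ∈ W.filter (fun w => lo ≤ w ∧ w < hi),
        (phiF wp wm v r (mgp P z w - η) w - phiF wp wm v r (mgp P z w) w)
      = ∑ w ∈ W.filter (fun w => lo < w ∧ w ≤ hi),
        (phiF wp wm v r (mg P z w - η) (predW W lo w)
          - phiF wp wm v r (mg P z w) (predW W lo w)) := by
    apply Finset.sum_nbij' (fun w => succW W hi w) (fun w => predW W lo w)
    · intro w hwmem
      rw [Finset.mem_filter] at hwmem
      have hwW := hwmem.1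
      have hwlo := hwmem.2.1
      have hwhi := hwmem.2.2
      obtain ⟨hsW, hslt, hsle, _⟩ := succW_spec W hhi hwhi
      exact Finset.mem_filter.mpr ⟨hsW, lt_of_le_of_lt hwlo hslt, hsle⟩
    · intro w hwmem
      rw [Finset.mem_filter] at hwmem
      have hwW := hwmem.1
      have hwlo := hwmem.2.1
      have hwhi := hwmem.2.2
      obtain ⟨hpW, hplt, hple, _⟩ := predW_spec W hlo hwlo
      exact Finset.mem_filter.mpr ⟨hpW, hple, lt_of_lt_of_le hplt hwhi⟩
    · intro w hwmem
      rw [Finset.mem_filter] at hwmem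
      exact pred_succ W hlo hhi hwmem.1 hwmem.2.1 hwmem.2.2
    · intro w hwmem
      rw [Finset.mem_filter] at hwmem
      exact succ_pred W hlo hhi hwmem.1 hwmem.2.1 hwmem.2.2
    · intro w hwmem
      rw [Finset.mem_filter] at hwmem
      have hwW := hwmem.1
      have hwlo := hwmem.2.1
      have hwhi := hwmem.2.2
      have hps := pred_succ W hlo hhi hwW hwlo hwhi
      have hgap : mgp P z w = mg P z (succW W hi w) := by
        have := gap P z W hW hlo (lt_of_le_of_lt hwlo (succW_spec W hhi hwhi).2.1)
        rw [hps] at this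
        exact this
      rw [hps, hgap]
  rw [h2, ← Finset.sum_sub_distrib]


lemma filter_delta_sum {t : ℕ} (p : Fin t → ℝ) (i j : Fin t) (ε : ℝ)
    (c : Fin t → Prop) [DecidablePred c] :
    ∑ u ∈ Finset.univ.filter c,
        (p u + ε * ((if u = j then (1:ℝ) else 0) - (if u = i then 1 else 0)))
      = (∑ u ∈ Finset.univ.filter c, p u)
        + ε * ((if c j then (1:ℝ) else 0) - (if c i then 1 else 0)) := by
  classical
  rw [Finset.sum_add_distrib, ← Finset.mul_sum, Finset.sum_sub_distrib,
    Finset.sum_ite_eq' (Finset.univ.filter c) j (fun _ => (1:ℝ)),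
    Finset.sum_ite_eq' (Finset.univ.filter c) i (fun _ => (1:ℝ))]
  simp only [Finset.mem_filter, Finset.mem_univ, true_and]

lemma mg_shift {t : ℕ} (p z : Fin t → ℝ) (i j : Fin t) (ε : ℝ) (P' : Fin t → ℝ)
    (hrep : ∀ u, P' u = p u + ε * ((if u = j then (1:ℝ) else 0) - (if u = i then 1 else 0)))
    (hzji : z j ≤ z i) (w : ℝ) :
    mg P' z w = mg p z w - (if z j < w ∧ w ≤ z i then ε else 0) := by
  rw [mg, mg, Finset.sum_congr rfl (fun u _ => hrep u), filter_delta_sum]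
  by_cases h1 : w ≤ z j
  · have h2 : w ≤ z i := le_trans h1 hzji
    rw [if_pos h1, if_pos h2, if_neg (by rintro ⟨hl, _⟩; exact absurd h1 (not_le.mpr hl))]
    ring
  · by_cases h2 : w ≤ z i
    · rw [if_neg h1, if_pos h2, if_pos ⟨not_le.mp h1, h2⟩]
      ring
    · rw [if_neg h1, if_neg h2, if_neg (by rintro ⟨_, hr⟩; exact h2 hr)]
      ring

lemma mgp_shift {t : ℕ} (p z : Fin t → ℝ) (i j : Fin t) (ε : ℝ) (P' : Fin t → ℝ)
    (hrep : ∀ u, P' u = p u + ε * ((if u = j then (1:ℝ) else 0) - (if u = i then 1 else 0)))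
    (hzji : z j ≤ z i) (w : ℝ) :
    mgp P' z w = mgp p z w - (if z j ≤ w ∧ w < z i then ε else 0) := by
  rw [mgp, mgp, Finset.sum_congr rfl (fun u _ => hrep u), filter_delta_sum]
  by_cases h1 : w < z j
  · have h2 : w < z i := lt_of_lt_of_le h1 hzji
    rw [if_pos h1, if_pos h2, if_neg (by rintro ⟨hl, _⟩; exact absurd h1 (not_lt.mpr hl))]
    ring
  · by_cases h2 : w < z i
    · rw [if_neg h1, if_pos h2, if_pos ⟨not_lt.mp h1, h2⟩]
      ring
    · rw [if_neg h1, if_neg h2, if_neg (by rintro ⟨_, hr⟩; exact h2 hr)]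
      ring

lemma extract_cross {t : ℕ} (p x y : Fin t → ℝ) (h1 : ¬ SimilarlyRanked p x y) :
    ∃ i j, 0 < p i ∧ 0 < p j ∧ x j < x i ∧ y i < y j := by
  classical
  by_contra hq
  push_neg at hq
  apply h1
  set f : Fin t → ℝ ×ₗ ℝ := fun u => toLex (-x u, -y u) with hf
  refine ⟨Tuple.sort f, ?_⟩
  intro i j hij hpi hpj
  have hmono := Tuple.monotone_sort f hij
  rcases (Prod.Lex.le_iff (x := toLex (-x (Tuple.sort f i), -y (Tuple.sort f i)))
      (y := toLex (-x (Tuple.sort f j), -y (Tuple.sort f j)))).mp hmono with hlt | ⟨heq, hle⟩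
  · have hx : x (Tuple.sort f j) < x (Tuple.sort f i) := by
      simp only [ofLex_toLex] at hlt; linarith
    exact ⟨hx.le, hq _ _ hpi hpj hx⟩
  · have hx : x (Tuple.sort f j) = x (Tuple.sort f i) := by
      simp only [ofLex_toLex] at heq; linarith
    have hy : y (Tuple.sort f j) ≤ y (Tuple.sort f i) := by
      simp only [ofLex_toLex] at hle; linarith
    exact ⟨hx.le, hy⟩

lemma extract_adjacent {t : ℕ} (p x y : Fin t → ℝ) (σ : Equiv.Perm (Fin t))
    (hσ : ∀ i j : Fin t, i ≤ j → 0 < p (σ i) → 0 < p (σ j) →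
      x (σ j) ≤ x (σ i) ∧ y (σ j) ≤ y (σ i))
    {u1 u2 : Fin t} (hu1 : 0 < p u1) (hx1 : x u1 < y u1) (hu2 : 0 < p u2) (hx2 : y u2 < x u2) :
    ∃ i j, 0 < p i ∧ 0 < p j ∧ (x i - y i) * (x j - y j) < 0 ∧
      x j ≤ x i ∧ y j ≤ y i ∧
      ∀ u, 0 < p u → u ≠ i → u ≠ j →
        ((x i ≤ x u ∧ y i ≤ y u) ∨ (x u ≤ x j ∧ y u ≤ y j) ∨
          (x u = y u ∧ x j ≤ x u ∧ x u ≤ x i ∧ y j ≤ y u ∧ y u ≤ y i)) := by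
  classical
  set d : Fin t → ℝ := fun n => x (σ n) - y (σ n) with hd
  set Q : Finset (Fin t) := Finset.univ.filter (fun n => 0 < p (σ n) ∧ d n ≠ 0) with hQ
  have hmemQ : ∀ n, n ∈ Q ↔ (0 < p (σ n) ∧ d n ≠ 0) := by
    intro n; rw [hQ, Finset.mem_filter]; simp only [Finset.mem_univ, true_and]
  have hd2 : 0 < d (σ.symm u2) := by
    rw [hd]; simp only [Equiv.apply_symm_apply]; linarith
  have hd1 : d (σ.symm u1) < 0 := by
    rw [hd]; simp only [Equiv.apply_symm_apply]; linarith
  have hn2Q : σ.symm u2 ∈ Q := by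
    rw [hmemQ]
    constructor
    · simp only [Equiv.apply_symm_apply]; exact hu2
    · exact ne_of_gt hd2
  have hn1Q : σ.symm u1 ∈ Q := by
    rw [hmemQ]
    constructor
    · simp only [Equiv.apply_symm_apply]; exact hu1
    · exact ne_of_lt hd1
  have hQne : Q.Nonempty := ⟨_, hn2Q⟩
  set m := Q.min' hQne with hm
  have hmQ : m ∈ Q := Q.min'_mem hQne
  have hdm0 : d m ≠ 0 := ((hmemQ m).mp hmQ).2
  set Q2 := Q.filter (fun n => d m * d n < 0) with hQ2
  have hQ2ne : Q2.Nonempty := by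
    rcases lt_or_gt_of_ne hdm0 with hneg | hpos
    · exact ⟨σ.symm u2, Finset.mem_filter.mpr ⟨hn2Q, mul_neg_of_neg_of_pos hneg hd2⟩⟩
    · exact ⟨σ.symm u1, Finset.mem_filter.mpr ⟨hn1Q, mul_neg_of_pos_of_neg hpos hd1⟩⟩
  set l := Q2.min' hQ2ne with hl
  have hlQ2 : l ∈ Q2 := Q2.min'_mem hQ2ne
  have hlQ : l ∈ Q := (Finset.mem_filter.mp hlQ2).1
  have hdl : d m * d l < 0 := (Finset.mem_filter.mp hlQ2).2
  have hdl0 : d l ≠ 0 := ((hmemQ l).mp hlQ).2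
  have hml : m < l := by
    rcases lt_or_eq_of_le (Q.min'_le l hlQ) with h | h
    · exact h
    · exfalso; rw [← h] at hdl; exact absurd hdl (not_lt.mpr (mul_self_nonneg _))
  set Qk := Q.filter (fun n => n < l) with hQk
  have hQkne : Qk.Nonempty := ⟨m, Finset.mem_filter.mpr ⟨hmQ, hml⟩⟩
  set k := Qk.max' hQkne with hk
  have hkQk : k ∈ Qk := Qk.max'_mem hQkne
  have hkQ : k ∈ Q := (Finset.mem_filter.mp hkQk).1
  have hkl : k < l := (Finset.mem_filter.mp hkQk).2
  have hdk0 : d k ≠ 0 := ((hmemQ k).mp hkQ).2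
  have hkQ2 : k ∉ Q2 := fun hc => absurd (Q2.min'_le k hc) (not_le.mpr hkl)
  have hdmk : 0 < d m * d k := by
    have h1 : ¬ (d m * d k < 0) := fun hc => hkQ2 (Finset.mem_filter.mpr ⟨hkQ, hc⟩)
    rcases lt_trichotomy (d m * d k) 0 with h | h | h
    · exact absurd h h1
    · exact absurd h (mul_ne_zero hdm0 hdk0)
    · exact h
  have hdkl : d k * d l < 0 := by
    rcases lt_or_gt_of_ne hdm0 with hneg | hpos
    · have hk' : d k < 0 := by nlinarith
      have hl' : 0 < d l := by nlinarith
      exact mul_neg_of_neg_of_pos hk' hl'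
    · have hk' : 0 < d k := by nlinarith
      have hl' : d l < 0 := by nlinarith
      exact mul_neg_of_pos_of_neg hk' hl'
  have hpk : 0 < p (σ k) := ((hmemQ k).mp hkQ).1
  have hpl : 0 < p (σ l) := ((hmemQ l).mp hlQ).1
  refine ⟨σ k, σ l, hpk, hpl, hdkl, (hσ k l hkl.le hpk hpl).1, (hσ k l hkl.le hpk hpl).2, ?_⟩
  intro u hpu hui huj
  have hσn : σ (σ.symm u) = u := Equiv.apply_symm_apply σ u
  set n := σ.symm u with hn
  have hpn : 0 < p (σ n) := by rw [hσn]; exact hpu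
  rcases lt_trichotomy n k with h | h | h
  · left
    have := hσ n k h.le hpn hpk
    rw [hσn] at this; exact this
  · exfalso; apply hui; rw [← hσn, h]
  · rcases lt_trichotomy n l with h2 | h2 | h2
    · right; right
      have hd0 : d n = 0 := by
        by_contra hdn
        have hnQk : n ∈ Qk := Finset.mem_filter.mpr ⟨(hmemQ n).mpr ⟨hpn, hdn⟩, h2⟩
        exact absurd (Qk.le_max' n hnQk) (not_le.mpr h)
      have hb1 := hσ k n h.le hpk hpn
      have hb2 := hσ n l h2.le hpn hpl
      rw [hσn] at hb1 hb2
      have hxy : x u = y u := by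
        have : x (σ n) - y (σ n) = 0 := hd0
        rw [hσn] at this; linarith
      exact ⟨hxy, hb2.1, hb1.1, hb2.2, hb1.2⟩
    · exfalso; apply huj; rw [← hσn, h2]
    · right; left
      have := hσ l n h2.le hpl hpn
      rw [hσn] at this; exact this


lemma case2_identity (wp wm v : ℝ → ℝ) (r : ℝ) {t : ℕ} (P P' x y : Fin t → ℝ)
    (i j : Fin t) (η : ℝ) (W : Finset ℝ)
    (hxiW : x i ∈ W) (hxjW : x j ∈ W) (hyiW : y i ∈ W) (hyjW : y j ∈ W)
    (hxj : x j < y j) (hyji : y j ≤ y i) (hyi : y i < x i)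
    (hclass : ∀ u, P u ≠ 0 → u = i ∨ u = j ∨ (x i ≤ x u ∧ y i ≤ y u) ∨
      (x u ≤ x j ∧ y u ≤ y j) ∨
      (x u = y u ∧ x j < x u ∧ x u < x i ∧ y j ≤ y u ∧ y u ≤ y i))
    (hMGx : ∀ w, mg P' x w = mg P x w - (if x j < w ∧ w ≤ x i then η else 0))
    (hMGpx : ∀ w, mgp P' x w = mgp P x w - (if x j ≤ w ∧ w < x i then η else 0))
    (hMGy : ∀ w, mg P' y w = mg P y w - (if y j < w ∧ w ≤ y i then η else 0))
    (hMGpy : ∀ w, mgp P' y w = mgp P y w - (if y j ≤ w ∧ w < y i then η else 0)) :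
    ∑ w ∈ W, ((vterm wp wm v r P' x w - vterm wp wm v r P x w)
        - (vterm wp wm v r P' y w - vterm wp wm v r P y w))
      = ((phiF wp wm v r (mg P x (x i) - η) (x i) - phiF wp wm v r (mg P x (x i)) (x i))
          - (phiF wp wm v r (mg P x (x i) - η) (y i) - phiF wp wm v r (mg P x (x i)) (y i)))
        - ((phiF wp wm v r (mgp P x (x j) - η) (x j) - phiF wp wm v r (mgp P x (x j)) (x j))
          - (phiF wp wm v r (mgp P x (x j) - η) (y j) - phiF wp wm v r (mgp P x (x j)) (y j))) := by
  classical
  have hxji : x j < x i := by linarith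
  -- mass facts
  have hM1 : mgp P x (y i) = mg P x (x i) := by
    rw [mgp, mg]
    apply sum_filter_congr
    intro u hPu
    rcases hclass u hPu with h | h | h | h | h
    · subst h; constructor <;> intro <;> linarith
    · subst h; constructor <;> intro <;> linarith
    · obtain ⟨ha1, ha2⟩ := h; constructor <;> intro <;> linarith
    · obtain ⟨hb1, hb2⟩ := h; constructor <;> intro <;> linarith
    · obtain ⟨he, hm1, hm2, hm3, hm4⟩ := h; constructor <;> intro <;> linarith
  have hM4 : mg P x (y j) = mgp P x (x j) := by
    rw [mgp, mg]
    apply sum_filter_congr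
    intro u hPu
    rcases hclass u hPu with h | h | h | h | h
    · subst h; constructor <;> intro <;> linarith
    · subst h; constructor <;> intro <;> linarith
    · obtain ⟨ha1, ha2⟩ := h; constructor <;> intro <;> linarith
    · obtain ⟨hb1, hb2⟩ := h; constructor <;> intro <;> linarith
    · obtain ⟨he, hm1, hm2, hm3, hm4⟩ := h; constructor <;> intro <;> linarith
  have hE1 : ∀ w, y j < w → w ≤ y i → mg P x w = mg P y w := by
    intro w hw1 hw2
    rw [mg, mg]
    apply sum_filter_congr
    intro u hPu
    rcases hclass u hPu with h | h | h | h | h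
    · subst h; constructor <;> intro <;> linarith
    · subst h; constructor <;> intro <;> linarith
    · obtain ⟨ha1, ha2⟩ := h; constructor <;> intro <;> linarith
    · obtain ⟨hb1, hb2⟩ := h; constructor <;> intro <;> linarith
    · obtain ⟨he, hm1, hm2, hm3, hm4⟩ := h; constructor <;> intro <;> linarith
  have hE2 : ∀ w, y j ≤ w → w < y i → mgp P x w = mgp P y w := by
    intro w hw1 hw2
    rw [mgp, mgp]
    apply sum_filter_congr
    intro u hPu
    rcases hclass u hPu with h | h | h | h | h
    · subst h; constructor <;> intro <;> linarith
    · subst h; constructor <;> intro <;> linarith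
    · obtain ⟨ha1, ha2⟩ := h; constructor <;> intro <;> linarith
    · obtain ⟨hb1, hb2⟩ := h; constructor <;> intro <;> linarith
    · obtain ⟨he, hm1, hm2, hm3, hm4⟩ := h; constructor <;> intro <;> linarith
  have hZlow : ∀ w, x j < w → w < y j → mg P x w = mgp P x w := by
    intro w hw1 hw2
    rw [mg, mgp]
    apply sum_filter_congr
    intro u hPu
    rcases hclass u hPu with h | h | h | h | h
    · subst h; constructor <;> intro <;> linarith
    · subst h; constructor <;> intro <;> linarith
    · obtain ⟨ha1, ha2⟩ := h; constructor <;> intro <;> linarith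
    · obtain ⟨hb1, hb2⟩ := h; constructor <;> intro <;> linarith
    · obtain ⟨he, hm1, hm2, hm3, hm4⟩ := h; constructor <;> intro <;> linarith
  have hZhigh : ∀ w, y i < w → w < x i → mg P x w = mgp P x w := by
    intro w hw1 hw2
    rw [mg, mgp]
    apply sum_filter_congr
    intro u hPu
    rcases hclass u hPu with h | h | h | h | h
    · subst h; constructor <;> intro <;> linarith
    · subst h; constructor <;> intro <;> linarith
    · obtain ⟨ha1, ha2⟩ := h; constructor <;> intro <;> linarith
    · obtain ⟨hb1, hb2⟩ := h; constructor <;> intro <;> linarith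
    · obtain ⟨he, hm1, hm2, hm3, hm4⟩ := h; constructor <;> intro <;> linarith
  have hgsum : ∑ w ∈ W,
      (((if w = x i then phiF wp wm v r (mg P x (x i) - η) w - phiF wp wm v r (mg P x (x i)) w else 0)
        - (if w = y i then phiF wp wm v r (mg P x (x i) - η) w - phiF wp wm v r (mg P x (x i)) w else 0))
        - (if w = x j then phiF wp wm v r (mgp P x (x j) - η) w - phiF wp wm v r (mgp P x (x j)) w else 0)
        + (if w = y j then phiF wp wm v r (mgp P x (x j) - η) w - phiF wp wm v r (mgp P x (x j)) w else 0))
      = ((phiF wp wm v r (mg P x (x i) - η) (x i) - phiF wp wm v r (mg P x (x i)) (x i))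
          - (phiF wp wm v r (mg P x (x i) - η) (y i) - phiF wp wm v r (mg P x (x i)) (y i)))
        - ((phiF wp wm v r (mgp P x (x j) - η) (x j) - phiF wp wm v r (mgp P x (x j)) (x j))
          - (phiF wp wm v r (mgp P x (x j) - η) (y j) - phiF wp wm v r (mgp P x (x j)) (y j))) := by
    rw [Finset.sum_add_distrib, Finset.sum_sub_distrib, Finset.sum_sub_distrib,
      Finset.sum_ite_eq' W (x i)
        (fun w => phiF wp wm v r (mg P x (x i) - η) w - phiF wp wm v r (mg P x (x i)) w),
      Finset.sum_ite_eq' W (y i)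
        (fun w => phiF wp wm v r (mg P x (x i) - η) w - phiF wp wm v r (mg P x (x i)) w),
      Finset.sum_ite_eq' W (x j)
        (fun w => phiF wp wm v r (mgp P x (x j) - η) w - phiF wp wm v r (mgp P x (x j)) w),
      Finset.sum_ite_eq' W (y j)
        (fun w => phiF wp wm v r (mgp P x (x j) - η) w - phiF wp wm v r (mgp P x (x j)) w),
      if_pos hxiW, if_pos hyiW, if_pos hxjW, if_pos hyjW]
    ring
  rw [← hgsum]
  apply Finset.sum_congr rfl
  intro w _
  rw [vterm_diff wp wm v r P P' x (x j) (x i) η w (hMGx w) (hMGpx w),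
      vterm_diff wp wm v r P P' y (y j) (y i) η w (hMGy w) (hMGpy w)]
  by_cases h1 : w = x i
  · subst h1
    rw [if_pos ⟨hxji, le_refl (x i)⟩,
        if_neg (fun hc : x j ≤ x i ∧ x i < x i => lt_irrefl (x i) hc.2),
        if_neg (fun hc : y j < x i ∧ x i ≤ y i => absurd hc.2 (not_le.mpr hyi)),
        if_neg (fun hc : y j ≤ x i ∧ x i < y i => absurd hc.2 (by linarith)),
        if_pos rfl,
        if_neg (ne_of_gt hyi),
        if_neg (ne_of_gt hxji),
        if_neg (ne_of_gt (show y j < x i by linarith))]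
    ring
  · by_cases h2 : w = x j
    · subst h2
      rw [if_neg (fun hc : x j < x j ∧ x j ≤ x i => lt_irrefl (x j) hc.1),
          if_pos ⟨le_refl (x j), hxji⟩,
          if_neg (fun hc : y j < x j ∧ x j ≤ y i => absurd hc.1 (by linarith)),
          if_neg (fun hc : y j ≤ x j ∧ x j < y i => absurd hc.1 (not_le.mpr hxj)),
          if_neg (ne_of_lt hxji),
          if_neg (ne_of_lt (show x j < y i by linarith)),
          if_pos rfl,
          if_neg (ne_of_lt hxj)]
      ring
    · by_cases h3 : w = y i
      · by_cases h4 : w = y j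
        · -- w = y i = y j
          subst h3
          have heq : y i = y j := h4
          rw [if_pos ⟨show x j < y i by linarith, hyi.le⟩,
              if_pos ⟨show x j ≤ y i by linarith, hyi⟩,
              if_neg (fun hc : y j < y i ∧ y i ≤ y i => absurd hc.1 (by rw [heq] at *; exact lt_irrefl _)),
              if_neg (fun hc : y j ≤ y i ∧ y i < y i => lt_irrefl (y i) hc.2),
              if_neg (ne_of_lt hyi),
              if_pos rfl,
              if_neg (ne_of_gt (show x j < y i by linarith)),
              if_pos heq]
          have hm : mg P x (y i) = mgp P x (x j) := by rw [heq]; exact hM4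
          rw [hm, hM1]
          ring
        · -- w = y i, y j < y i
          subst h3
          have hylt : y j < y i := lt_of_le_of_ne hyji (fun he => h4 he.symm)
          rw [if_pos ⟨show x j < y i by linarith, hyi.le⟩,
              if_pos ⟨show x j ≤ y i by linarith, hyi⟩,
              if_pos ⟨hylt, le_refl (y i)⟩,
              if_neg (fun hc : y j ≤ y i ∧ y i < y i => lt_irrefl (y i) hc.2),
              if_neg (ne_of_lt hyi),
              if_pos rfl,
              if_neg (ne_of_gt (show x j < y i by linarith)),
              if_neg h4]
          rw [hM1, ← hE1 (y i) hylt (le_refl (y i))]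
          ring
      · by_cases h4 : w = y j
        · -- w = y j < y i
          subst h4
          have hylt : y j < y i := lt_of_le_of_ne hyji (fun he => h3 he)
          rw [if_pos ⟨hxj, show y j ≤ x i by linarith⟩,
              if_pos ⟨hxj.le, show y j < x i by linarith⟩,
              if_neg (fun hc : y j < y j ∧ y j ≤ y i => lt_irrefl (y j) hc.1),
              if_pos ⟨le_refl (y j), hylt⟩,
              if_neg (ne_of_lt (show y j < x i by linarith)),
              if_neg h3,
              if_neg (ne_of_gt hxj),
              if_pos rfl]
          rw [hM4, ← hE2 (y j) (le_refl (y j)) hylt]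
          ring
        · -- generic w
          rcases lt_trichotomy w (x j) with hw | hw | hw
          · rw [if_neg (fun hc : x j < w ∧ w ≤ x i => absurd hc.1 (by linarith)),
                if_neg (fun hc : x j ≤ w ∧ w < x i => absurd hc.1 (by linarith)),
                if_neg (fun hc : y j < w ∧ w ≤ y i => absurd hc.1 (by linarith)),
                if_neg (fun hc : y j ≤ w ∧ w < y i => absurd hc.1 (by linarith)),
                if_neg h1, if_neg h3, if_neg h2, if_neg h4]
            ring
          · exact absurd hw h2
          · rcases lt_trichotomy w (x i) with hw2 | hw2 | hw2
            · rcases lt_trichotomy w (y j) with hw3 | hw3 | hw3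
              · -- x j < w < y j
                rw [if_pos ⟨hw, hw2.le⟩, if_pos ⟨hw.le, hw2⟩,
                    if_neg (fun hc : y j < w ∧ w ≤ y i => absurd hc.1 (by linarith)),
                    if_neg (fun hc : y j ≤ w ∧ w < y i => absurd hc.1 (by linarith)),
                    if_neg h1, if_neg h3, if_neg h2, if_neg h4]
                rw [hZlow w hw hw3]
                ring
              · exact absurd hw3 h4
              · rcases lt_trichotomy w (y i) with hw4 | hw4 | hw4
                · -- y j < w < y i
                  rw [if_pos ⟨hw, hw2.le⟩, if_pos ⟨hw.le, hw2⟩,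
                      if_pos ⟨hw3, hw4.le⟩, if_pos ⟨hw3.le, hw4⟩,
                      if_neg h1, if_neg h3, if_neg h2, if_neg h4]
                  rw [← hE1 w hw3 hw4.le, ← hE2 w hw3.le hw4]
                  ring
                · exact absurd hw4 h3
                · -- y i < w < x i
                  rw [if_pos ⟨hw, hw2.le⟩, if_pos ⟨hw.le, hw2⟩,
                      if_neg (fun hc : y j < w ∧ w ≤ y i => absurd hc.2 (by linarith)),
                      if_neg (fun hc : y j ≤ w ∧ w < y i => absurd hc.2 (by linarith)),
                      if_neg h1, if_neg h3, if_neg h2, if_neg h4]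
                  rw [hZhigh w hw4 hw2]
                  ring
            · exact absurd hw2 h1
            · rw [if_neg (fun hc : x j < w ∧ w ≤ x i => absurd hc.2 (by linarith)),
                  if_neg (fun hc : x j ≤ w ∧ w < x i => absurd hc.2 (by linarith)),
                  if_neg (fun hc : y j < w ∧ w ≤ y i => absurd hc.2 (by linarith)),
                  if_neg (fun hc : y j ≤ w ∧ w < y i => absurd hc.2 (by linarith)),
                  if_neg h1, if_neg h3, if_neg h2, if_neg h4]
              ring


lemma main_case1 (wp wm v : ℝ → ℝ) (r : ℝ)
    (hwpm : StrictMonoOn wp (Set.Icc 0 1)) (hwmm : StrictMonoOn wm (Set.Icc 0 1))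
    (hv : StrictMono v) (hvr : v r = 0)
    {t : ℕ} (p x y : Fin t → ℝ) (hp0 : ∀ u, 0 ≤ p u) (hp1 : ∑ u, p u = 1)
    (i0 j0 : Fin t) (hpi : 0 < p i0) (hpj : 0 < p j0)
    (hxc : x j0 < x i0) (hyc : y i0 < y j0)
    (a b : Equiv.Perm (Fin t))
    (hax : Antitone fun k => x (a k)) (hby : Antitone fun k => y (b k))
    (ε : ℝ) (hε : 0 < ε) (P' : Fin t → ℝ)
    (hrep : ∀ u, P' u = p u + ε * ((if u = j0 then (1:ℝ) else 0) - (if u = i0 then 1 else 0)))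
    (hP'0 : ∀ u, 0 ≤ P' u) (hP'1 : ∑ u, P' u = 1) :
    cptVal wp wm v r P' x a - cptVal wp wm v r P' y b
      < cptVal wp wm v r p x a - cptVal wp wm v r p y b := by
  classical
  set W := ((Finset.univ.filter fun u => p u ≠ 0).image x)
    ∪ ((Finset.univ.filter fun u => p u ≠ 0).image y) with hWdef
  have hWx : ∀ u, p u ≠ 0 → x u ∈ W := fun u hu => Finset.mem_union_left _
    (Finset.mem_image_of_mem x (Finset.mem_filter.mpr ⟨Finset.mem_univ u, hu⟩))
  have hWy : ∀ u, p u ≠ 0 → y u ∈ W := fun u hu => Finset.mem_union_right _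
    (Finset.mem_image_of_mem y (Finset.mem_filter.mpr ⟨Finset.mem_univ u, hu⟩))
  have hsupp : ∀ u, P' u ≠ 0 → p u ≠ 0 := by
    intro u hu hc
    apply hu
    have hui : u ≠ i0 := by rintro rfl; exact (ne_of_gt hpi) hc
    have huj : u ≠ j0 := by rintro rfl; exact (ne_of_gt hpj) hc
    rw [hrep u, hc, if_neg hui, if_neg huj]
    ring
  have hWx' : ∀ u, P' u ≠ 0 → x u ∈ W := fun u hu => hWx u (hsupp u hu)
  have hWy' : ∀ u, P' u ≠ 0 → y u ∈ W := fun u hu => hWy u (hsupp u hu)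
  have hxiW : x i0 ∈ W := hWx i0 (ne_of_gt hpi)
  have hxjW : x j0 ∈ W := hWx j0 (ne_of_gt hpj)
  have hyiW : y i0 ∈ W := hWy i0 (ne_of_gt hpi)
  have hyjW : y j0 ∈ W := hWy j0 (ne_of_gt hpj)
  rw [canon wp wm v r P' x a hax W hWx' hP'1, canon wp wm v r p x a hax W hWx hp1,
      canon wp wm v r P' y b hby W hWy' hP'1, canon wp wm v r p y b hby W hWy hp1]
  have hrep2 : ∀ u, P' u = p u + (-ε) * ((if u = i0 then (1:ℝ) else 0) - (if u = j0 then 1 else 0)) := by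
    intro u; rw [hrep u]; ring
  have hMGx := mg_shift p x i0 j0 ε P' hrep hxc.le
  have hMGpx := mgp_shift p x i0 j0 ε P' hrep hxc.le
  have hMGy := mg_shift p y j0 i0 (-ε) P' hrep2 hyc.le
  have hMGpy := mgp_shift p y j0 i0 (-ε) P' hrep2 hyc.le
  have hSx := shift_sum wp wm v r p P' x W hWx ε hxjW hxiW hxc hMGx hMGpx
  have hSy := shift_sum wp wm v r p P' y W hWy (-ε) hyiW hyjW hyc hMGy hMGpy
  have hSxneg : ∑ w ∈ W, (vterm wp wm v r P' x w - vterm wp wm v r p x w) < 0 := by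
    rw [hSx]
    have hne : (W.filter fun w => x j0 < w ∧ w ≤ x i0).Nonempty :=
      ⟨x i0, Finset.mem_filter.mpr ⟨hxiW, hxc, le_refl _⟩⟩
    have hlt : ∀ w ∈ W.filter (fun w => x j0 < w ∧ w ≤ x i0),
        ((phiF wp wm v r (mg p x w - ε) w - phiF wp wm v r (mg p x w) w)
          - (phiF wp wm v r (mg p x w - ε) (predW W (x j0) w)
              - phiF wp wm v r (mg p x w) (predW W (x j0) w))) < 0 := by
      intro w hw
      rw [Finset.mem_filter] at hw
      obtain ⟨_, hpredlt, _, _⟩ := predW_spec W hxjW hw.2.1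
      have hb1 : mg p x w - ε = mg P' x w := by rw [hMGx w, if_pos hw.2]
      have hge : 0 ≤ mg p x w - ε := by rw [hb1]; exact mg_nonneg P' x w hP'0
      have hle1 : mg p x w ≤ 1 := mg_le_one p x w hp0 hp1
      have := psi_lt wp wm v r hwpm hwmm hv hvr hpredlt
        (show mg p x w - ε < mg p x w by linarith) hge hle1
      linarith
    calc ∑ w ∈ W.filter (fun w => x j0 < w ∧ w ≤ x i0),
          ((phiF wp wm v r (mg p x w - ε) w - phiF wp wm v r (mg p x w) w)
            - (phiF wp wm v r (mg p x w - ε) (predW W (x j0) w)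
                - phiF wp wm v r (mg p x w) (predW W (x j0) w)))
        < ∑ _w ∈ W.filter (fun w => x j0 < w ∧ w ≤ x i0), (0:ℝ) :=
          Finset.sum_lt_sum_of_nonempty hne hlt
      _ = 0 := Finset.sum_const_zero
  have hSypos : 0 < ∑ w ∈ W, (vterm wp wm v r P' y w - vterm wp wm v r p y w) := by
    rw [hSy]
    have hne : (W.filter fun w => y i0 < w ∧ w ≤ y j0).Nonempty :=
      ⟨y j0, Finset.mem_filter.mpr ⟨hyjW, hyc, le_refl _⟩⟩
    have hlt : ∀ w ∈ W.filter (fun w => y i0 < w ∧ w ≤ y j0),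
        (0:ℝ) < ((phiF wp wm v r (mg p y w - -ε) w - phiF wp wm v r (mg p y w) w)
          - (phiF wp wm v r (mg p y w - -ε) (predW W (y i0) w)
              - phiF wp wm v r (mg p y w) (predW W (y i0) w))) := by
      intro w hw
      rw [Finset.mem_filter] at hw
      obtain ⟨_, hpredlt, _, _⟩ := predW_spec W hyiW hw.2.1
      have hb1 : mg p y w - -ε = mg P' y w := by rw [hMGy w, if_pos hw.2]
      have hle1 : mg p y w - -ε ≤ 1 := by rw [hb1]; exact mg_le_one P' y w hP'0 hP'1
      have hge : 0 ≤ mg p y w := mg_nonneg p y w hp0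
      have := psi_lt wp wm v r hwpm hwmm hv hvr hpredlt
        (show mg p y w < mg p y w - -ε by linarith) hge hle1
      linarith
    calc (0:ℝ) = ∑ _w ∈ W.filter (fun w => y i0 < w ∧ w ≤ y j0), (0:ℝ) :=
          Finset.sum_const_zero.symm
      _ < _ := Finset.sum_lt_sum_of_nonempty hne hlt
  rw [Finset.sum_sub_distrib] at hSxneg hSypos
  linarith

lemma main_case2A (wp wm v : ℝ → ℝ) (r : ℝ)
    (hwpm : StrictMonoOn wp (Set.Icc 0 1)) (hwmm : StrictMonoOn wm (Set.Icc 0 1))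
    (hv : StrictMono v) (hvr : v r = 0)
    {t : ℕ} (p x y : Fin t → ℝ) (hp0 : ∀ u, 0 ≤ p u) (hp1 : ∑ u, p u = 1)
    (i0 j0 : Fin t) (hpi : 0 < p i0) (hpj : 0 < p j0)
    (hxj : x j0 < y j0) (hyji : y j0 ≤ y i0) (hyi : y i0 < x i0)
    (hclass : ∀ u, p u ≠ 0 → u = i0 ∨ u = j0 ∨ (x i0 ≤ x u ∧ y i0 ≤ y u) ∨
      (x u ≤ x j0 ∧ y u ≤ y j0) ∨
      (x u = y u ∧ x j0 < x u ∧ x u < x i0 ∧ y j0 ≤ y u ∧ y u ≤ y i0))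
    (a b : Equiv.Perm (Fin t))
    (hax : Antitone fun k => x (a k)) (hby : Antitone fun k => y (b k))
    (ε : ℝ) (hε : 0 < ε) (P' : Fin t → ℝ)
    (hrep : ∀ u, P' u = p u + ε * ((if u = j0 then (1:ℝ) else 0) - (if u = i0 then 1 else 0)))
    (hP'0 : ∀ u, 0 ≤ P' u) (hP'1 : ∑ u, P' u = 1) :
    cptVal wp wm v r P' x a - cptVal wp wm v r P' y b
      < cptVal wp wm v r p x a - cptVal wp wm v r p y b := by
  classical
  have hxji : x j0 < x i0 := by linarith
  set W := ((Finset.univ.filter fun u => p u ≠ 0).image x)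
    ∪ ((Finset.univ.filter fun u => p u ≠ 0).image y) with hWdef
  have hWx : ∀ u, p u ≠ 0 → x u ∈ W := fun u hu => Finset.mem_union_left _
    (Finset.mem_image_of_mem x (Finset.mem_filter.mpr ⟨Finset.mem_univ u, hu⟩))
  have hWy : ∀ u, p u ≠ 0 → y u ∈ W := fun u hu => Finset.mem_union_right _
    (Finset.mem_image_of_mem y (Finset.mem_filter.mpr ⟨Finset.mem_univ u, hu⟩))
  have hsupp : ∀ u, P' u ≠ 0 → p u ≠ 0 := by
    intro u hu hc
    apply hu
    have hui : u ≠ i0 := by rintro rfl; exact (ne_of_gt hpi) hc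
    have huj : u ≠ j0 := by rintro rfl; exact (ne_of_gt hpj) hc
    rw [hrep u, hc, if_neg hui, if_neg huj]
    ring
  have hWx' : ∀ u, P' u ≠ 0 → x u ∈ W := fun u hu => hWx u (hsupp u hu)
  have hWy' : ∀ u, P' u ≠ 0 → y u ∈ W := fun u hu => hWy u (hsupp u hu)
  have hxiW : x i0 ∈ W := hWx i0 (ne_of_gt hpi)
  have hxjW : x j0 ∈ W := hWx j0 (ne_of_gt hpj)
  have hyiW : y i0 ∈ W := hWy i0 (ne_of_gt hpi)
  have hyjW : y j0 ∈ W := hWy j0 (ne_of_gt hpj)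
  rw [canon wp wm v r P' x a hax W hWx' hP'1, canon wp wm v r p x a hax W hWx hp1,
      canon wp wm v r P' y b hby W hWy' hP'1, canon wp wm v r p y b hby W hWy hp1]
  have hMGx := mg_shift p x i0 j0 ε P' hrep hxji.le
  have hMGpx := mgp_shift p x i0 j0 ε P' hrep hxji.le
  have hMGy := mg_shift p y i0 j0 ε P' hrep hyji
  have hMGpy := mgp_shift p y i0 j0 ε P' hrep hyji
  have hid := case2_identity wp wm v r p P' x y i0 j0 ε W hxiW hxjW hyiW hyjW
    hxj hyji hyi hclass hMGx hMGpx hMGy hMGpy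
  have hA1le : mg p x (x i0) ≤ 1 := mg_le_one p x (x i0) hp0 hp1
  have hA1ge : 0 ≤ mg p x (x i0) - ε := by
    have : mg p x (x i0) - ε = mg P' x (x i0) := by
      rw [hMGx (x i0), if_pos ⟨hxji, le_refl _⟩]
    rw [this]; exact mg_nonneg P' x (x i0) hP'0
  have h1 := psi_lt wp wm v r hwpm hwmm hv hvr hyi
    (show mg p x (x i0) - ε < mg p x (x i0) by linarith) hA1ge hA1le
  have hB1le : mgp p x (x j0) ≤ 1 := mgp_le_one p x (x j0) hp0 hp1
  have hB1ge : 0 ≤ mgp p x (x j0) - ε := by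
    have : mgp p x (x j0) - ε = mgp P' x (x j0) := by
      rw [hMGpx (x j0), if_pos ⟨le_refl _, hxji⟩]
    rw [this]; exact mgp_nonneg P' x (x j0) hP'0
  have h2 := psi_lt wp wm v r hwpm hwmm hv hvr hxj
    (show mgp p x (x j0) - ε < mgp p x (x j0) by linarith) hB1ge hB1le
  have hkey : ∑ w ∈ W, ((vterm wp wm v r P' x w - vterm wp wm v r p x w)
      - (vterm wp wm v r P' y w - vterm wp wm v r p y w)) < 0 := by
    rw [hid]; linarith
  rw [Finset.sum_sub_distrib, Finset.sum_sub_distrib, Finset.sum_sub_distrib] at hkey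
  linarith

lemma main_case2M (wp wm v : ℝ → ℝ) (r : ℝ)
    (hwpm : StrictMonoOn wp (Set.Icc 0 1)) (hwmm : StrictMonoOn wm (Set.Icc 0 1))
    (hv : StrictMono v) (hvr : v r = 0)
    {t : ℕ} (p x y : Fin t → ℝ) (hp0 : ∀ u, 0 ≤ p u) (hp1 : ∑ u, p u = 1)
    (i0 j0 : Fin t) (hpi : 0 < p i0) (hpj : 0 < p j0)
    (hyj : y j0 < x j0) (hxji : x j0 ≤ x i0) (hxi : x i0 < y i0)
    (hclass : ∀ u, p u ≠ 0 → u = i0 ∨ u = j0 ∨ (y i0 ≤ y u ∧ x i0 ≤ x u) ∨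
      (y u ≤ y j0 ∧ x u ≤ x j0) ∨
      (y u = x u ∧ y j0 < y u ∧ y u < y i0 ∧ x j0 ≤ x u ∧ x u ≤ x i0))
    (a b : Equiv.Perm (Fin t))
    (hax : Antitone fun k => x (a k)) (hby : Antitone fun k => y (b k))
    (ε : ℝ) (hε : 0 < ε) (P' : Fin t → ℝ)
    (hrep : ∀ u, P' u = p u + ε * ((if u = i0 then (1:ℝ) else 0) - (if u = j0 then 1 else 0)))
    (hP'0 : ∀ u, 0 ≤ P' u) (hP'1 : ∑ u, P' u = 1) :
    cptVal wp wm v r P' x a - cptVal wp wm v r P' y b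
      < cptVal wp wm v r p x a - cptVal wp wm v r p y b := by
  classical
  have hyji : y j0 < y i0 := by linarith
  set W := ((Finset.univ.filter fun u => p u ≠ 0).image x)
    ∪ ((Finset.univ.filter fun u => p u ≠ 0).image y) with hWdef
  have hWx : ∀ u, p u ≠ 0 → x u ∈ W := fun u hu => Finset.mem_union_left _
    (Finset.mem_image_of_mem x (Finset.mem_filter.mpr ⟨Finset.mem_univ u, hu⟩))
  have hWy : ∀ u, p u ≠ 0 → y u ∈ W := fun u hu => Finset.mem_union_right _
    (Finset.mem_image_of_mem y (Finset.mem_filter.mpr ⟨Finset.mem_univ u, hu⟩))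
  have hsupp : ∀ u, P' u ≠ 0 → p u ≠ 0 := by
    intro u hu hc
    apply hu
    have hui : u ≠ i0 := by rintro rfl; exact (ne_of_gt hpi) hc
    have huj : u ≠ j0 := by rintro rfl; exact (ne_of_gt hpj) hc
    rw [hrep u, hc, if_neg hui, if_neg huj]
    ring
  have hWx' : ∀ u, P' u ≠ 0 → x u ∈ W := fun u hu => hWx u (hsupp u hu)
  have hWy' : ∀ u, P' u ≠ 0 → y u ∈ W := fun u hu => hWy u (hsupp u hu)
  have hxiW : x i0 ∈ W := hWx i0 (ne_of_gt hpi)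
  have hxjW : x j0 ∈ W := hWx j0 (ne_of_gt hpj)
  have hyiW : y i0 ∈ W := hWy i0 (ne_of_gt hpi)
  have hyjW : y j0 ∈ W := hWy j0 (ne_of_gt hpj)
  rw [canon wp wm v r P' x a hax W hWx' hP'1, canon wp wm v r p x a hax W hWx hp1,
      canon wp wm v r P' y b hby W hWy' hP'1, canon wp wm v r p y b hby W hWy hp1]
  have hrep2 : ∀ u, P' u = p u + (-ε) * ((if u = j0 then (1:ℝ) else 0) - (if u = i0 then 1 else 0)) := by
    intro u; rw [hrep u]; ring
  have hMGx := mg_shift p x i0 j0 (-ε) P' hrep2 hxji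
  have hMGpx := mgp_shift p x i0 j0 (-ε) P' hrep2 hxji
  have hMGy := mg_shift p y i0 j0 (-ε) P' hrep2 hyji.le
  have hMGpy := mgp_shift p y i0 j0 (-ε) P' hrep2 hyji.le
  have hid := case2_identity wp wm v r p P' y x i0 j0 (-ε) W hyiW hyjW hxiW hxjW
    hyj hxji hxi hclass hMGy hMGpy hMGx hMGpx
  have hA2ge : 0 ≤ mg p y (y i0) := mg_nonneg p y (y i0) hp0
  have hA2le : mg p y (y i0) - -ε ≤ 1 := by
    have : mg p y (y i0) - -ε = mg P' y (y i0) := by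
      rw [hMGy (y i0), if_pos ⟨hyji, le_refl _⟩]
    rw [this]; exact mg_le_one P' y (y i0) hP'0 hP'1
  have h1 := psi_lt wp wm v r hwpm hwmm hv hvr hxi
    (show mg p y (y i0) < mg p y (y i0) - -ε by linarith) hA2ge hA2le
  have hB2ge : 0 ≤ mgp p y (y j0) := mgp_nonneg p y (y j0) hp0
  have hB2le : mgp p y (y j0) - -ε ≤ 1 := by
    have : mgp p y (y j0) - -ε = mgp P' y (y j0) := by
      rw [hMGpy (y j0), if_pos ⟨le_refl _, hyji⟩]
    rw [this]; exact mgp_le_one P' y (y j0) hP'0 hP'1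
  have h2 := psi_lt wp wm v r hwpm hwmm hv hvr hyj
    (show mgp p y (y j0) < mgp p y (y j0) - -ε by linarith) hB2ge hB2le
  have hkey : 0 < ∑ w ∈ W, ((vterm wp wm v r P' y w - vterm wp wm v r p y w)
      - (vterm wp wm v r P' x w - vterm wp wm v r p x w)) := by
    rw [hid]; linarith
  rw [Finset.sum_sub_distrib, Finset.sum_sub_distrib, Finset.sum_sub_distrib] at hkey
  linarith

end RDD

/-- regret-decreasing direction lemma: if the prospects `(p,x)` and
`(p,y)` are not similarly ranked, or neither pointwise dominates the other, then
there is a direction `δ`, supported on the support of `p` and with coordinates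
summing to `0`, such that moving from `p` in the direction `δ` strictly decreases
the regret `R^r(·,x,y) = V^r(·,x) − V^r(·,y)`, simultaneously for every reference
point `r` (with the value function family `v r`). -/
theorem regret_decreasing_direction {t : ℕ} (wp wm : ℝ → ℝ) (v : ℝ → ℝ → ℝ)
    (hwpc : ContinuousOn wp (Set.Icc 0 1)) (hwmc : ContinuousOn wm (Set.Icc 0 1))
    (hwpm : StrictMonoOn wp (Set.Icc 0 1)) (hwmm : StrictMonoOn wm (Set.Icc 0 1))
    (hwp0 : wp 0 = 0) (hwp1 : wp 1 = 1) (hwm0 : wm 0 = 0) (hwm1 : wm 1 = 1)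
    (hv : ∀ r, StrictMono (v r)) (hvc : ∀ r, Continuous (v r)) (hvr : ∀ r, v r r = 0)
    (p x y : Fin t → ℝ) (hp : IsProbVec p)
    (h : ¬ SimilarlyRanked p x y ∨
      (¬ PointwiseDominates p x y ∧ ¬ PointwiseDominates p y x)) :
    ∃ δ : Fin t → ℝ, (∑ j, δ j = 0) ∧ (∀ j, p j = 0 → δ j = 0) ∧
      ∀ (r : ℝ) (a b : Equiv.Perm (Fin t)),
        Antitone (fun j => x (a j)) → Antitone (fun j => y (b j)) →
        ∀ ε : ℝ, 0 < ε → IsProbVec (fun j => p j + ε * δ j) →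
          cptVal wp wm (v r) r (fun j => p j + ε * δ j) x a
              - cptVal wp wm (v r) r (fun j => p j + ε * δ j) y b
            < cptVal wp wm (v r) r p x a - cptVal wp wm (v r) r p y b := by
  classical
  obtain ⟨hp0, hp1⟩ := hp
  by_cases hSR : SimilarlyRanked p x y
  · have hd : ¬ PointwiseDominates p x y ∧ ¬ PointwiseDominates p y x := by
      rcases h with h1 | h2
      · exact absurd hSR h1
      · exact h2
    obtain ⟨hd1, hd2⟩ := hd
    rw [PointwiseDominates] at hd1 hd2
    push_neg at hd1 hd2
    obtain ⟨u1, hu1, hxy1⟩ := hd1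
    obtain ⟨u2, hu2, hxy2⟩ := hd2
    obtain ⟨σ, hσ⟩ := hSR
    obtain ⟨i0, j0, hpi, hpj, hprod, hxji, hyji, hcl⟩ :=
      RDD.extract_adjacent p x y σ hσ hu1 hxy1 hu2 hxy2
    rcases lt_trichotomy (x i0 - y i0) 0 with hdi | hdi | hdi
    · -- mirrored configuration : x i0 < y i0 and y j0 < x j0
      have hdj : 0 < x j0 - y j0 := by
        by_contra hc
        push_neg at hc
        nlinarith
      refine ⟨(fun u => (if u = i0 then (1:ℝ) else 0) - (if u = j0 then 1 else 0)), ?_, ?_, ?_⟩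
      · rw [Finset.sum_sub_distrib,
          Finset.sum_ite_eq' Finset.univ i0 (fun _ => (1:ℝ)),
          Finset.sum_ite_eq' Finset.univ j0 (fun _ => (1:ℝ))]
        simp
      · intro u hu
        have hui : u ≠ i0 := by rintro rfl; exact (ne_of_gt hpi) hu
        have huj : u ≠ j0 := by rintro rfl; exact (ne_of_gt hpj) hu
        show (if u = i0 then (1:ℝ) else 0) - (if u = j0 then 1 else 0) = 0
        rw [if_neg hui, if_neg huj]; ring
      · intro r a b hax hby ε hε hPV
        have hclass : ∀ u, p u ≠ 0 → u = i0 ∨ u = j0 ∨ (y i0 ≤ y u ∧ x i0 ≤ x u) ∨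
            (y u ≤ y j0 ∧ x u ≤ x j0) ∨
            (y u = x u ∧ y j0 < y u ∧ y u < y i0 ∧ x j0 ≤ x u ∧ x u ≤ x i0) := by
          intro u hu
          have hu' : 0 < p u := lt_of_le_of_ne (hp0 u) (Ne.symm hu)
          by_cases h1 : u = i0
          · exact Or.inl h1
          by_cases h2 : u = j0
          · exact Or.inr (Or.inl h2)
          rcases hcl u hu' h1 h2 with hA | hB | hM
          · exact Or.inr (Or.inr (Or.inl ⟨hA.2, hA.1⟩))
          · exact Or.inr (Or.inr (Or.inr (Or.inl ⟨hB.2, hB.1⟩)))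
          · obtain ⟨he, hxl, hxr, hyl, hyr⟩ := hM
            refine Or.inr (Or.inr (Or.inr (Or.inr ⟨he.symm, ?_, ?_, hxl, hxr⟩)))
            · rcases lt_or_eq_of_le hyl with hlt | heq
              · exact hlt
              · exfalso; linarith
            · rcases lt_or_eq_of_le hyr with hlt | heq
              · exact hlt
              · exfalso; linarith
        exact RDD.main_case2M wp wm (v r) r hwpm hwmm (hv r) (hvr r) p x y hp0 hp1
          i0 j0 hpi hpj (by linarith) hxji (by linarith) hclass a b hax hby ε hε
          (fun u => p u + ε * ((if u = i0 then (1:ℝ) else 0) - (if u = j0 then 1 else 0)))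
          (fun u => rfl) hPV.1 hPV.2
    · exfalso
      rw [hdi, zero_mul] at hprod
      exact absurd hprod (lt_irrefl 0)
    · -- configuration A : x i0 > y i0 and x j0 < y j0
      have hdj : x j0 - y j0 < 0 := by
        by_contra hc
        push_neg at hc
        nlinarith
      refine ⟨(fun u => (if u = j0 then (1:ℝ) else 0) - (if u = i0 then 1 else 0)), ?_, ?_, ?_⟩
      · rw [Finset.sum_sub_distrib,
          Finset.sum_ite_eq' Finset.univ j0 (fun _ => (1:ℝ)),
          Finset.sum_ite_eq' Finset.univ i0 (fun _ => (1:ℝ))]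
        simp
      · intro u hu
        have hui : u ≠ i0 := by rintro rfl; exact (ne_of_gt hpi) hu
        have huj : u ≠ j0 := by rintro rfl; exact (ne_of_gt hpj) hu
        show (if u = j0 then (1:ℝ) else 0) - (if u = i0 then 1 else 0) = 0
        rw [if_neg hui, if_neg huj]; ring
      · intro r a b hax hby ε hε hPV
        have hclass : ∀ u, p u ≠ 0 → u = i0 ∨ u = j0 ∨ (x i0 ≤ x u ∧ y i0 ≤ y u) ∨
            (x u ≤ x j0 ∧ y u ≤ y j0) ∨
            (x u = y u ∧ x j0 < x u ∧ x u < x i0 ∧ y j0 ≤ y u ∧ y u ≤ y i0) := by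
          intro u hu
          have hu' : 0 < p u := lt_of_le_of_ne (hp0 u) (Ne.symm hu)
          by_cases h1 : u = i0
          · exact Or.inl h1
          by_cases h2 : u = j0
          · exact Or.inr (Or.inl h2)
          rcases hcl u hu' h1 h2 with hA | hB | hM
          · exact Or.inr (Or.inr (Or.inl hA))
          · exact Or.inr (Or.inr (Or.inr (Or.inl hB)))
          · obtain ⟨he, hxl, hxr, hyl, hyr⟩ := hM
            refine Or.inr (Or.inr (Or.inr (Or.inr ⟨he, ?_, ?_, hyl, hyr⟩)))
            · rcases lt_or_eq_of_le hxl with hlt | heq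
              · exact hlt
              · exfalso; linarith
            · rcases lt_or_eq_of_le hxr with hlt | heq
              · exact hlt
              · exfalso; linarith
        exact RDD.main_case2A wp wm (v r) r hwpm hwmm (hv r) (hvr r) p x y hp0 hp1
          i0 j0 hpi hpj (by linarith) hyji (by linarith) hclass a b hax hby ε hε
          (fun u => p u + ε * ((if u = j0 then (1:ℝ) else 0) - (if u = i0 then 1 else 0)))
          (fun u => rfl) hPV.1 hPV.2
  · obtain ⟨i0, j0, hpi, hpj, hxc, hyc⟩ := RDD.extract_cross p x y hSR
    refine ⟨(fun u => (if u = j0 then (1:ℝ) else 0) - (if u = i0 then 1 else 0)), ?_, ?_, ?_⟩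
    · rw [Finset.sum_sub_distrib,
        Finset.sum_ite_eq' Finset.univ j0 (fun _ => (1:ℝ)),
        Finset.sum_ite_eq' Finset.univ i0 (fun _ => (1:ℝ))]
      simp
    · intro u hu
      have hui : u ≠ i0 := by rintro rfl; exact (ne_of_gt hpi) hu
      have huj : u ≠ j0 := by rintro rfl; exact (ne_of_gt hpj) hu
      show (if u = j0 then (1:ℝ) else 0) - (if u = i0 then 1 else 0) = 0
      rw [if_neg hui, if_neg huj]; ring
    · intro r a b hax hby ε hε hPV
      exact RDD.main_case1 wp wm (v r) r hwpm hwmm (hv r) (hvr r) p x y hp0 hp1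
        i0 j0 hpi hpj hxc hyc a b hax hby ε hε
        (fun u => p u + ε * ((if u = j0 then (1:ℝ) else 0) - (if u = i0 then 1 else 0)))
        (fun u => rfl) hPV.1 hPV.2
end

section
/- For any 2×2 game in which each player i ∈ {1,2} has a fixed reference point r_i ∈ ℝ (independent of the joint distribution μ), the set C_CPT of CPT correlated equilibria is a convex polytope: it equals the intersection of the simplex Δ³ ⊂ ℝ⁴ with finitely many closed half-spaces of ℝ⁴. In particular, C_CPT is convex. -/
/-- The CPT value `V^r(p,z)`, computed with a canonical permutation ordering `z`
decreasingly (the value is independent of the choice of such a permutation). -/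
noncomputable def CPT {t : ℕ} (wp wm v : ℝ → ℝ) (r : ℝ) (p z : Fin t → ℝ) : ℝ :=
  cptVal wp wm v r p z (Tuple.sort (fun j => -z j))

/-- The set of CPT correlated equilibria of the 2×2 game with payoffs `A` for
player 1 (the row player) and `B` for player 2 (the column player), where each
player `i` has fixed reference point `rᵢ`, value function `vᵢ`, and probability
weighting functions `wpᵢ, wmᵢ`: joint distributions `μ` on `Fin 2 × Fin 2` such
that, conditional on each recommendation played with positive probability, the
recommended strategy has CPT value at least that of any deviation. -/
noncomputable def CCPT2 (A B : Fin 2 × Fin 2 → ℝ) (wp1 wm1 wp2 wm2 v1 v2 : ℝ → ℝ)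
    (r1 r2 : ℝ) : Set (Fin 2 × Fin 2 → ℝ) :=
  {μ | ((∀ q, 0 ≤ μ q) ∧ ∑ q, μ q = 1) ∧
    (∀ j j' : Fin 2, 0 < ∑ k, μ (j, k) →
      CPT wp1 wm1 v1 r1 (fun k => μ (j, k) / ∑ k', μ (j, k')) (fun k => A (j', k))
        ≤ CPT wp1 wm1 v1 r1 (fun k => μ (j, k) / ∑ k', μ (j, k')) (fun k => A (j, k))) ∧
    (∀ k k' : Fin 2, 0 < ∑ j, μ (j, k) →
      CPT wp2 wm2 v2 r2 (fun j => μ (j, k) / ∑ j', μ (j', k)) (fun j => B (j, k'))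
        ≤ CPT wp2 wm2 v2 r2 (fun j => μ (j, k) / ∑ j', μ (j', k)) (fun j => B (j, k)))}

/-!
Conditionally on a recommendation, a player faces a two-outcome prospect: with probability `u`
the opponent was told to play their first strategy. Once the two outcomes of a strategy are
ordered, its CPT value is `a wp u + b wm (1 - u) + c` with `a ≥ 0 ≥ b` (or the same expression
in `1 - u`), where `a, b, c` depend only on the payoffs and the fixed reference point. The set of
`u ∈ [0, 1]` at which following the recommendation is at least as good as deviating is therefore
closed, and a sign analysis of the difference of two such expressions shows that it is an
interval `[α, β]`. With `u = μ(j,0) / (μ(j,0) + μ(j,1))` this is the pair of linear inequalities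
`α (μ(j,0) + μ(j,1)) ≤ μ(j,0) ≤ β (μ(j,0) + μ(j,1))`, which also hold trivially when the
recommendation has probability zero.
-/

open Set

structure IsProbWeighting (w : ℝ → ℝ) : Prop where
  continuousOn : ContinuousOn w (Icc 0 1)
  strictMonoOn : StrictMonoOn w (Icc 0 1)
  map_zero : w 0 = 0
  map_one : w 1 = 1

namespace IsProbWeighting

variable {w w' : ℝ → ℝ}

lemma nonneg (hw : IsProbWeighting w) {u : ℝ} (hu : u ∈ Icc (0 : ℝ) 1) : 0 ≤ w u :=
  hw.map_zero ▸ hw.strictMonoOn.monotoneOn (left_mem_Icc.2 zero_le_one) hu hu.1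

lemma pos (hw : IsProbWeighting w) {u : ℝ} (hu : u ∈ Icc (0 : ℝ) 1) (hu₀ : 0 < u) :
    0 < w u :=
  hw.map_zero ▸ hw.strictMonoOn (left_mem_Icc.2 zero_le_one) hu hu₀

lemma pos_or_pos_one_sub (hw : IsProbWeighting w) (hw' : IsProbWeighting w') {u : ℝ}
    (hu : u ∈ Icc (0 : ℝ) 1) : 0 < w u ∨ 0 < w' (1 - u) := by
  rcases hu.1.eq_or_lt with rfl | hu₀
  · exact Or.inr (hw'.pos (Icc.one_sub_mem hu) (by norm_num))
  · exact Or.inl (hw.pos hu hu₀)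

lemma antitoneOn_one_sub (hw : IsProbWeighting w) :
    AntitoneOn (fun u => w (1 - u)) (Icc 0 1) := fun _ hx _ hy hxy =>
  hw.strictMonoOn.monotoneOn (Icc.one_sub_mem hy) (Icc.one_sub_mem hx) (sub_le_sub_left hxy 1)

end IsProbWeighting

lemma convex_setOf_nonneg_monotone_add_antitone {s : Set ℝ} (hs : Convex ℝ s)
    {P Q : ℝ → ℝ} (hP : MonotoneOn P s) (hQ : AntitoneOn Q s) (hP₀ : ∀ u ∈ s, 0 ≤ P u)
    (hQ₀ : ∀ u ∈ s, 0 ≤ Q u) (hPQ : ∀ u ∈ s, 0 < P u ∨ 0 < Q u) {α β c : ℝ}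
    (hpos : 0 < α → 0 < β → 0 ≤ c) (hneg : α < 0 → β < 0 → c ≤ 0) :
    Convex ℝ {u ∈ s | 0 ≤ α * P u + β * Q u + c} := by
  by_cases hmono : 0 ≤ α ∧ β ≤ 0
  · refine MonotoneOn.convex_ge (fun x hx y hy hxy => ?_) hs 0
    have := mul_le_mul_of_nonneg_left (hP hx hy hxy) hmono.1
    have := mul_le_mul_of_nonpos_left (hQ hx hy hxy) hmono.2
    linarith
  by_cases hanti : α ≤ 0 ∧ 0 ≤ β
  · refine AntitoneOn.convex_ge (fun x hx y hy hxy => ?_) hs 0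
    have := mul_le_mul_of_nonpos_left (hP hx hy hxy) hanti.1
    have := mul_le_mul_of_nonneg_left (hQ hx hy hxy) hanti.2
    linarith
  -- otherwise `α` and `β` are nonzero of the same sign, and the function has constant sign
  rcases lt_or_gt_of_ne (show α ≠ 0 by grind) with hα | hα
  · have hβ : β < 0 := by grind
    convert convex_empty (𝕜 := ℝ)
    refine eq_empty_of_forall_notMem fun u ⟨hu, hfu⟩ => ?_
    have := mul_nonpos_of_nonpos_of_nonneg hα.le (hP₀ u hu)
    have := mul_nonpos_of_nonpos_of_nonneg hβ.le (hQ₀ u hu)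
    rcases hPQ u hu with h | h
    · linarith [mul_neg_of_neg_of_pos hα h, hneg hα hβ]
    · linarith [mul_neg_of_neg_of_pos hβ h, hneg hα hβ]
  · have hβ : 0 < β := by grind
    convert hs using 1
    refine sep_eq_self_iff_mem_true.2 fun u hu => ?_
    have := mul_nonneg hα.le (hP₀ u hu)
    have := mul_nonneg hβ.le (hQ₀ u hu)
    linarith [hpos hα hβ]

lemma Convex.exists_eq_Icc_of_isCompact {s : Set ℝ} (hs : Convex ℝ s) (hc : IsCompact s) :
    ∃ a b, s = Icc a b := by
  rcases s.eq_empty_or_nonempty with rfl | hne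
  · exact ⟨1, 0, (Icc_eq_empty (by norm_num)).symm⟩
  · exact ⟨_, _, eq_Icc_of_connected_compact ⟨hne, hs.isPreconnected⟩ hc⟩

noncomputable section BinaryProspect

def gainCoeff (g l : ℝ) : ℝ := if 0 ≤ l then g - l else if 0 ≤ g then g else 0

def lossCoeff (g l : ℝ) : ℝ := if 0 ≤ l then 0 else if 0 ≤ g then l else l - g

def constCoeff (g l : ℝ) : ℝ := if 0 ≤ l then l else if 0 ≤ g then 0 else g

/-- The CPT value of a prospect with outcome values `l ≤ g`, the better one with probability `u`:
`l + (g - l) wp u` for two gains, `g wp u + l wm (1 - u)` for a gain and a loss, and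
`g + (l - g) wm (1 - u)` for two losses. -/
def binaryCPT (wp wm : ℝ → ℝ) (g l u : ℝ) : ℝ :=
  gainCoeff g l * wp u + lossCoeff g l * wm (1 - u) + constCoeff g l

variable {g l g' l' : ℝ}

lemma gainCoeff_nonneg (h : l ≤ g) : 0 ≤ gainCoeff g l := by
  unfold gainCoeff; split_ifs <;> linarith

lemma lossCoeff_nonpos (h : l ≤ g) : lossCoeff g l ≤ 0 := by
  unfold lossCoeff; split_ifs <;> linarith

lemma constCoeff_le_of_coeffs_lt (h' : l' ≤ g')
    (hgain : gainCoeff g' l' < gainCoeff g l) (hloss : lossCoeff g' l' < lossCoeff g l) :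
    constCoeff g' l' ≤ constCoeff g l := by
  unfold gainCoeff lossCoeff constCoeff at *
  split_ifs at * <;> linarith

variable {wp wm : ℝ → ℝ}

lemma binaryCPT_sub (u : ℝ) : binaryCPT wp wm g l u - binaryCPT wp wm g' l' u =
    (gainCoeff g l - gainCoeff g' l') * wp u + (lossCoeff g l - lossCoeff g' l') * wm (1 - u)
      + (constCoeff g l - constCoeff g' l') := by
  unfold binaryCPT; ring

lemma monotoneOn_binaryCPT (hwp : IsProbWeighting wp) (hwm : IsProbWeighting wm) (h : l ≤ g) :
    MonotoneOn (binaryCPT wp wm g l) (Icc 0 1) := by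
  intro x hx y hy hxy
  have := mul_le_mul_of_nonneg_left (hwp.strictMonoOn.monotoneOn hx hy hxy) (gainCoeff_nonneg h)
  have := mul_le_mul_of_nonpos_left (hwm.antitoneOn_one_sub hx hy hxy) (lossCoeff_nonpos h)
  unfold binaryCPT
  linarith

lemma continuousOn_binaryCPT (hwp : IsProbWeighting wp) (hwm : IsProbWeighting wm) :
    ContinuousOn (binaryCPT wp wm g l) (Icc 0 1) := by
  have : ContinuousOn (fun u => wm (1 - u)) (Icc 0 1) :=
    hwm.continuousOn.comp (by fun_prop) fun _ => Icc.one_sub_mem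
  exact ((continuousOn_const.mul hwp.continuousOn).add (continuousOn_const.mul this)).add
    continuousOn_const

end BinaryProspect

section PairProspect

variable {wp wm v : ℝ → ℝ} {r : ℝ}

lemma cptVal_refl_of_le (hwp : IsProbWeighting wp) (hwm : IsProbWeighting wm)
    (hv : StrictMono v) (hvr : v r = 0) {p z : Fin 2 → ℝ} (hp : p 0 + p 1 = 1)
    (hz : z 1 ≤ z 0) :
    cptVal wp wm v r p z (Equiv.refl _) = binaryCPT wp wm (v (z 0)) (v (z 1)) (p 0) := by
  have hr : ∀ x, r ≤ x ↔ 0 ≤ v x := fun x => hvr ▸ hv.le_iff_le.symm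
  have hp1 : p 1 = 1 - p 0 := by linarith
  have hvz : v (z 1) ≤ v (z 0) := hv.monotone hz
  have h₀ : Finset.Iic (0 : Fin 2) = {0} := by decide
  have h₁ : Finset.Iio (0 : Fin 2) = ∅ := by decide
  have h₂ : Finset.Ici (0 : Fin 2) = Finset.univ := by decide
  have h₃ : Finset.Ioi (0 : Fin 2) = {1} := by decide
  have h₄ : Finset.Iic (1 : Fin 2) = Finset.univ := by decide
  have h₅ : Finset.Iio (1 : Fin 2) = {0} := by decide
  have h₆ : Finset.Ici (1 : Fin 2) = {1} := by decide
  have h₇ : Finset.Ioi (1 : Fin 2) = ∅ := by decide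
  simp only [cptVal, Fin.sum_univ_two, Equiv.refl_apply, h₀, h₁, h₂, h₃, h₄, h₅, h₆, h₇,
    Finset.sum_singleton, Finset.sum_empty, hp, hr, hwp.map_zero, hwp.map_one, hwm.map_zero,
    hwm.map_one, binaryCPT, gainCoeff, lossCoeff, constCoeff]
  rw [hp1]
  split_ifs <;> linarith

lemma CPT_pair_of_le (hwp : IsProbWeighting wp) (hwm : IsProbWeighting wm)
    (hv : StrictMono v) (hvr : v r = 0) {z : Fin 2 → ℝ} (hz : z 1 ≤ z 0) (u : ℝ) :
    CPT wp wm v r ![u, 1 - u] z = binaryCPT wp wm (v (z 0)) (v (z 1)) u := by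
  have hsort : Tuple.sort (fun j => -z j) = Equiv.refl _ :=
    Tuple.sort_eq_refl_iff_monotone.2 (by simpa [Fin.monotone_iff_le_succ] using hz)
  rw [CPT, hsort, cptVal_refl_of_le hwp hwm hv hvr (by simp) hz]
  rfl

lemma CPT_pair_of_lt (hwp : IsProbWeighting wp) (hwm : IsProbWeighting wm)
    (hv : StrictMono v) (hvr : v r = 0) {z : Fin 2 → ℝ} (hz : z 0 < z 1) (u : ℝ) :
    CPT wp wm v r ![u, 1 - u] z = binaryCPT wp wm (v (z 1)) (v (z 0)) (1 - u) := by
  have hsort : Tuple.sort (fun j => -z j) = Equiv.swap 0 1 := by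
    have hne : Tuple.sort (fun j => -z j) ≠ Equiv.refl _ := fun h => hz.not_ge <| by
      simpa [Fin.monotone_iff_le_succ] using Tuple.sort_eq_refl_iff_monotone.1 h
    revert hne
    generalize Tuple.sort (fun j => -z j) = σ
    revert σ
    decide
  have hswap : cptVal wp wm v r ![u, 1 - u] z (Equiv.swap 0 1) = cptVal wp wm v r
      (![u, 1 - u] ∘ Equiv.swap 0 1) (z ∘ Equiv.swap 0 1) (Equiv.refl _) := rfl
  rw [CPT, hsort, hswap, cptVal_refl_of_le hwp hwm hv hvr (by simp) (by simpa using hz.le)]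
  rfl

lemma continuousOn_CPT_pair (hwp : IsProbWeighting wp) (hwm : IsProbWeighting wm)
    (hv : StrictMono v) (hvr : v r = 0) (z : Fin 2 → ℝ) :
    ContinuousOn (fun u => CPT wp wm v r ![u, 1 - u] z) (Icc 0 1) := by
  rcases le_or_gt (z 1) (z 0) with hz | hz
  · simp only [CPT_pair_of_le hwp hwm hv hvr hz]
    exact continuousOn_binaryCPT hwp hwm
  · simp only [CPT_pair_of_lt hwp hwm hv hvr hz]
    exact (continuousOn_binaryCPT hwp hwm).comp (by fun_prop) fun _ => Icc.one_sub_mem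

lemma monotoneOn_CPT_pair (hwp : IsProbWeighting wp) (hwm : IsProbWeighting wm)
    (hv : StrictMono v) (hvr : v r = 0) {z : Fin 2 → ℝ} (hz : z 1 ≤ z 0) :
    MonotoneOn (fun u => CPT wp wm v r ![u, 1 - u] z) (Icc 0 1) := by
  simp only [CPT_pair_of_le hwp hwm hv hvr hz]
  exact monotoneOn_binaryCPT hwp hwm (hv.monotone hz)

lemma antitoneOn_CPT_pair (hwp : IsProbWeighting wp) (hwm : IsProbWeighting wm)
    (hv : StrictMono v) (hvr : v r = 0) {z : Fin 2 → ℝ} (hz : z 0 < z 1) :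
    AntitoneOn (fun u => CPT wp wm v r ![u, 1 - u] z) (Icc 0 1) := by
  simp only [CPT_pair_of_lt hwp hwm hv hvr hz]
  intro x hx y hy hxy
  exact monotoneOn_binaryCPT hwp hwm (hv.monotone hz.le) (Icc.one_sub_mem hy)
    (Icc.one_sub_mem hx) (sub_le_sub_left hxy 1)

lemma convex_setOf_CPT_pair_le (hwp : IsProbWeighting wp) (hwm : IsProbWeighting wm)
    (hv : StrictMono v) (hvr : v r = 0) (zr zd : Fin 2 → ℝ) :
    Convex ℝ {u ∈ Icc (0 : ℝ) 1 |
      CPT wp wm v r ![u, 1 - u] zd ≤ CPT wp wm v r ![u, 1 - u] zr} := by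
  rcases le_or_gt (zr 1) (zr 0) with hr | hr <;> rcases le_or_gt (zd 1) (zd 0) with hd | hd
  · convert convex_setOf_nonneg_monotone_add_antitone (convex_Icc 0 1)
      hwp.strictMonoOn.monotoneOn hwm.antitoneOn_one_sub (fun _ => hwp.nonneg)
      (fun _ hu => hwm.nonneg (Icc.one_sub_mem hu)) (fun _ => hwp.pos_or_pos_one_sub hwm)
      (fun ha hb => sub_nonneg.2 <|
        constCoeff_le_of_coeffs_lt (hv.monotone hd) (sub_pos.1 ha) (sub_pos.1 hb))
      (fun ha hb => sub_nonpos.2 <|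
        constCoeff_le_of_coeffs_lt (hv.monotone hr) (sub_neg.1 ha) (sub_neg.1 hb))
      using 1
    ext u
    simp only [mem_sep_iff, CPT_pair_of_le hwp hwm hv hvr hr, CPT_pair_of_le hwp hwm hv hvr hd,
      ← sub_nonneg (b := binaryCPT _ _ _ _ _), binaryCPT_sub]
  · have := ((monotoneOn_CPT_pair hwp hwm hv hvr hr).add
      (antitoneOn_CPT_pair hwp hwm hv hvr hd).neg).convex_ge (𝕜 := ℝ) (convex_Icc 0 1) 0
    simpa only [Pi.add_apply, Pi.neg_apply, ← sub_eq_add_neg, sub_nonneg] using this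
  · have := ((antitoneOn_CPT_pair hwp hwm hv hvr hr).add
      (monotoneOn_CPT_pair hwp hwm hv hvr hd).neg).convex_ge (𝕜 := ℝ) (convex_Icc 0 1) 0
    simpa only [Pi.add_apply, Pi.neg_apply, ← sub_eq_add_neg, sub_nonneg] using this
  · convert convex_setOf_nonneg_monotone_add_antitone (convex_Icc 0 1)
      hwm.strictMonoOn.monotoneOn hwp.antitoneOn_one_sub (fun _ => hwm.nonneg)
      (fun _ hu => hwp.nonneg (Icc.one_sub_mem hu)) (fun _ => hwm.pos_or_pos_one_sub hwp)
      (fun hb ha => sub_nonneg.2 <|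
        constCoeff_le_of_coeffs_lt (hv.monotone hd.le) (sub_pos.1 ha) (sub_pos.1 hb))
      (fun hb ha => sub_nonpos.2 <|
        constCoeff_le_of_coeffs_lt (hv.monotone hr.le) (sub_neg.1 ha) (sub_neg.1 hb))
      using 1
    ext u
    simp only [mem_sep_iff, CPT_pair_of_lt hwp hwm hv hvr hr, CPT_pair_of_lt hwp hwm hv hvr hd,
      ← sub_nonneg (b := binaryCPT _ _ _ _ _), binaryCPT_sub, sub_sub_cancel,
      add_comm (_ * wp _)]

lemma exists_setOf_CPT_pair_le_eq_Icc (hwp : IsProbWeighting wp) (hwm : IsProbWeighting wm)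
    (hv : StrictMono v) (hvr : v r = 0) (zr zd : Fin 2 → ℝ) : ∃ α β : ℝ,
    {u ∈ Icc (0 : ℝ) 1 | CPT wp wm v r ![u, 1 - u] zd ≤ CPT wp wm v r ![u, 1 - u] zr}
      = Icc α β := by
  refine (convex_setOf_CPT_pair_le hwp hwm hv hvr zr zd).exists_eq_Icc_of_isCompact ?_
  exact isCompact_Icc.of_isClosed_subset (isClosed_Icc.isClosed_le
    (continuousOn_CPT_pair hwp hwm hv hvr zd) (continuousOn_CPT_pair hwp hwm hv hvr zr))
    (sep_subset _ _)

lemma div_sum_eq_pair {p : Fin 2 → ℝ} (hp : ∑ k, p k ≠ 0) :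
    (fun k => p k / ∑ k', p k') = ![p 0 / ∑ k, p k, 1 - p 0 / ∑ k, p k] := by
  rw [Fin.sum_univ_two] at *
  ext k
  fin_cases k
  · rfl
  · simp [eq_sub_iff_add_eq, ← add_div, add_comm (p 1), div_self hp]

lemma exists_linearMap_CPT_le_iff (hwp : IsProbWeighting wp) (hwm : IsProbWeighting wm)
    (hv : StrictMono v) (hvr : v r = 0) (zr zd : Fin 2 → ℝ) :
    ∃ L : Fin 2 → (Fin 2 → ℝ) →ₗ[ℝ] ℝ, ∀ p : Fin 2 → ℝ, (∀ k, 0 ≤ p k) →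
      ((0 < ∑ k, p k → CPT wp wm v r (fun k => p k / ∑ k', p k') zd
          ≤ CPT wp wm v r (fun k => p k / ∑ k', p k') zr) ↔ ∀ i, L i p ≤ 0) := by
  obtain ⟨α, β, hαβ⟩ := exists_setOf_CPT_pair_le_eq_Icc hwp hwm hv hvr zr zd
  let total : (Fin 2 → ℝ) →ₗ[ℝ] ℝ := ∑ k, LinearMap.proj k
  refine ⟨![α • total - LinearMap.proj 0, LinearMap.proj 0 - β • total], fun p hp => ?_⟩
  have htotal : total p = ∑ k, p k := by simp [total]
  simp only [Fin.forall_fin_two, Matrix.cons_val_zero, Matrix.cons_val_one, LinearMap.sub_apply,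
    LinearMap.smul_apply, htotal, LinearMap.proj_apply, smul_eq_mul, sub_nonpos]
  rcases (Finset.sum_nonneg fun k _ => hp k).eq_or_lt with hs | hs
  · have hp0 : p 0 = 0 := by
      rw [Fin.sum_univ_two] at hs
      linarith [hp 0, hp 1]
    simp [← hs, hp0]
  · have hu : p 0 / ∑ k, p k ∈ Icc (0 : ℝ) 1 :=
      ⟨div_nonneg (hp 0) hs.le, div_le_one_of_le₀
        (Finset.single_le_sum (fun k _ => hp k) (Finset.mem_univ 0)) hs.le⟩
    rw [imp_iff_right hs, div_sum_eq_pair hs.ne', ← le_div_iff₀ hs, ← div_le_iff₀ hs]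
    exact (and_iff_right hu).symm.trans (Set.ext_iff.1 hαβ _)

end PairProspect

lemma exists_fin_iInter_sum_mul_le_eq {σ ι : Type*} [Fintype σ] [DecidableEq σ] [Fintype ι]
    (L : ι → (σ → ℝ) →ₗ[ℝ] ℝ) (d : ι → ℝ) :
    ∃ (m : ℕ) (c : Fin m → σ → ℝ) (d' : Fin m → ℝ),
      ⋂ l, {μ : σ → ℝ | ∑ q, c l q * μ q ≤ d' l} = ⋂ i, {μ | L i μ ≤ d i} := by
  let e := (Fintype.equivFin ι).symm
  refine ⟨Fintype.card ι, fun l q => L (e l) fun j => if q = j then 1 else 0, fun l => d (e l),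
    .trans (iInter_congr fun l => ?_) (e.surjective.iInter_comp fun i => {μ | L i μ ≤ d i})⟩
  ext μ
  simp only [mem_ofPred_eq, LinearMap.pi_apply_eq_sum_univ (L (e l)) μ, smul_eq_mul, mul_comm]

/-- for any 2×2 game in which each player has a fixed reference point
(independent of the joint distribution), the set of CPT correlated equilibria is a
convex polytope: it is the intersection of the simplex `Δ³` with finitely many
closed half-spaces of `ℝ⁴`; in particular it is convex. -/
theorem ccpt_2x2_convex_polytope (A B : Fin 2 × Fin 2 → ℝ)
    (wp1 wm1 wp2 wm2 v1 v2 : ℝ → ℝ) (r1 r2 : ℝ)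
    (hwp1 : ContinuousOn wp1 (Set.Icc 0 1) ∧ StrictMonoOn wp1 (Set.Icc 0 1)
      ∧ wp1 0 = 0 ∧ wp1 1 = 1)
    (hwm1 : ContinuousOn wm1 (Set.Icc 0 1) ∧ StrictMonoOn wm1 (Set.Icc 0 1)
      ∧ wm1 0 = 0 ∧ wm1 1 = 1)
    (hwp2 : ContinuousOn wp2 (Set.Icc 0 1) ∧ StrictMonoOn wp2 (Set.Icc 0 1)
      ∧ wp2 0 = 0 ∧ wp2 1 = 1)
    (hwm2 : ContinuousOn wm2 (Set.Icc 0 1) ∧ StrictMonoOn wm2 (Set.Icc 0 1)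
      ∧ wm2 0 = 0 ∧ wm2 1 = 1)
    (hv1 : StrictMono v1 ∧ Continuous v1 ∧ v1 r1 = 0)
    (hv2 : StrictMono v2 ∧ Continuous v2 ∧ v2 r2 = 0) :
    (∃ (m : ℕ) (c : Fin m → (Fin 2 × Fin 2 → ℝ)) (d : Fin m → ℝ),
      CCPT2 A B wp1 wm1 wp2 wm2 v1 v2 r1 r2
        = {μ : Fin 2 × Fin 2 → ℝ | (∀ q, 0 ≤ μ q) ∧ ∑ q, μ q = 1}
            ∩ ⋂ l : Fin m, {μ : Fin 2 × Fin 2 → ℝ | ∑ q, c l q * μ q ≤ d l})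
    ∧ Convex ℝ (CCPT2 A B wp1 wm1 wp2 wm2 v1 v2 r1 r2) := by
  have hw (w : ℝ → ℝ)
      (h : ContinuousOn w (Icc 0 1) ∧ StrictMonoOn w (Icc 0 1) ∧ w 0 = 0 ∧ w 1 = 1) :
      IsProbWeighting w := ⟨h.1, h.2.1, h.2.2.1, h.2.2.2⟩
  choose L₁ hL₁ using fun j j' : Fin 2 => exists_linearMap_CPT_le_iff (hw _ hwp1) (hw _ hwm1)
    hv1.1 hv1.2.2 (fun k => A (j, k)) (fun k => A (j', k))
  choose L₂ hL₂ using fun k k' : Fin 2 => exists_linearMap_CPT_le_iff (hw _ hwp2) (hw _ hwm2)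
    hv2.1 hv2.2.2 (fun j => B (j, k)) (fun j => B (j, k'))
  let L : (Fin 2 × Fin 2 × Fin 2) ⊕ (Fin 2 × Fin 2 × Fin 2) →
      (Fin 2 × Fin 2 → ℝ) →ₗ[ℝ] ℝ :=
    Sum.elim (fun ⟨j, j', i⟩ => (L₁ j j' i).comp (LinearMap.funLeft ℝ ℝ (Prod.mk j)))
      (fun ⟨k, k', i⟩ => (L₂ k k' i).comp (LinearMap.funLeft ℝ ℝ (·, k)))
  have hset : CCPT2 A B wp1 wm1 wp2 wm2 v1 v2 r1 r2
      = stdSimplex ℝ (Fin 2 × Fin 2) ∩ ⋂ i, {μ | L i μ ≤ 0} := by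
    ext μ
    simp only [CCPT2, stdSimplex, L, mem_ofPred_eq, mem_inter_iff, mem_iInter, Sum.forall,
      Prod.forall, Sum.elim_inl, Sum.elim_inr, LinearMap.comp_apply]
    exact and_congr_right fun hμ => and_congr
      (forall₂_congr fun j j' => hL₁ j j' _ fun k => hμ.1 _ _)
      (forall₂_congr fun k k' => hL₂ k k' _ fun j => hμ.1 _ _)
  obtain ⟨m, c, d, hcd⟩ := exists_fin_iInter_sum_mul_le_eq L 0
  refine ⟨⟨m, c, d, hset.trans (by rw [hcd]; rfl)⟩, hset ▸ ?_⟩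
  exact (convex_stdSimplex ℝ _).inter
    (convex_iInter fun i => convex_halfSpace_le (L i).isLinear 0)
end

section
/- (Single-crossing threshold for two-outcome CPT comparisons) Let x = (x_1, x_2) and y = (y_1, y_2) be outcome profiles with x_1 < y_1 and x_2 > y_2, and let r ∈ ℝ be a reference point. Then there exists a unique q ∈ (0,1) such that for every probability vector p = (p_1, 1−p_1) with p_1 ∈ [0,1]: V^r(p,x) ≥ V^r(p,y) if and only if p_1 ≤ q. Moreover V^r((0,1),x) − V^r((0,1),y) > 0 > V^r((1,0),x) − V^r((1,0),y), and the regret V^r(p,x) − V^r(p,y) is strictly decreasing as a function of p_1 on (0,1). -/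
/-!
For `s < t` in `[0, 1]`, the increment `V^r((t, 1 - t), z) - V^r((s, 1 - s), z)` has the form
`g (z 0) - g (z 1)` when `z 1 ≤ z 0` and `h (z 0) - h (z 1)` otherwise, with `g` and `h` strictly
increasing: they are `v` multiplied by a positive weight difference that only depends on whether
the outcome is a gain or a loss, and `v r = 0` makes the two pieces fit together. Hence the increment
is strictly increasing in `z 0` and strictly decreasing in `z 1`, so passing from `y` to `x` strictly
decreases it, i.e. the regret is strictly decreasing in `p₁`. Together with its signs at the
endpoints (`v (x 1) - v (y 1) > 0` and `v (x 0) - v (y 0) < 0`) and continuity, the intermediate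
value theorem gives the threshold.
-/

open Set

theorem existsUnique_nonneg_iff_le_of_strictAntiOn {f : ℝ → ℝ} {a b : ℝ} (hab : a ≤ b)
    (hf : ContinuousOn f (Icc a b)) (hanti : StrictAntiOn f (Icc a b))
    (ha : 0 < f a) (hb : f b < 0) :
    ∃! q, q ∈ Ioo a b ∧ ∀ p ∈ Icc a b, (0 ≤ f p ↔ p ≤ q) := by
  obtain ⟨q, hq, hfq⟩ := intermediate_value_Icc' hab hf ⟨hb.le, ha.le⟩
  have hqa : q ≠ a := by rintro rfl; exact ha.ne' hfq
  have hqb : q ≠ b := by rintro rfl; exact hb.ne hfq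
  have hchar : ∀ p ∈ Icc a b, (0 ≤ f p ↔ p ≤ q) := fun p hp => by
    rw [← hfq]; exact hanti.le_iff_ge hq hp
  refine ⟨q, ⟨⟨hq.1.lt_of_ne hqa.symm, hq.2.lt_of_ne hqb⟩, hchar⟩, ?_⟩
  rintro q' ⟨hq', hchar'⟩
  have hq'I : q' ∈ Icc a b := Ioo_subset_Icc_self hq'
  exact le_antisymm ((hchar q' hq'I).1 ((hchar' q' hq'I).2 le_rfl)) ((hchar' q hq).1 hfq.ge)

theorem strictMono_ite_sub {g h : ℝ → ℝ} (hg : StrictMono g) (hh : StrictMono h) (b : ℝ) :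
    StrictMono fun a => if b ≤ a then g a - g b else h a - h b := by
  intro a a' haa'
  dsimp only
  by_cases ha : b ≤ a
  · rw [if_pos ha, if_pos (ha.trans haa'.le)]
    linarith [hg haa']
  · rw [if_neg ha]
    have : h a < h b := hh (not_le.1 ha)
    split_ifs with ha'
    · linarith [hg.monotone ha']
    · linarith [hh haa']

theorem strictAnti_ite_sub {g h : ℝ → ℝ} (hg : StrictMono g) (hh : StrictMono h) (a : ℝ) :
    StrictAnti fun b => if b ≤ a then g a - g b else h a - h b := by
  intro b b' hbb'
  dsimp only
  by_cases hb' : b' ≤ a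
  · rw [if_pos hb', if_pos (hbb'.le.trans hb')]
    linarith [hg hbb']
  · rw [if_neg hb']
    have : h a < h b' := hh (not_le.1 hb')
    split_ifs with hb
    · linarith [hg.monotone hb]
    · linarith [hh hbb']

theorem sort_neg_eq_one_of_le {z : Fin 2 → ℝ} (h : z 1 ≤ z 0) :
    Tuple.sort (fun j => -z j) = 1 := by
  symm
  rw [Tuple.eq_sort_iff]
  constructor
  · intro i j hij
    fin_cases i <;> fin_cases j <;> simp_all
  · intro i j hij _
    simpa using hij

theorem sort_neg_eq_swap_of_lt {z : Fin 2 → ℝ} (h : z 0 < z 1) :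
    Tuple.sort (fun j => -z j) = Equiv.swap 0 1 := by
  symm
  rw [Tuple.eq_sort_iff]
  constructor
  · intro i j hij
    fin_cases i <;> fin_cases j <;> simp_all [h.le]
  · intro i j hij _
    fin_cases i <;> fin_cases j <;> simp_all

section TwoOutcomes

variable {wp wm v : ℝ → ℝ} {r : ℝ}

theorem strictMono_ite_mul (hv : StrictMono v) (hvr : v r = 0) {cp cm : ℝ} (hcp : 0 < cp)
    (hcm : 0 < cm) : StrictMono fun z => (if r ≤ z then cp else cm) * v z := by
  intro a b hab
  dsimp only
  by_cases ha : r ≤ a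
  · rw [if_pos ha, if_pos (ha.trans hab.le)]
    exact mul_lt_mul_of_pos_left (hv hab) hcp
  · rw [if_neg ha]
    have hva : v a < 0 := hvr ▸ hv (not_le.1 ha)
    split_ifs with hb
    · have hvb : 0 ≤ v b := hvr ▸ hv.monotone hb
      nlinarith
    · exact mul_lt_mul_of_pos_left (hv hab) hcm

variable (wp wm r) in
/-- The decision weight (`π₁⁺` or `π₁⁻`) of the better outcome `z` of a two-outcome prospect in
which `z` has probability `q`; the worse outcome `z'` gets weight `1 - topWeight wp wm r q z'`. -/
noncomputable def topWeight (q z : ℝ) : ℝ :=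
  if r ≤ z then wp q else 1 - wm (1 - q)

theorem topWeight_zero (hwp0 : wp 0 = 0) (hwm1 : wm 1 = 1) (z : ℝ) :
    topWeight wp wm r 0 z = 0 := by
  simp [topWeight, hwp0, hwm1]

theorem topWeight_one (hwp1 : wp 1 = 1) (hwm0 : wm 0 = 0) (z : ℝ) :
    topWeight wp wm r 1 z = 1 := by
  simp [topWeight, hwp1, hwm0]

theorem continuousOn_topWeight (hwpc : ContinuousOn wp (Icc 0 1))
    (hwmc : ContinuousOn wm (Icc 0 1)) (z : ℝ) :
    ContinuousOn (fun q => topWeight wp wm r q z) (Icc 0 1) := by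
  have hflip : MapsTo (fun q : ℝ => 1 - q) (Icc 0 1) (Icc 0 1) := fun _ =>
    Icc.mem_iff_one_sub_mem.1
  unfold topWeight
  split_ifs
  · exact hwpc
  · exact continuousOn_const.sub (hwmc.comp (by fun_prop) hflip)

theorem strictMono_topWeight_sub_mul (hwpm : StrictMonoOn wp (Icc 0 1))
    (hwmm : StrictMonoOn wm (Icc 0 1)) (hv : StrictMono v) (hvr : v r = 0)
    {s t : ℝ} (hs : s ∈ Icc 0 1) (ht : t ∈ Icc 0 1) (hst : s < t) :
    StrictMono fun z => (topWeight wp wm r t z - topWeight wp wm r s z) * v z := by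
  have hs' := Icc.mem_iff_one_sub_mem.1 hs
  have ht' := Icc.mem_iff_one_sub_mem.1 ht
  have hweight : ∀ z, topWeight wp wm r t z - topWeight wp wm r s z =
      if r ≤ z then wp t - wp s else wm (1 - s) - wm (1 - t) := fun z => by
    unfold topWeight; split_ifs <;> ring
  simp only [hweight]
  exact strictMono_ite_mul hv hvr (sub_pos.2 (hwpm hs ht hst))
    (sub_pos.2 (hwmm ht' hs' (by linarith)))

theorem cpt_pair_eq (hwp0 : wp 0 = 0) (hwp1 : wp 1 = 1) (hwm0 : wm 0 = 0) (hwm1 : wm 1 = 1)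
    (z : Fin 2 → ℝ) (q : ℝ) :
    CPT wp wm v r ![q, 1 - q] z =
      if z 1 ≤ z 0 then
        v (z 1) + topWeight wp wm r q (z 0) * v (z 0) - topWeight wp wm r q (z 1) * v (z 1)
      else
        v (z 0) + topWeight wp wm r (1 - q) (z 1) * v (z 1)
          - topWeight wp wm r (1 - q) (z 0) * v (z 0) := by
  have hI0 : Finset.Iic (0 : Fin 2) = {0} := by decide
  have hJ0 : Finset.Iio (0 : Fin 2) = ∅ := by decide
  have hK0 : Finset.Ici (0 : Fin 2) = {0, 1} := by decide
  have hL0 : Finset.Ioi (0 : Fin 2) = {1} := by decide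
  have hI1 : Finset.Iic (1 : Fin 2) = {0, 1} := by decide
  have hJ1 : Finset.Iio (1 : Fin 2) = {0} := by decide
  have hK1 : Finset.Ici (1 : Fin 2) = {1} := by decide
  have hL1 : Finset.Ioi (1 : Fin 2) = ∅ := by decide
  by_cases h : z 1 ≤ z 0
  · rw [CPT, sort_neg_eq_one_of_le h, if_pos h]
    simp only [cptVal, topWeight, Fin.sum_univ_two, hI0, hJ0, hK0, hL0, hI1, hJ1, hK1, hL1]
    simp [hwp0, hwp1, hwm0, hwm1]
    split_ifs <;> ring
  · rw [CPT, sort_neg_eq_swap_of_lt (not_le.1 h), if_neg h]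
    simp only [cptVal, topWeight, Fin.sum_univ_two, hI0, hJ0, hK0, hL0, hI1, hJ1, hK1, hL1]
    simp [hwp0, hwp1, hwm0, hwm1]
    split_ifs <;> ring

variable (wp wm v r) in
theorem continuousOn_cpt_pair (hwpc : ContinuousOn wp (Icc 0 1))
    (hwmc : ContinuousOn wm (Icc 0 1)) (hwp0 : wp 0 = 0) (hwp1 : wp 1 = 1) (hwm0 : wm 0 = 0)
    (hwm1 : wm 1 = 1) (z : Fin 2 → ℝ) :
    ContinuousOn (fun q => CPT wp wm v r ![q, 1 - q] z) (Icc 0 1) := by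
  have hflip : MapsTo (fun q : ℝ => 1 - q) (Icc 0 1) (Icc 0 1) := fun _ =>
    Icc.mem_iff_one_sub_mem.1
  have hw := continuousOn_topWeight (r := r) hwpc hwmc
  have hw' := fun z => (hw z).comp (by fun_prop) hflip
  simp only [cpt_pair_eq hwp0 hwp1 hwm0 hwm1]
  split_ifs
  · exact (continuousOn_const.add ((hw _).mul continuousOn_const)).sub
      ((hw _).mul continuousOn_const)
  · exact (continuousOn_const.add ((hw' _).mul continuousOn_const)).sub
      ((hw' _).mul continuousOn_const)

theorem strictAntiOn_cpt_pair_sub (hwpm : StrictMonoOn wp (Icc 0 1))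
    (hwmm : StrictMonoOn wm (Icc 0 1)) (hwp0 : wp 0 = 0) (hwp1 : wp 1 = 1) (hwm0 : wm 0 = 0)
    (hwm1 : wm 1 = 1) (hv : StrictMono v) (hvr : v r = 0) {x y : Fin 2 → ℝ}
    (h1 : x 0 < y 0) (h2 : y 1 < x 1) :
    StrictAntiOn (fun q => CPT wp wm v r ![q, 1 - q] x - CPT wp wm v r ![q, 1 - q] y)
      (Icc 0 1) := by
  intro s hs t ht hst
  set g := fun z => (topWeight wp wm r t z - topWeight wp wm r s z) * v z
  set h := fun z => (topWeight wp wm r (1 - s) z - topWeight wp wm r (1 - t) z) * v z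
  have hg : StrictMono g := strictMono_topWeight_sub_mul hwpm hwmm hv hvr hs ht hst
  have hh : StrictMono h := strictMono_topWeight_sub_mul hwpm hwmm hv hvr
    (Icc.mem_iff_one_sub_mem.1 ht) (Icc.mem_iff_one_sub_mem.1 hs) (by linarith)
  have hincr : ∀ z : Fin 2 → ℝ, CPT wp wm v r ![t, 1 - t] z - CPT wp wm v r ![s, 1 - s] z =
      if z 1 ≤ z 0 then g (z 0) - g (z 1) else h (z 0) - h (z 1) := fun z => by
    simp only [g, h, cpt_pair_eq hwp0 hwp1 hwm0 hwm1]
    split_ifs <;> ring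
  have hxy := calc
    (if x 1 ≤ x 0 then g (x 0) - g (x 1) else h (x 0) - h (x 1))
      < if x 1 ≤ y 0 then g (y 0) - g (x 1) else h (y 0) - h (x 1) :=
        strictMono_ite_sub hg hh (x 1) h1
    _ < if y 1 ≤ y 0 then g (y 0) - g (y 1) else h (y 0) - h (y 1) :=
        strictAnti_ite_sub hg hh (y 0) h2
  dsimp only
  linarith [hincr x, hincr y]

end TwoOutcomes

theorem cpt_two_outcome_single_crossing_general (wp wm v : ℝ → ℝ) (r : ℝ)
    (hwpc : ContinuousOn wp (Set.Icc 0 1)) (hwmc : ContinuousOn wm (Set.Icc 0 1))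
    (hwpm : StrictMonoOn wp (Set.Icc 0 1)) (hwmm : StrictMonoOn wm (Set.Icc 0 1))
    (hwp0 : wp 0 = 0) (hwp1 : wp 1 = 1) (hwm0 : wm 0 = 0) (hwm1 : wm 1 = 1)
    (hv : StrictMono v) (hvr : v r = 0)
    (x y : Fin 2 → ℝ) (h1 : x 0 < y 0) (h2 : y 1 < x 1) :
    (∃! q : ℝ, q ∈ Set.Ioo (0 : ℝ) 1 ∧
      ∀ p₁ ∈ Set.Icc (0 : ℝ) 1,
        (CPT wp wm v r ![p₁, 1 - p₁] y ≤ CPT wp wm v r ![p₁, 1 - p₁] x ↔ p₁ ≤ q)) ∧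
    CPT wp wm v r ![(0 : ℝ), 1] y < CPT wp wm v r ![(0 : ℝ), 1] x ∧
    CPT wp wm v r ![(1 : ℝ), 0] x < CPT wp wm v r ![(1 : ℝ), 0] y ∧
    StrictAntiOn
      (fun p₁ => CPT wp wm v r ![p₁, 1 - p₁] x - CPT wp wm v r ![p₁, 1 - p₁] y)
      (Set.Ioo (0 : ℝ) 1) := by
  have hanti := strictAntiOn_cpt_pair_sub hwpm hwmm hwp0 hwp1 hwm0 hwm1 hv hvr h1 h2
  have hcont := (continuousOn_cpt_pair wp wm v r hwpc hwmc hwp0 hwp1 hwm0 hwm1 x).sub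
    (continuousOn_cpt_pair wp wm v r hwpc hwmc hwp0 hwp1 hwm0 hwm1 y)
  have hat0 : ∀ z, CPT wp wm v r ![(0 : ℝ), 1] z = v (z 1) := fun z => by
    simpa [topWeight_zero hwp0 hwm1, topWeight_one hwp1 hwm0] using
      cpt_pair_eq (v := v) (r := r) hwp0 hwp1 hwm0 hwm1 z 0
  have hat1 : ∀ z, CPT wp wm v r ![(1 : ℝ), 0] z = v (z 0) := fun z => by
    simpa [topWeight_zero hwp0 hwm1, topWeight_one hwp1 hwm0] using
      cpt_pair_eq (v := v) (r := r) hwp0 hwp1 hwm0 hwm1 z 1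
  refine ⟨?_, by simpa only [hat0] using hv h2, by simpa only [hat1] using hv h1,
    hanti.mono Ioo_subset_Icc_self⟩
  simp_rw [← sub_nonneg (a := CPT wp wm v r _ x)]
  refine existsUnique_nonneg_iff_le_of_strictAntiOn zero_le_one hcont hanti ?_ ?_
  · simpa [hat0] using hv h2
  · simpa [hat1] using hv h1

/-- single-crossing threshold for two-outcome CPT comparisons:
if `x₁ < y₁` and `x₂ > y₂`, then there is a unique `q ∈ (0,1)` such that for every
probability vector `(p₁, 1 − p₁)`, `V^r(p,x) ≥ V^r(p,y)` iff `p₁ ≤ q`; moreover the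
regret is positive at `p₁ = 0`, negative at `p₁ = 1`, and strictly decreasing in
`p₁` on `(0,1)`. -/
theorem cpt_two_outcome_single_crossing (wp wm v : ℝ → ℝ) (r : ℝ)
    (hwpc : ContinuousOn wp (Set.Icc 0 1)) (hwmc : ContinuousOn wm (Set.Icc 0 1))
    (hwpm : StrictMonoOn wp (Set.Icc 0 1)) (hwmm : StrictMonoOn wm (Set.Icc 0 1))
    (hwp0 : wp 0 = 0) (hwp1 : wp 1 = 1) (hwm0 : wm 0 = 0) (hwm1 : wm 1 = 1)
    (hv : StrictMono v) (hvc : Continuous v) (hvr : v r = 0)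
    (x y : Fin 2 → ℝ) (h1 : x 0 < y 0) (h2 : y 1 < x 1) :
    (∃! q : ℝ, q ∈ Set.Ioo (0 : ℝ) 1 ∧
      ∀ p₁ ∈ Set.Icc (0 : ℝ) 1,
        (CPT wp wm v r ![p₁, 1 - p₁] y ≤ CPT wp wm v r ![p₁, 1 - p₁] x ↔ p₁ ≤ q)) ∧
    CPT wp wm v r ![(0 : ℝ), 1] y < CPT wp wm v r ![(0 : ℝ), 1] x ∧
    CPT wp wm v r ![(1 : ℝ), 0] x < CPT wp wm v r ![(1 : ℝ), 0] y ∧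
    StrictAntiOn
      (fun p₁ => CPT wp wm v r ![p₁, 1 - p₁] x - CPT wp wm v r ![p₁, 1 - p₁] y)
      (Set.Ioo (0 : ℝ) 1) :=
  cpt_two_outcome_single_crossing_general wp wm v r hwpc hwmc hwpm hwmm hwp0 hwp1 hwm0 hwm1 hv hvr x
    y h1 h2
end

section
/- For any real numbers α, β > 0, the set {(μ_{00}, μ_{01}, μ_{10}, μ_{11}) ∈ ℝ⁴ : μ_{jk} ≥ 0, μ_{00}+μ_{01}+μ_{10}+μ_{11} = 1, αμ_{00} ≤ μ_{01}, αμ_{10} ≥ μ_{11}, βμ_{00} ≥ μ_{10}, βμ_{01} ≤ μ_{11}} consists of exactly one point, namely μ_{00} = 1/((1+α)(1+β)), μ_{01} = α/((1+α)(1+β)), μ_{10} = β/((1+α)(1+β)), μ_{11} = αβ/((1+α)(1+β)). In particular, in all four defining inequalities equality must hold. -/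
/-!
Multiplying the first and third inequalities by `β` and `α` closes the four into the cycle
`αβ μ₀₀ ≤ β μ₀₁ ≤ μ₁₁ ≤ α μ₁₀ ≤ αβ μ₀₀`, so all of them are equalities and
`μ = μ₀₀ (1, α, β, αβ)`; normalising the total mass to `1` gives `μ₀₀ = 1 / ((1 + α)(1 + β))`.
-/

theorem proportional_of_type_II_inequalities {K : Type*} [Field K] [LinearOrder K]
    [IsStrictOrderedRing K] {α β p q r s : K} (hα : 0 < α) (hβ : 0 < β)
    (h₁ : α * p ≤ q) (h₂ : s ≤ α * r) (h₃ : r ≤ β * p) (h₄ : β * q ≤ s) :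
    q = α * p ∧ r = β * p ∧ s = α * β * p := by
  have hq : β * (α * p) ≤ β * q := mul_le_mul_of_nonneg_left h₁ hβ.le
  have hr : α * r ≤ α * (β * p) := mul_le_mul_of_nonneg_left h₃ hα.le
  exact ⟨mul_left_cancel₀ hβ.ne' (by linarith), mul_left_cancel₀ hα.ne' (by linarith),
    by linarith⟩

theorem eq_one_div_of_proportional_of_sum_eq_one {K : Type*} [Field K] {α β p q r s : K}
    (hq : q = α * p) (hr : r = β * p) (hs : s = α * β * p) (hsum : p + q + r + s = 1) :
    p = 1 / ((1 + α) * (1 + β)) :=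
  eq_one_div_of_mul_eq_one_left (by linear_combination hsum - hq - hr - hs)

/-- for `α, β > 0`, the correlated-equilibrium polytope of a
competitive 2×2 game of type (II), i.e. the set of probability vectors
`μ = (μ₀₀, μ₀₁, μ₁₀, μ₁₁)` with `αμ₀₀ ≤ μ₀₁`, `αμ₁₀ ≥ μ₁₁`, `βμ₀₀ ≥ μ₁₀`,
`βμ₀₁ ≤ μ₁₁`, is the single point
`(1, α, β, αβ) / ((1+α)(1+β))` (so all four inequalities hold with equality). -/
theorem competitive_type_II_unique_point (α β : ℝ) (hα : 0 < α) (hβ : 0 < β) :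
    {μ : Fin 4 → ℝ | (∀ j, 0 ≤ μ j) ∧ μ 0 + μ 1 + μ 2 + μ 3 = 1 ∧
        α * μ 0 ≤ μ 1 ∧ μ 3 ≤ α * μ 2 ∧ μ 2 ≤ β * μ 0 ∧ β * μ 1 ≤ μ 3}
      = {![1 / ((1 + α) * (1 + β)), α / ((1 + α) * (1 + β)),
          β / ((1 + α) * (1 + β)), α * β / ((1 + α) * (1 + β))]} := by
  ext μ
  simp only [Set.mem_ofPred_eq, Set.mem_singleton_iff]
  constructor
  · rintro ⟨-, hsum, h₁, h₂, h₃, h₄⟩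
    obtain ⟨e₁, e₂, e₃⟩ := proportional_of_type_II_inequalities hα hβ h₁ h₂ h₃ h₄
    have e₀ := eq_one_div_of_proportional_of_sum_eq_one e₁ e₂ e₃ hsum
    ext i
    fin_cases i <;> simp [e₀, e₁, e₂, e₃, -one_div, mul_one_div]
  · rintro rfl
    refine ⟨fun j => by fin_cases j <;> simp <;> positivity, ?_, ?_, ?_, ?_, ?_⟩
    · simp [-one_div]
      field_simp
      ring
    all_goals apply le_of_eq; simp [-one_div]; ring
end

section
/- For any real numbers α, β > 0, the set {(μ_{00}, μ_{01}, μ_{10}, μ_{11}) ∈ ℝ⁴ : μ_{jk} ≥ 0, μ_{00}+μ_{01}+μ_{10}+μ_{11} = 1, αμ_{00} ≥ μ_{01}, αμ_{10} ≤ μ_{11}, βμ_{00} ≥ μ_{10}, βμ_{01} ≤ μ_{11}} is equal to the convex hull of the five points μ*_A = (1,0,0,0), μ*_B = (0,0,0,1), μ*_C = (1, α, β, αβ)/((1+α)(1+β)), μ*_D = (1, 0, β, αβ)/(1+β+αβ), and μ*_E = (1, α, 0, αβ)/(1+α+αβ), and each of these five points is a vertex (extreme point) of this set. -/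
set_option maxHeartbeats 2000000
set_option linter.unnecessarySeqFocus false

private lemma tight_aux {a b u₁ v₁ u₂ v₂ : ℝ} (ha : 0 < a) (hb : 0 < b)
    (h₁ : u₁ ≤ v₁) (h₂ : u₂ ≤ v₂) (h : a * u₁ + b * u₂ = a * v₁ + b * v₂) :
    u₁ = v₁ ∧ u₂ = v₂ := by
  constructor <;>
    nlinarith [mul_le_mul_of_nonneg_left h₁ ha.le, mul_le_mul_of_nonneg_left h₂ hb.le]

private lemma zero_aux {a b u v : ℝ} (ha : 0 < a) (hb : 0 < b)
    (hu : 0 ≤ u) (hv : 0 ≤ v) (h : a * u + b * v = 0) : u = 0 ∧ v = 0 := by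
  constructor <;> nlinarith [mul_nonneg ha.le hu, mul_nonneg hb.le hv]

private lemma mem5 {V : Set (Fin 4 → ℝ)} {A B C D E x : Fin 4 → ℝ}
    (hA : A ∈ V) (hB : B ∈ V) (hC : C ∈ V) (hD : D ∈ V) (hE : E ∈ V)
    {w0 w1 w2 w3 w4 : ℝ} (h0 : 0 ≤ w0) (h1 : 0 ≤ w1) (h2 : 0 ≤ w2)
    (h3 : 0 ≤ w3) (h4 : 0 ≤ w4) (hs : w0 + w1 + w2 + w3 + w4 = 1)
    (hx : x = w0 • A + w1 • B + w2 • C + w3 • D + w4 • E) :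
    x ∈ convexHull ℝ V := by
  have := (convex_convexHull ℝ V).sum_mem (t := (Finset.univ : Finset (Fin 5)))
    (w := ![w0, w1, w2, w3, w4]) (z := ![A, B, C, D, E])
    (by intro i _; fin_cases i <;> simpa)
    (by simp [Fin.sum_univ_five]; linarith)
    (by intro i _; fin_cases i <;>
        first | exact subset_convexHull ℝ V hA | exact subset_convexHull ℝ V hB |
          exact subset_convexHull ℝ V hC | exact subset_convexHull ℝ V hD |
          exact subset_convexHull ℝ V hE)
  simp only [Fin.sum_univ_five, Matrix.cons_val_zero, Matrix.cons_val_one, Matrix.head_cons,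
    Matrix.cons_val_two, Matrix.tail_cons, Matrix.cons_val_three, Matrix.cons_val_four] at this
  rwa [← hx] at this

private lemma is_A {y : Fin 4 → ℝ} (hs : y 0 + y 1 + y 2 + y 3 = 1)
    (t1 : y 1 = 0) (t2 : y 2 = 0) (t3 : y 3 = 0) : y = ![(1:ℝ), 0, 0, 0] := by
  funext j; fin_cases j <;> simp [t1, t2, t3] <;> linarith

private lemma is_B {y : Fin 4 → ℝ} (hs : y 0 + y 1 + y 2 + y 3 = 1)
    (t1 : y 0 = 0) (t2 : y 1 = 0) (t3 : y 2 = 0) : y = ![(0:ℝ), 0, 0, 1] := by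
  funext j; fin_cases j <;> simp [t1, t2, t3] <;> linarith

private lemma is_C {α β : ℝ} (hα : 0 < α) (hβ : 0 < β) {y : Fin 4 → ℝ}
    (hs : y 0 + y 1 + y 2 + y 3 = 1) (t1 : y 1 = α * y 0) (t2 : α * y 2 = y 3)
    (t3 : y 2 = β * y 0) :
    y = ![1 / ((1 + α) * (1 + β)), α / ((1 + α) * (1 + β)),
          β / ((1 + α) * (1 + β)), α * β / ((1 + α) * (1 + β))] := by
  have hM : (0:ℝ) < (1 + α) * (1 + β) := by positivity
  have h0 : y 0 = 1 / ((1 + α) * (1 + β)) := by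
    rw [eq_div_iff hM.ne']
    linear_combination hs - t1 - t3 + t2 - α * t3
  have hA0 : (1:ℝ) + α ≠ 0 := by positivity
  have hB0 : (1:ℝ) + β ≠ 0 := by positivity
  funext j; fin_cases j <;> simp
  · rw [h0]; field_simp; try ring
  · rw [t1, h0]; field_simp; try ring
  · rw [t3, h0]; field_simp; try ring
  · rw [← t2, t3, h0]; field_simp; try ring

private lemma is_D {α β : ℝ} (hα : 0 < α) (hβ : 0 < β) {y : Fin 4 → ℝ}
    (hs : y 0 + y 1 + y 2 + y 3 = 1) (t1 : y 1 = 0) (t2 : α * y 2 = y 3)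
    (t3 : y 2 = β * y 0) :
    y = ![1 / (1 + β + α * β), 0, β / (1 + β + α * β), α * β / (1 + β + α * β)] := by
  have hM : (0:ℝ) < 1 + β + α * β := by positivity
  have h0 : y 0 = 1 / (1 + β + α * β) := by
    rw [eq_div_iff hM.ne']
    linear_combination hs - t1 - t3 + t2 - α * t3
  funext j; fin_cases j <;> simp
  · rw [h0]; field_simp; try ring
  · exact t1
  · rw [t3, h0]; field_simp; try ring
  · rw [← t2, t3, h0]; field_simp; try ring

private lemma is_E {α β : ℝ} (hα : 0 < α) (hβ : 0 < β) {y : Fin 4 → ℝ}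
    (hs : y 0 + y 1 + y 2 + y 3 = 1) (t1 : y 2 = 0) (t2 : β * y 1 = y 3)
    (t3 : y 1 = α * y 0) :
    y = ![1 / (1 + α + α * β), α / (1 + α + α * β), 0, α * β / (1 + α + α * β)] := by
  have hM : (0:ℝ) < 1 + α + α * β := by positivity
  have h0 : y 0 = 1 / (1 + α + α * β) := by
    rw [eq_div_iff hM.ne']
    linear_combination hs - t1 - t3 + t2 - β * t3
  funext j; fin_cases j <;> simp
  · rw [h0]; field_simp; try ring
  · rw [t3, h0]; field_simp; try ring
  · exact t1
  · rw [← t2, t3, h0]; field_simp; try ring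



/-- for `α, β > 0`, the correlated-equilibrium polytope of a
coordination 2×2 game of type (I), i.e. the set of probability vectors
`μ = (μ₀₀, μ₀₁, μ₁₀, μ₁₁)` with `αμ₀₀ ≥ μ₀₁`, `αμ₁₀ ≤ μ₁₁`, `βμ₀₀ ≥ μ₁₀`,
`βμ₀₁ ≤ μ₁₁`, is the convex hull of the five points `μ*_A, μ*_B, μ*_C, μ*_D, μ*_E`,
and each of these five points is an extreme point of it. -/
theorem coordination_type_I_polytope (α β : ℝ) (hα : 0 < α) (hβ : 0 < β) :
    {μ : Fin 4 → ℝ | (∀ j, 0 ≤ μ j) ∧ μ 0 + μ 1 + μ 2 + μ 3 = 1 ∧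
        μ 1 ≤ α * μ 0 ∧ α * μ 2 ≤ μ 3 ∧ μ 2 ≤ β * μ 0 ∧ β * μ 1 ≤ μ 3}
      = convexHull ℝ
          ({![(1 : ℝ), 0, 0, 0], ![(0 : ℝ), 0, 0, 1],
            ![1 / ((1 + α) * (1 + β)), α / ((1 + α) * (1 + β)),
              β / ((1 + α) * (1 + β)), α * β / ((1 + α) * (1 + β))],
            ![1 / (1 + β + α * β), 0, β / (1 + β + α * β), α * β / (1 + β + α * β)],
            ![1 / (1 + α + α * β), α / (1 + α + α * β), 0, α * β / (1 + α + α * β)]}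
            : Set (Fin 4 → ℝ))
    ∧ ({![(1 : ℝ), 0, 0, 0], ![(0 : ℝ), 0, 0, 1],
        ![1 / ((1 + α) * (1 + β)), α / ((1 + α) * (1 + β)),
          β / ((1 + α) * (1 + β)), α * β / ((1 + α) * (1 + β))],
        ![1 / (1 + β + α * β), 0, β / (1 + β + α * β), α * β / (1 + β + α * β)],
        ![1 / (1 + α + α * β), α / (1 + α + α * β), 0, α * β / (1 + α + α * β)]}
        : Set (Fin 4 → ℝ)) ⊆
      Set.extremePoints ℝ
        {μ : Fin 4 → ℝ | (∀ j, 0 ≤ μ j) ∧ μ 0 + μ 1 + μ 2 + μ 3 = 1 ∧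
          μ 1 ≤ α * μ 0 ∧ α * μ 2 ≤ μ 3 ∧ μ 2 ≤ β * μ 0 ∧ β * μ 1 ≤ μ 3} := by
  have hM1 : (0:ℝ) < (1 + α) * (1 + β) := by positivity
  have hM2 : (0:ℝ) < 1 + β + α * β := by positivity
  have hM3 : (0:ℝ) < 1 + α + α * β := by positivity
  set S := {μ : Fin 4 → ℝ | (∀ j, 0 ≤ μ j) ∧ μ 0 + μ 1 + μ 2 + μ 3 = 1 ∧
      μ 1 ≤ α * μ 0 ∧ α * μ 2 ≤ μ 3 ∧ μ 2 ≤ β * μ 0 ∧ β * μ 1 ≤ μ 3} with hSdef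
  set A : Fin 4 → ℝ := ![(1 : ℝ), 0, 0, 0] with hAdef
  set B : Fin 4 → ℝ := ![(0 : ℝ), 0, 0, 1] with hBdef
  set C : Fin 4 → ℝ := ![1 / ((1 + α) * (1 + β)), α / ((1 + α) * (1 + β)),
      β / ((1 + α) * (1 + β)), α * β / ((1 + α) * (1 + β))] with hCdef
  set D : Fin 4 → ℝ := ![1 / (1 + β + α * β), 0, β / (1 + β + α * β),
      α * β / (1 + β + α * β)] with hDdef
  set E : Fin 4 → ℝ := ![1 / (1 + α + α * β), α / (1 + α + α * β), 0,
      α * β / (1 + α + α * β)] with hEdef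
  set V : Set (Fin 4 → ℝ) := {A, B, C, D, E} with hVdef
  -- memberships of the five points in S
  have hAS : A ∈ S := by
    rw [hSdef, hAdef]
    refine ⟨fun j => ?_, ?_, ?_, ?_, ?_, ?_⟩
    · fin_cases j <;> norm_num
    all_goals simp
    all_goals positivity
  have hBS : B ∈ S := by
    rw [hSdef, hBdef]
    refine ⟨fun j => ?_, ?_, ?_, ?_, ?_, ?_⟩
    · fin_cases j <;> norm_num
    all_goals simp
  have hCS : C ∈ S := by
    rw [hSdef, hCdef]
    refine ⟨fun j => ?_, ?_, ?_, ?_, ?_, ?_⟩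
    · fin_cases j <;> simp <;> positivity
    all_goals simp only [Matrix.cons_val_zero, Matrix.cons_val_one, Matrix.head_cons,
      Matrix.cons_val_two, Matrix.tail_cons, Matrix.cons_val_three]
    · field_simp; try ring
    all_goals exact le_of_eq (by field_simp; try ring)
  have hDS : D ∈ S := by
    rw [hSdef, hDdef]
    refine ⟨fun j => ?_, ?_, ?_, ?_, ?_, ?_⟩
    · fin_cases j <;> simp <;> positivity
    all_goals simp only [Matrix.cons_val_zero, Matrix.cons_val_one, Matrix.head_cons,
      Matrix.cons_val_two, Matrix.tail_cons, Matrix.cons_val_three]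
    · field_simp; try ring
    · positivity
    · exact le_of_eq (by field_simp; try ring)
    · exact le_of_eq (by field_simp; try ring)
    · rw [mul_zero]; positivity
  have hES : E ∈ S := by
    rw [hSdef, hEdef]
    refine ⟨fun j => ?_, ?_, ?_, ?_, ?_, ?_⟩
    · fin_cases j <;> simp <;> positivity
    all_goals simp only [Matrix.cons_val_zero, Matrix.cons_val_one, Matrix.head_cons,
      Matrix.cons_val_two, Matrix.tail_cons, Matrix.cons_val_three]
    · field_simp; try ring
    · exact le_of_eq (by field_simp; try ring)
    · rw [mul_zero]; positivity
    · positivity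
    · exact le_of_eq (by field_simp; try ring)
  have hVS : V ⊆ S := by
    intro x hx
    rw [hVdef] at hx
    simp only [Set.mem_insert_iff, Set.mem_singleton_iff] at hx
    rcases hx with rfl | rfl | rfl | rfl | rfl
    exacts [hAS, hBS, hCS, hDS, hES]
  -- convexity of S
  have hSconv : Convex ℝ S := by
    rw [hSdef]
    intro x hx y hy a b ha hb hab
    obtain ⟨hxn, hxs, hx1, hx2, hx3, hx4⟩ := hx
    obtain ⟨hyn, hys, hy1, hy2, hy3, hy4⟩ := hy
    refine ⟨fun j => ?_, ?_, ?_, ?_, ?_, ?_⟩ <;>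
      simp only [Pi.add_apply, Pi.smul_apply, smul_eq_mul]
    · have := hxn j; have := hyn j
      nlinarith
    · linear_combination a * hxs + b * hys + hab
    · nlinarith [mul_le_mul_of_nonneg_left hx1 ha, mul_le_mul_of_nonneg_left hy1 hb]
    · nlinarith [mul_le_mul_of_nonneg_left hx2 ha, mul_le_mul_of_nonneg_left hy2 hb]
    · nlinarith [mul_le_mul_of_nonneg_left hx3 ha, mul_le_mul_of_nonneg_left hy3 hb]
    · nlinarith [mul_le_mul_of_nonneg_left hx4 ha, mul_le_mul_of_nonneg_left hy4 hb]
  constructor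
  · -- S = convexHull V
    apply Set.Subset.antisymm
    · -- hard direction
      intro μ hμ
      rw [hSdef] at hμ
      obtain ⟨hnn, hsum, h1, h2, h3, h4⟩ := hμ
      have hn0 := hnn 0; have hn1 := hnn 1; have hn2 := hnn 2; have hn3 := hnn 3
      obtain ⟨c, hcle1, hcle2, hcor⟩ :
          ∃ c, c ≤ μ 1 / α ∧ c ≤ μ 2 / β ∧ (c = μ 1 / α ∨ c = μ 2 / β) := by
        rcases le_total (μ 1 / α) (μ 2 / β) with h | h
        · exact ⟨μ 1 / α, le_refl _, h, Or.inl rfl⟩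
        · exact ⟨μ 2 / β, h, le_refl _, Or.inr rfl⟩
      obtain ⟨d, hdeq⟩ : ∃ d, d = μ 2 / β - c := ⟨_, rfl⟩
      obtain ⟨e, heeq⟩ : ∃ e, e = μ 1 / α - c := ⟨_, rfl⟩
      have hc0 : 0 ≤ c := by rcases hcor with rfl | rfl <;> positivity
      have hd0 : 0 ≤ d := by rw [hdeq]; linarith
      have he0 : 0 ≤ e := by rw [heeq]; linarith
      have hce : α * (c + e) = μ 1 := by rw [heeq]; field_simp; try ring
      have hcd : β * (c + d) = μ 2 := by rw [hdeq]; field_simp; try ring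
      have hkey1 : c + d + e ≤ μ 0 := by
        rcases hcor with hcv | hcv
        · have hsum' : c + d + e = μ 2 / β := by rw [hdeq, heeq, hcv]; ring
          rw [hsum', div_le_iff₀ hβ]; linarith
        · have hsum' : c + d + e = μ 1 / α := by rw [hdeq, heeq, hcv]; ring
          rw [hsum', div_le_iff₀ hα]; linarith
      have hkey2 : α * β * (c + d + e) ≤ μ 3 := by
        rcases hcor with hcv | hcv
        · have hsum' : α * β * (c + d + e) = α * μ 2 := by
            rw [hdeq, heeq, hcv]; field_simp; ring
          rw [hsum']; linarith
        · have hsum' : α * β * (c + d + e) = β * μ 1 := by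
            rw [hdeq, heeq, hcv]; field_simp; ring
          rw [hsum']; linarith
      refine mem5 (A := A) (B := B) (C := C) (D := D) (E := E)
        (by rw [hVdef]; left; rfl)
        (by rw [hVdef]; right; left; rfl)
        (by rw [hVdef]; right; right; left; rfl)
        (by rw [hVdef]; right; right; right; left; rfl)
        (by rw [hVdef]; right; right; right; right; rfl)
        (w0 := μ 0 - (c + d + e)) (w1 := μ 3 - α * β * (c + d + e))
        (w2 := c * ((1 + α) * (1 + β))) (w3 := d * (1 + β + α * β))
        (w4 := e * (1 + α + α * β))
        (by linarith) (by linarith) (mul_nonneg hc0 hM1.le) (mul_nonneg hd0 hM2.le)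
        (mul_nonneg he0 hM3.le)
        (by linear_combination hsum + hce + hcd) ?_
      funext j
      fin_cases j <;>
        simp only [hAdef, hBdef, hCdef, hDdef, hEdef, Pi.add_apply, Pi.smul_apply,
          smul_eq_mul] <;> simp
      · field_simp; try ring
      · field_simp
        linear_combination (-1 : ℝ) * hce
      · field_simp
        linear_combination (-1 : ℝ) * hcd
      · field_simp; try ring
    · exact convexHull_min (by rw [hVdef]; exact hVS) hSconv
  · -- extreme points
    intro x hx
    rw [mem_extremePoints]
    refine ⟨hVS hx, ?_⟩
    intro x₁ hx₁ x₂ hx₂ hseg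
    obtain ⟨a, b, ha, hb, hab, habx⟩ := hseg
    rw [hSdef] at hx₁ hx₂
    obtain ⟨hn1, hs1, h11, h12, h13, h14⟩ := hx₁
    obtain ⟨hn2, hs2, h21, h22, h23, h24⟩ := hx₂
    rw [hVdef] at hx
    simp only [Set.mem_insert_iff, Set.mem_singleton_iff] at hx
    have e0 := congrFun habx 0
    have e1 := congrFun habx 1
    have e2 := congrFun habx 2
    have e3 := congrFun habx 3
    simp only [Pi.add_apply, Pi.smul_apply, smul_eq_mul] at e0 e1 e2 e3
    rcases hx with rfl | rfl | rfl | rfl | rfl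
    · -- A
      rw [hAdef] at e0 e1 e2 e3 ⊢
      simp only [Matrix.cons_val_zero, Matrix.cons_val_one, Matrix.head_cons,
        Matrix.cons_val_two, Matrix.tail_cons, Matrix.cons_val_three] at e0 e1 e2 e3
      obtain ⟨z11, z21⟩ := zero_aux ha hb (hn1 1) (hn2 1) e1
      obtain ⟨z12, z22⟩ := zero_aux ha hb (hn1 2) (hn2 2) e2
      obtain ⟨z13, z23⟩ := zero_aux ha hb (hn1 3) (hn2 3) e3
      exact ⟨is_A hs1 z11 z12 z13, is_A hs2 z21 z22 z23⟩
    · -- B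
      rw [hBdef] at e0 e1 e2 e3 ⊢
      simp only [Matrix.cons_val_zero, Matrix.cons_val_one, Matrix.head_cons,
        Matrix.cons_val_two, Matrix.tail_cons, Matrix.cons_val_three] at e0 e1 e2 e3
      obtain ⟨z10, z20⟩ := zero_aux ha hb (hn1 0) (hn2 0) e0
      obtain ⟨z11, z21⟩ := zero_aux ha hb (hn1 1) (hn2 1) e1
      obtain ⟨z12, z22⟩ := zero_aux ha hb (hn1 2) (hn2 2) e2
      exact ⟨is_B hs1 z10 z11 z12, is_B hs2 z20 z21 z22⟩
    · -- C
      rw [hCdef] at e0 e1 e2 e3 ⊢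
      simp only [Matrix.cons_val_zero, Matrix.cons_val_one, Matrix.head_cons,
        Matrix.cons_val_two, Matrix.tail_cons, Matrix.cons_val_three] at e0 e1 e2 e3
      obtain ⟨t11, t21⟩ := tight_aux ha hb h11 h21 (by linear_combination e1 - α * e0)
      obtain ⟨t13, t23⟩ := tight_aux ha hb h13 h23 (by linear_combination e2 - β * e0)
      obtain ⟨t12, t22⟩ := tight_aux ha hb h12 h22 (by linear_combination α * e2 - e3)
      exact ⟨is_C hα hβ hs1 t11 t12 t13, is_C hα hβ hs2 t21 t22 t23⟩
    · -- D
      rw [hDdef] at e0 e1 e2 e3 ⊢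
      simp only [Matrix.cons_val_zero, Matrix.cons_val_one, Matrix.head_cons,
        Matrix.cons_val_two, Matrix.tail_cons, Matrix.cons_val_three] at e0 e1 e2 e3
      obtain ⟨z11, z21⟩ := zero_aux ha hb (hn1 1) (hn2 1) e1
      obtain ⟨t13, t23⟩ := tight_aux ha hb h13 h23 (by linear_combination e2 - β * e0)
      obtain ⟨t12, t22⟩ := tight_aux ha hb h12 h22 (by linear_combination α * e2 - e3)
      exact ⟨is_D hα hβ hs1 z11 t12 t13, is_D hα hβ hs2 z21 t22 t23⟩
    · -- E
      rw [hEdef] at e0 e1 e2 e3 ⊢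
      simp only [Matrix.cons_val_zero, Matrix.cons_val_one, Matrix.head_cons,
        Matrix.cons_val_two, Matrix.tail_cons, Matrix.cons_val_three] at e0 e1 e2 e3
      obtain ⟨z12, z22⟩ := zero_aux ha hb (hn1 2) (hn2 2) e2
      obtain ⟨t11, t21⟩ := tight_aux ha hb h11 h21 (by linear_combination e1 - α * e0)
      obtain ⟨t14, t24⟩ := tight_aux ha hb h14 h24 (by linear_combination β * e1 - e3)
      exact ⟨is_E hα hβ hs1 z12 t14 t11, is_E hα hβ hs2 z22 t24 t21⟩
end

section
/- For any real numbers α, β > 0, the set of product-form distributions in the type (I) polytope, namely {(μ_{00}, μ_{01}, μ_{10}, μ_{11}) ∈ ℝ⁴ : μ_{jk} ≥ 0, Σμ_{jk} = 1, αμ_{00} ≥ μ_{01}, αμ_{10} ≤ μ_{11}, βμ_{00} ≥ μ_{10}, βμ_{01} ≤ μ_{11}, and μ_{00}μ_{11} = μ_{01}μ_{10}}, consists of exactly the three points μ*_A = (1,0,0,0), μ*_B = (0,0,0,1), and μ*_C = (1, α, β, αβ)/((1+α)(1+β)). -/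
section TypeICoordination

variable {K : Type*} [Field K] [LinearOrder K] [IsStrictOrderedRing K] {α β a b c d : K}

/- Multiplying the incentive constraints pairwise gives `b c ≤ αβ a²` and `αβ b c ≤ d²`; with
`a d = b c` these squeeze `d = αβ a`, and then `b c = (α a)(β a)` forces both upper bounds to be tight. -/
theorem eq_mixed_ray_of_typeI_of_pos (hα : 0 < α) (hβ : 0 < β) (ha : 0 < a) (hd : 0 < d)
    (hb : 0 ≤ b) (hc : 0 ≤ c) (hba : b ≤ α * a) (hcd : α * c ≤ d) (hca : c ≤ β * a)
    (hbd : β * b ≤ d) (hprod : a * d = b * c) :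
    b = α * a ∧ c = β * a ∧ d = α * β * a := by
  have hlow : b * c ≤ (α * a) * (β * a) := mul_le_mul hba hca hc (by positivity)
  have hhigh : (α * c) * (β * b) ≤ d * d := mul_le_mul hcd hbd (by positivity) hd.le
  have hd_eq : d = α * β * a := by
    apply le_antisymm
    · exact le_of_mul_le_mul_left (by linear_combination hlow + hprod) ha
    · exact le_of_mul_le_mul_right (by linear_combination hhigh + α * β * hprod) hd
  have hbc : b * c = (α * a) * (β * a) := by linear_combination -hprod + a * hd_eq
  have hb_pos : 0 < b := pos_of_mul_pos_left (hbc ▸ by positivity) hc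
  obtain ⟨hb_eq, hc_eq⟩ := (mul_eq_mul_iff_eq_and_eq_of_pos hba hca hb_pos (by positivity)).1 hbc
  exact ⟨hb_eq, hc_eq, hd_eq⟩

theorem typeI_product_iff_nash_point (hα : 0 < α) (hβ : 0 < β) :
    0 ≤ a ∧ 0 ≤ b ∧ 0 ≤ c ∧ 0 ≤ d ∧ a + b + c + d = 1 ∧ b ≤ α * a ∧ α * c ≤ d ∧
        c ≤ β * a ∧ β * b ≤ d ∧ a * d = b * c ↔
      (a = 1 ∧ b = 0 ∧ c = 0 ∧ d = 0) ∨ (a = 0 ∧ b = 0 ∧ c = 0 ∧ d = 1) ∨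
        (a = 1 / ((1 + α) * (1 + β)) ∧ b = α / ((1 + α) * (1 + β)) ∧
          c = β / ((1 + α) * (1 + β)) ∧ d = α * β / ((1 + α) * (1 + β))) := by
  constructor
  · rintro ⟨ha, hb, hc, hd, hsum, hba, hcd, hca, hbd, hprod⟩
    rcases ha.eq_or_lt with rfl | ha
    · have hb0 : b = 0 := by linarith
      have hc0 : c = 0 := by linarith
      exact Or.inr (Or.inl ⟨rfl, hb0, hc0, by linarith⟩)
    rcases hd.eq_or_lt with rfl | hd
    · have hb0 : b = 0 := by nlinarith
      have hc0 : c = 0 := by nlinarith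
      exact Or.inl ⟨by linarith, hb0, hc0, rfl⟩
    obtain ⟨rfl, rfl, rfl⟩ := eq_mixed_ray_of_typeI_of_pos hα hβ ha hd hb hc hba hcd hca hbd hprod
    have ha_eq : a = 1 / ((1 + α) * (1 + β)) :=
      eq_one_div_of_mul_eq_one_right (by linear_combination hsum)
    refine Or.inr (Or.inr ⟨ha_eq, ?_, ?_, ?_⟩) <;> rw [ha_eq] <;> ring
  · have hD : 0 < (1 + α) * (1 + β) := by positivity
    rintro (⟨rfl, rfl, rfl, rfl⟩ | ⟨rfl, rfl, rfl, rfl⟩ | ⟨rfl, rfl, rfl, rfl⟩)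
    · norm_num [hα.le, hβ.le]
    · norm_num [hα.le, hβ.le]
    · refine ⟨by positivity, by positivity, by positivity, by positivity, by field_simp; ring,
        le_of_eq (by ring), le_of_eq (by ring), le_of_eq (by ring), le_of_eq (by ring), by ring⟩

end TypeICoordination

/-- for `α, β > 0`, the product-form distributions (those with
`μ₀₀ μ₁₁ = μ₀₁ μ₁₀`) in the type (I) correlated-equilibrium polytope
(`αμ₀₀ ≥ μ₀₁`, `αμ₁₀ ≤ μ₁₁`, `βμ₀₀ ≥ μ₁₀`, `βμ₀₁ ≤ μ₁₁`) are exactly the three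
points `μ*_A = (1,0,0,0)`, `μ*_B = (0,0,0,1)` and
`μ*_C = (1, α, β, αβ)/((1+α)(1+β))`. -/
theorem coordination_type_I_nash_points (α β : ℝ) (hα : 0 < α) (hβ : 0 < β) :
    {μ : Fin 4 → ℝ | (∀ j, 0 ≤ μ j) ∧ μ 0 + μ 1 + μ 2 + μ 3 = 1 ∧
        μ 1 ≤ α * μ 0 ∧ α * μ 2 ≤ μ 3 ∧ μ 2 ≤ β * μ 0 ∧ β * μ 1 ≤ μ 3 ∧
        μ 0 * μ 3 = μ 1 * μ 2}
      = ({![(1 : ℝ), 0, 0, 0], ![(0 : ℝ), 0, 0, 1],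
          ![1 / ((1 + α) * (1 + β)), α / ((1 + α) * (1 + β)),
            β / ((1 + α) * (1 + β)), α * β / ((1 + α) * (1 + β))]}
          : Set (Fin 4 → ℝ)) := by
  ext μ
  obtain ⟨a, b, c, d, rfl⟩ : ∃ a b c d : ℝ, μ = ![a, b, c, d] :=
    ⟨μ 0, μ 1, μ 2, μ 3, (FinVec.etaExpand_eq μ).symm⟩
  simpa only [Set.mem_ofPred_eq, Set.mem_insert_iff, Set.mem_singleton_iff, Fin.forall_fin_succ,
    IsEmpty.forall_iff, Matrix.vecCons_inj, Matrix.cons_val_zero, Matrix.cons_val_one,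
    Matrix.cons_val, Fin.succ_zero_eq_one, Fin.succ_one_eq_two, Fin.reduceSucc, and_true,
    and_assoc] using typeI_product_iff_nash_point hα hβ
end

section
/- For any real number β > 0, the set {(μ_{00}, μ_{01}, μ_{10}, μ_{11}) ∈ ℝ⁴ : μ_{jk} ≥ 0, μ_{00}+μ_{01}+μ_{10}+μ_{11} = 1, βμ_{00} ≥ μ_{10}, βμ_{01} ≤ μ_{11}} is equal to the convex hull (a tetrahedron) of the four points E = (1,0,0,0), F = (1/(1+β), 0, β/(1+β), 0), G = (0,0,0,1), and H = (0, 1/(1+β), 0, β/(1+β)). -/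
/-!
Coordinates `0, 1, 2, 3` of `μ` are `μ₀₀, μ₀₁, μ₁₀, μ₁₁`. The set is the probability simplex cut
by two half-spaces through the origin, hence convex, and it contains `E, F, G, H`. Conversely,
`F` and `H` are the only vertices charging `μ₁₀` and `μ₀₁`, which forces the barycentric weights
`μ₀₀ - μ₁₀ / β, (1 + β) μ₁₀ / β, μ₁₁ - β μ₀₁, (1 + β) μ₀₁` of `μ`; the two defining inequalities
say exactly that these are nonnegative.
-/

open Set

def cptEquilibria (β : ℝ) : Set (Fin 4 → ℝ) :=
  {μ | (∀ j, 0 ≤ μ j) ∧ μ 0 + μ 1 + μ 2 + μ 3 = 1 ∧ μ 2 ≤ β * μ 0 ∧ β * μ 1 ≤ μ 3}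

def cptEquilibriaVertices (β : ℝ) : Set (Fin 4 → ℝ) :=
  {![1, 0, 0, 0], ![1 / (1 + β), 0, β / (1 + β), 0], ![0, 0, 0, 1],
    ![0, 1 / (1 + β), 0, β / (1 + β)]}

theorem cptEquilibria_eq_stdSimplex_inter (β : ℝ) :
    cptEquilibria β =
      stdSimplex ℝ (Fin 4) ∩ {μ | μ 2 - β * μ 0 ≤ 0} ∩ {μ | β * μ 1 - μ 3 ≤ 0} := by
  ext μ
  simp only [cptEquilibria, stdSimplex, Fin.sum_univ_four, mem_inter_iff, mem_ofPred_eq,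
    sub_nonpos, and_assoc]

theorem convex_cptEquilibria (β : ℝ) : Convex ℝ (cptEquilibria β) := by
  rw [cptEquilibria_eq_stdSimplex_inter]
  refine ((convex_stdSimplex ℝ _).inter (convex_halfSpace_le ?_ 0)).inter
    (convex_halfSpace_le ?_ 0)
  · exact (LinearMap.proj 2 - β • LinearMap.proj 0 : (Fin 4 → ℝ) →ₗ[ℝ] ℝ).isLinear
  · exact (β • LinearMap.proj 1 - LinearMap.proj 3 : (Fin 4 → ℝ) →ₗ[ℝ] ℝ).isLinear

theorem cptEquilibriaVertices_subset {β : ℝ} (hβ : 0 ≤ β) :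
    cptEquilibriaVertices β ⊆ cptEquilibria β := by
  simp only [cptEquilibriaVertices, insert_subset_iff, singleton_subset_iff]
  refine ⟨?_, ?_, ?_, ?_⟩ <;>
    refine ⟨fun j => by fin_cases j <;> simp <;> positivity, ?_, ?_, ?_⟩ <;>
    simp [div_eq_mul_inv, hβ] <;> field_simp

theorem cptEquilibria_subset_convexHull {β : ℝ} (hβ : 0 < β) :
    cptEquilibria β ⊆ convexHull ℝ (cptEquilibriaVertices β) := by
  rintro μ ⟨hμ, hsum, h₁₀, h₀₁⟩
  let w : Fin 4 → ℝ := ![μ 0 - μ 2 / β, (1 + β) * μ 2 / β, μ 3 - β * μ 1, (1 + β) * μ 1]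
  let z : Fin 4 → Fin 4 → ℝ := ![![1, 0, 0, 0], ![1 / (1 + β), 0, β / (1 + β), 0],
    ![0, 0, 0, 1], ![0, 1 / (1 + β), 0, β / (1 + β)]]
  have hw : ∀ i ∈ Finset.univ, 0 ≤ w i := by
    have := hμ 1
    have := hμ 2
    intro i _
    fin_cases i
    · exact sub_nonneg.2 ((div_le_iff₀ hβ).2 (by linarith))
    · exact (by positivity : 0 ≤ (1 + β) * μ 2 / β)
    · exact sub_nonneg.2 h₀₁
    · exact (by positivity : 0 ≤ (1 + β) * μ 1)
  have hw₁ : ∑ i, w i = 1 := by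
    simp only [w, Fin.sum_univ_four, Matrix.cons_val]
    field_simp
    linear_combination β * hsum
  have hz : ∀ i ∈ Finset.univ, z i ∈ convexHull ℝ (cptEquilibriaVertices β) := by
    intro i _
    apply subset_convexHull
    fin_cases i <;> simp [z, cptEquilibriaVertices]
  convert (convex_convexHull ℝ _).sum_mem hw hw₁ hz
  ext j
  fin_cases j <;> simp [w, z, Fin.sum_univ_four] <;> field_simp <;> ring

/-- for `β > 0`, the set of probability vectors
`μ = (μ₀₀, μ₀₁, μ₁₀, μ₁₁)` satisfying `βμ₀₀ ≥ μ₁₀` and `βμ₀₁ ≤ μ₁₁` (the set of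
CPT correlated equilibria of a 2×2 game in which player 1's strategies are
equivalent and player 2 has no dominated strategy) is the tetrahedron with
vertices `E = (1,0,0,0)`, `F = (1/(1+β), 0, β/(1+β), 0)`, `G = (0,0,0,1)` and
`H = (0, 1/(1+β), 0, β/(1+β))`. -/
theorem equivalent_strategies_tetrahedron (β : ℝ) (hβ : 0 < β) :
    {μ : Fin 4 → ℝ | (∀ j, 0 ≤ μ j) ∧ μ 0 + μ 1 + μ 2 + μ 3 = 1 ∧
        μ 2 ≤ β * μ 0 ∧ β * μ 1 ≤ μ 3}
      = convexHull ℝ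
          ({![(1 : ℝ), 0, 0, 0], ![1 / (1 + β), 0, β / (1 + β), 0],
            ![(0 : ℝ), 0, 0, 1], ![(0 : ℝ), 1 / (1 + β), 0, β / (1 + β)]}
            : Set (Fin 4 → ℝ)) :=
  (cptEquilibria_subset_convexHull hβ).antisymm
    (convexHull_min (cptEquilibriaVertices_subset hβ.le) (convex_cptEquilibria β))
end
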